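/- arXiv:2508.03835 — 10 statements merged into one kernel-verified Lean document; each statement's English description precedes it below -/
import Mathlib

section
/- Let H and G be graphs and define the H-bootstrap percolation process on G by G_0 = G and E(G_{i}) = E(G_{i-1}) ∪ {e : adding e to G_{i-1} creates a new copy of H}. If φ : G → G' is an injective graph homomorphism and (G_i), (G'_i) are the respective H-processes on G and G', then φ is also a graph homomorphism from G_i to G'_i for every i ≥ 0. -/
open SimpleGraph

/-- Adding the edge `{u,v}` to `G` creates a new copy of `H`. -/
def CreatesNewCopy {α β : Type*} (H : SimpleGraph α) (G : SimpleGraph β) (u v : β) : Prop :=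
  ∃ φ : H →g (G ⊔ SimpleGraph.fromEdgeSet {s(u, v)}), Function.Injective φ ∧
    ∃ a b, H.Adj a b ∧ ¬ G.Adj (φ a) (φ b)

/-- One step of the `H`-bootstrap percolation process. -/
def bootStep {α β : Type*} (H : SimpleGraph α) (G : SimpleGraph β) : SimpleGraph β :=
  G ⊔ SimpleGraph.fromEdgeSet {e | ∃ u v : β, e = s(u, v) ∧ CreatesNewCopy H G u v}

/-- The `H`-bootstrap percolation process started at `G`. -/
def bootProcess {α β : Type*} (H : SimpleGraph α) (G : SimpleGraph β) : ℕ → SimpleGraph β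
  | 0 => G
  | i + 1 => bootStep H (bootProcess H G i)

/-- The final (stable) graph `⟨G⟩_H` of the `H`-bootstrap process on `G`. -/
noncomputable def bootClosure {α β : Type*} (H : SimpleGraph α) (G : SimpleGraph β) :
    SimpleGraph β :=
  ⨆ i, bootProcess H G i

/-- The running time `τ_H(G)` of the `H`-bootstrap process on `G`. -/
noncomputable def runningTime {α β : Type*} (H : SimpleGraph α) (G : SimpleGraph β) : ℕ :=
  sInf {t | bootProcess H G t = bootProcess H G (t + 1)}

/-- The maximum running time `M_H(n)` over all `n`-vertex starting graphs. -/
noncomputable def maxRunningTime {α : Type*} (H : SimpleGraph α) (n : ℕ) : ℕ :=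
  sSup {t | ∃ G : SimpleGraph (Fin n), runningTime H G = t}

lemma bootStep_hom {α β γ : Type*} (H : SimpleGraph α) (G : SimpleGraph β) (G' : SimpleGraph γ)
    (ψ : G →g G') (hψ : Function.Injective ψ) :
    ∃ ψ' : bootStep H G →g bootStep H G', ⇑ψ' = ⇑ψ := by
  have key : ∀ u v : β, u ≠ v → CreatesNewCopy H G u v →
      (bootStep H G').Adj (ψ u) (ψ v) := by
    intro u v huv ⟨θ, θinj, a, b, hab, hnadj⟩
    rw [bootStep, sup_adj, fromEdgeSet_adj]
    by_cases h : G'.Adj (ψ u) (ψ v)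
    · exact Or.inl h
    · refine Or.inr ⟨?_, fun he => huv (hψ he)⟩
      refine ⟨ψ u, ψ v, rfl, ?_⟩
      have hedge : ∀ p q : β, (G ⊔ SimpleGraph.fromEdgeSet {s(u, v)}).Adj p q →
          (G' ⊔ SimpleGraph.fromEdgeSet {s(ψ u, ψ v)}).Adj (ψ p) (ψ q) := by
        intro p q hpq
        rw [sup_adj, fromEdgeSet_adj] at hpq ⊢
        simp only [Set.mem_singleton_iff, Sym2.eq_iff] at hpq ⊢
        rcases hpq with hpq | ⟨hmem, hne⟩
        · exact Or.inl (ψ.map_adj hpq)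
        · have hne' : ψ p ≠ ψ q := fun he => hne (hψ he)
          rcases hmem with ⟨rfl, rfl⟩ | ⟨rfl, rfl⟩
          · exact Or.inr ⟨Or.inl ⟨rfl, rfl⟩, hne'⟩
          · exact Or.inr ⟨Or.inr ⟨rfl, rfl⟩, hne'⟩
      refine ⟨⟨fun x => ψ (θ x), fun hxy => hedge _ _ (θ.map_adj hxy)⟩,
        hψ.comp θinj, a, b, hab, ?_⟩
      have hθ := θ.map_adj hab
      rw [sup_adj, fromEdgeSet_adj] at hθ
      simp only [Set.mem_singleton_iff, Sym2.eq_iff] at hθ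
      rcases hθ with hG | ⟨hmem, hne⟩
      · exact absurd hG hnadj
      · rcases hmem with ⟨h1, h2⟩ | ⟨h1, h2⟩
        · show ¬ G'.Adj (ψ (θ a)) (ψ (θ b))
          rw [h1, h2]; exact h
        · show ¬ G'.Adj (ψ (θ a)) (ψ (θ b))
          rw [h1, h2]; exact fun h' => h h'.symm
  refine ⟨⟨⇑ψ, ?_⟩, rfl⟩
  intro p q hpq
  rw [bootStep, sup_adj, fromEdgeSet_adj, Set.mem_setOf_eq] at hpq
  rcases hpq with hpq | ⟨⟨u, v, hsym, hcreate⟩, hne⟩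
  · exact Or.inl (ψ.map_adj hpq)
  · rw [Sym2.eq_iff] at hsym
    rcases hsym with ⟨rfl, rfl⟩ | ⟨rfl, rfl⟩
    · exact key p q hne hcreate
    · exact (key q p (Ne.symm hne) hcreate).symm

/-- If φ : G → G' is an injective graph homomorphism, then φ is also a graph
homomorphism from the i-th graph of the H-process on G to the i-th graph of the
H-process on G', for every i ≥ 0. -/
theorem stmt_0 {α β γ : Type*} (H : SimpleGraph α) (G : SimpleGraph β) (G' : SimpleGraph γ)
    (φ : G →g G') (hφ : Function.Injective φ) (i : ℕ) :
    ∃ ψ : bootProcess H G i →g bootProcess H G' i, ⇑ψ = ⇑φ := by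
  induction i with
  | zero => exact ⟨φ, rfl⟩
  | succ i ih =>
    obtain ⟨ψ, hψ⟩ := ih
    obtain ⟨ψ', hψ'⟩ := bootStep_hom H _ _ ψ (by rw [hψ]; exact hφ)
    exact ⟨ψ', hψ'.trans hψ⟩
end

section
/- Let H be a graph with at least 2 edges. Then the maximum running time of the H-bootstrap percolation process over all n-vertex starting graphs satisfies M_H(n) ≤ 2·ex(n,H), where ex(n,H) is the Turán number of H. -/
open SimpleGraph

/-- `G` contains a copy of `H` as a subgraph. -/
def ContainsCopy {α β : Type*} (H : SimpleGraph α) (G : SimpleGraph β) : Prop :=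
  ∃ φ : H →g G, Function.Injective φ

/-- The Turán (extremal) number `ex(n, H)`: maximum number of edges of an
`n`-vertex graph with no copy of `H`. -/
noncomputable def exNumber {α : Type*} (n : ℕ) (H : SimpleGraph α) : ℕ :=
  sSup {m | ∃ G : SimpleGraph (Fin n), ¬ ContainsCopy H G ∧ G.edgeSet.ncard = m}

lemma bootProcess_mono {α β : Type*} (H : SimpleGraph α) (G : SimpleGraph β) :
    Monotone (bootProcess H G) := by
  apply monotone_nat_of_le_succ
  intro i
  exact le_sup_left

lemma mem_bootStep_of_creates {α β : Type*} {H : SimpleGraph α} {G : SimpleGraph β} {u v : β}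
    (h : CreatesNewCopy H G u v) : s(u, v) ∈ (bootStep H G).edgeSet := by
  obtain ⟨φ, hinj, a, b, hab, hnadj⟩ := h
  have hadj := φ.map_adj hab
  rw [sup_adj] at hadj
  have h2 : (SimpleGraph.fromEdgeSet {s(u, v)}).Adj (φ a) (φ b) := by
    rcases hadj with h | h
    · exact absurd h hnadj
    · exact h
  rw [fromEdgeSet_adj] at h2
  have hne : u ≠ v := by
    rintro rfl
    have h3 := h2.1
    rw [Set.mem_singleton_iff, Sym2.eq_iff] at h3
    rcases h3 with ⟨ha, hb⟩ | ⟨ha, hb⟩ <;> exact h2.2 (ha.trans hb.symm)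
  rw [SimpleGraph.mem_edgeSet]
  apply (SimpleGraph.sup_adj ..).mpr
  right
  rw [fromEdgeSet_adj]
  exact ⟨⟨u, v, rfl, ⟨φ, hinj, a, b, hab, hnadj⟩⟩, hne⟩

lemma main_bound {α : Type*} (H : SimpleGraph α) (hH : 2 ≤ H.edgeSet.ncard)
    {n : ℕ} (G : SimpleGraph (Fin n)) (τ : ℕ)
    (hτ : ∀ t < τ, bootProcess H G t ≠ bootProcess H G (t + 1)) :
    τ ≤ 2 * exNumber n H := by
  classical
  rcases Nat.eq_zero_or_pos τ with rfl | hτ1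
  · simp
  set P : ℕ → SimpleGraph (Fin n) := bootProcess H G with hP
  have hPmono : Monotone P := bootProcess_mono H G
  have hstep : ∀ t < τ, ∃ e, e ∈ (P (t + 1)).edgeSet ∧ e ∉ (P t).edgeSet := by
    intro t ht
    have hlt : P t < P (t + 1) := lt_of_le_of_ne (hPmono (Nat.le_succ t)) (hτ t ht)
    obtain ⟨e, he, hne⟩ := Set.exists_of_ssubset (SimpleGraph.edgeSet_ssubset_edgeSet.mpr hlt)
    exact ⟨e, he, hne⟩
  have hnempty : Nonempty (Sym2 (Fin n)) := by
    obtain ⟨e, _, _⟩ := hstep 0 hτ1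
    exact ⟨e⟩
  have hex : ∀ t, ∃ e, t < τ → e ∈ (P (t + 1)).edgeSet ∧ e ∉ (P t).edgeSet := by
    intro t
    by_cases ht : t < τ
    · obtain ⟨e, h1, h2⟩ := hstep t ht
      exact ⟨e, fun _ => ⟨h1, h2⟩⟩
    · exact ⟨hnempty.some, fun h => absurd h ht⟩
  choose g hg using hex
  have hginj : ∀ t₁ < τ, ∀ t₂ < τ, t₁ < t₂ → g t₁ ≠ g t₂ := by
    intro t₁ h₁ t₂ h₂ hlt heq
    exact (hg t₂ h₂).2 (heq ▸ (SimpleGraph.edgeSet_subset_edgeSet.mpr (hPmono hlt)) (hg t₁ h₁).1)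
  -- the two parity classes
  set Ep : ℕ → Finset (Sym2 (Fin n)) :=
    fun p => ((Finset.range τ).filter (fun t => t % 2 = p)).image g with hEp
  have hcard : ∀ p, (Ep p).card = ((Finset.range τ).filter (fun t => t % 2 = p)).card := by
    intro p
    apply Finset.card_image_of_injOn
    intro t₁ h₁ t₂ h₂ heq
    by_contra hne
    have h₁' := Finset.mem_range.mp (Finset.mem_filter.mp h₁).1
    have h₂' := Finset.mem_range.mp (Finset.mem_filter.mp h₂).1
    rcases lt_or_gt_of_ne hne with h | h
    · exact hginj t₁ h₁' t₂ h₂' h heq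
    · exact hginj t₂ h₂' t₁ h₁' h heq.symm
  have hfreeE : ∀ p, (SimpleGraph.fromEdgeSet (↑(Ep p) : Set (Sym2 (Fin n)))).edgeSet = ↑(Ep p) := by
    intro p
    rw [SimpleGraph.edgeSet_fromEdgeSet]
    rw [sdiff_eq_left]
    rw [Set.disjoint_left]
    intro e he hd
    simp only [Sym2.diagSet, Set.mem_setOf_eq] at hd
    obtain ⟨t, ht, rfl⟩ := Finset.mem_image.mp he
    have ht' := Finset.mem_range.mp (Finset.mem_filter.mp ht).1
    exact SimpleGraph.not_isDiag_of_mem_edgeSet _ (hg t ht').1 hd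
  -- the key claim: each parity class is H-free
  have claim : ∀ p, ¬ ContainsCopy H (SimpleGraph.fromEdgeSet (↑(Ep p) : Set (Sym2 (Fin n)))) := by
    rintro p ⟨φ, hφ⟩
    have hfin : H.edgeSet.Finite := by
      by_contra hf
      rw [Set.Infinite.ncard hf] at hH
      omega
    obtain ⟨e₁, he₁, e₂, he₂, hne12⟩ := (Set.one_lt_ncard hfin).mp (by omega)
    have hmemJ : ∀ e ∈ H.edgeSet, ∃ t, t ∈ (Finset.range τ).filter (fun t => t % 2 = p) ∧
        g t = Sym2.map φ e := by
      intro e he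
      have hm : Sym2.map φ e ∈ (SimpleGraph.fromEdgeSet (↑(Ep p) : Set (Sym2 (Fin n)))).edgeSet :=
        φ.map_mem_edgeSet he
      rw [hfreeE p] at hm
      obtain ⟨t, ht, hgt⟩ := Finset.mem_image.mp hm
      exact ⟨t, ht, hgt⟩
    set J := (Finset.range τ).filter
      (fun t => t % 2 = p ∧ ∃ e ∈ H.edgeSet, Sym2.map φ e = g t) with hJdef
    have hmemJ' : ∀ e ∈ H.edgeSet, ∃ t ∈ J, g t = Sym2.map φ e := by
      intro e he
      obtain ⟨t, ht, hgt⟩ := hmemJ e he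
      have ht' := Finset.mem_filter.mp ht
      exact ⟨t, Finset.mem_filter.mpr ⟨ht'.1, ht'.2, e, he, hgt.symm⟩, hgt⟩
    obtain ⟨t₁, ht₁J, hgt₁⟩ := hmemJ' e₁ he₁
    obtain ⟨t₂, ht₂J, hgt₂⟩ := hmemJ' e₂ he₂
    have hJne : J.Nonempty := ⟨t₁, ht₁J⟩
    set s := J.max' hJne with hs
    have hsJ : s ∈ J := J.max'_mem hJne
    have hsJ' := Finset.mem_filter.mp hsJ
    have hsτ : s < τ := Finset.mem_range.mp hsJ'.1
    have hsp : s % 2 = p := hsJ'.2.1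
    have ht12 : t₁ ≠ t₂ := by
      rintro rfl
      exact hne12 (Sym2.map.injective hφ (hgt₁.symm.trans hgt₂))
    have hlow : ∃ t ∈ J, t < s := by
      by_cases h1 : t₁ = s
      · exact ⟨t₂, ht₂J, lt_of_le_of_ne (J.le_max' t₂ ht₂J) (by rw [← h1]; exact fun h => ht12 h.symm)⟩
      · exact ⟨t₁, ht₁J, lt_of_le_of_ne (J.le_max' t₁ ht₁J) h1⟩
    obtain ⟨tl, htlJ, htls⟩ := hlow
    have hgap : ∀ t ∈ J, t < s → t + 2 ≤ s := by
      intro t htJ hts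
      have hp1 : t % 2 = p := (Finset.mem_filter.mp htJ).2.1
      omega
    have hs2 : 2 ≤ s := by
      have := hgap tl htlJ htls
      omega
    have hgs := hg s hsτ
    -- witness edge for g s
    obtain ⟨e₀, he₀, hemap⟩ := hsJ'.2.2
    obtain ⟨a, b, rfl⟩ : ∃ a b, e₀ = s(a, b) := Sym2.ind (fun a b => ⟨a, b, rfl⟩) e₀
    have hab : H.Adj a b := H.mem_edgeSet.mp he₀
    have hgs_eq : g s = s(φ a, φ b) := by rw [← hemap, Sym2.map_pair_eq]
    -- build the homomorphism into P (s-1) ⊔ {g s}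
    have hmap : ∀ {x y : α}, H.Adj x y →
        ((P (s - 1)) ⊔ SimpleGraph.fromEdgeSet {s(φ a, φ b)}).Adj (φ x) (φ y) := by
      intro x y hxy
      have hadj := φ.map_adj hxy
      have hnexy : φ x ≠ φ y := hadj.ne
      obtain ⟨t, htJ, hgt⟩ := hmemJ' s(x, y) (H.mem_edgeSet.mpr hxy)
      rw [Sym2.map_pair_eq] at hgt
      rcases eq_or_lt_of_le (J.le_max' t htJ) with heq | hlt
      · right
        rw [← hs] at heq
        rw [fromEdgeSet_adj]
        refine ⟨?_, hnexy⟩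
        rw [Set.mem_singleton_iff, ← hgs_eq, ← heq, hgt]
      · left
        have h2 : t + 2 ≤ s := hgap t htJ hlt
        have htτ : t < τ := Finset.mem_range.mp (Finset.mem_filter.mp htJ).1
        have hgt1 : g t ∈ (P (t + 1)).edgeSet := (hg t htτ).1
        have hle : P (t + 1) ≤ P (s - 1) := hPmono (by omega)
        have : g t ∈ (P (s - 1)).edgeSet := SimpleGraph.edgeSet_subset_edgeSet.mpr hle hgt1
        rw [hgt] at this
        exact this
    have hnadj : ¬ (P (s - 1)).Adj (φ a) (φ b) := by
      intro h
      apply hgs.2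
      have hmem : s(φ a, φ b) ∈ (P (s - 1)).edgeSet := h
      rw [← hgs_eq] at hmem
      exact SimpleGraph.edgeSet_subset_edgeSet.mpr (hPmono (by omega : s - 1 ≤ s)) hmem
    have hcreate : CreatesNewCopy H (P (s - 1)) (φ a) (φ b) :=
      ⟨⟨φ, hmap⟩, hφ, a, b, hab, hnadj⟩
    have hmem2 := mem_bootStep_of_creates hcreate
    have hPs : bootStep H (P (s - 1)) = P s := by
      have h1 : s - 1 + 1 = s := by omega
      conv_rhs => rw [hP, ← h1]
      rfl
    rw [hPs] at hmem2
    rw [← hgs_eq] at hmem2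
    exact hgs.2 hmem2
  -- Turán bound for each class
  have hbdd : BddAbove {m | ∃ G : SimpleGraph (Fin n), ¬ ContainsCopy H G ∧ G.edgeSet.ncard = m} := by
    refine ⟨Fintype.card (Sym2 (Fin n)), ?_⟩
    rintro m ⟨G', _, rfl⟩
    calc G'.edgeSet.ncard ≤ (Set.univ : Set (Sym2 (Fin n))).ncard :=
          Set.ncard_le_ncard (Set.subset_univ _) Set.finite_univ
      _ = Fintype.card (Sym2 (Fin n)) := by rw [Set.ncard_univ, Nat.card_eq_fintype_card]
  have hexb : ∀ p, ((Finset.range τ).filter (fun t => t % 2 = p)).card ≤ exNumber n H := by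
    intro p
    rw [← hcard p]
    apply le_csSup hbdd
    refine ⟨SimpleGraph.fromEdgeSet (↑(Ep p) : Set (Sym2 (Fin n))), claim p, ?_⟩
    rw [hfreeE p, Set.ncard_coe_finset]
  have hsplit : ((Finset.range τ).filter (fun t => t % 2 = 0)).card +
      ((Finset.range τ).filter (fun t => t % 2 = 1)).card = τ := by
    have h := Finset.card_filter_add_card_filter_not
      (s := Finset.range τ) (p := fun t => t % 2 = 0)
    rw [Finset.card_range] at h
    have h2 : (Finset.range τ).filter (fun a => ¬ a % 2 = 0) =
        (Finset.range τ).filter (fun t => t % 2 = 1) := by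
      apply Finset.filter_congr
      intro x _
      constructor <;> intro hx <;> omega
    rw [h2] at h
    exact h
  have h0 := hexb 0
  have h1 := hexb 1
  omega

/-- If H has at least 2 edges then M_H(n) ≤ 2 · ex(n, H). -/
theorem stmt_1 {α : Type*} (H : SimpleGraph α) (hH : 2 ≤ H.edgeSet.ncard) (n : ℕ) :
    maxRunningTime H n ≤ 2 * exNumber n H := by
  apply csSup_le
  · exact ⟨runningTime H (⊥ : SimpleGraph (Fin n)), ⊥, rfl⟩
  · rintro t ⟨G, rfl⟩
    apply main_bound H hH G
    intro t ht h
    exact absurd (Nat.sInf_le (Set.mem_setOf_eq ▸ h : t ∈ _)) (Nat.not_le.mpr ht)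
end

section
/- Let H be a k-vertex graph with k ≥ 5 and suppose either (i) δ(H) ≥ k/2 + 1, or (ii) H contains the square of a Hamilton cycle. Then H is (2,1)-inseparable, i.e. H − e is 3-connected for every edge e of H. -/
open SimpleGraph

/-- `G` is `k`-connected: more than `k` vertices, and deleting any set of at most
`k - 1` vertices leaves a connected graph. -/
def IsKConn {V : Type*} [Fintype V] (k : ℕ) (G : SimpleGraph V) : Prop :=
  k < Fintype.card V ∧ ∀ S : Set V, S.ncard < k → (G.induce Sᶜ).Connected

/-- `H` is `(2,1)`-inseparable: `H − e` is 3-connected for every edge `e` of `H`. -/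
def TwoOneInseparable {V : Type*} [Fintype V] (H : SimpleGraph V) : Prop :=
  ∀ e ∈ H.edgeSet, IsKConn 3 (H.deleteEdges {e})


private def Rch {V : Type*} (G : SimpleGraph V) (S : Set V) (x y : V) : Prop :=
  ∀ (hx : x ∈ Sᶜ) (hy : y ∈ Sᶜ), (G.induce Sᶜ).Reachable ⟨x, hx⟩ ⟨y, hy⟩

private lemma rch_refl {V : Type*} (G : SimpleGraph V) (S : Set V) (x : V) : Rch G S x x :=
  fun _ _ => Reachable.refl _

private lemma rch_symm {V : Type*} {G : SimpleGraph V} {S : Set V} {x y : V}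
    (h : Rch G S x y) : Rch G S y x := fun hy hx => (h hx hy).symm

private lemma rch_trans {V : Type*} {G : SimpleGraph V} {S : Set V} {x y z : V}
    (hy : y ∉ S) (h1 : Rch G S x y) (h2 : Rch G S y z) : Rch G S x z :=
  fun hx hz => (h1 hx hy).trans (h2 hy hz)

private lemma rch_step {V : Type*} {H : SimpleGraph V} {p q : V} {S : Set V} {x y : V}
    (h1 : H.Adj x y) (h2 : s(x, y) ≠ s(p, q)) : Rch (H.deleteEdges {s(p, q)}) S x y :=
  fun hx hy => SimpleGraph.Adj.reachable
    (by exact (deleteEdges_adj).mpr ⟨h1, by simpa using h2⟩)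

private lemma zcast_inj {k m1 m2 : ℕ} (h1 : m1 < k) (h2 : m2 < k) :
    ((m1 : ZMod k) = (m2 : ZMod k)) ↔ m1 = m2 := by
  constructor
  · intro h
    have := congrArg ZMod.val h
    rwa [ZMod.val_cast_of_lt h1, ZMod.val_cast_of_lt h2] at this
  · rintro rfl; rfl

private lemma zcast_val {k : ℕ} [NeZero k] (z : ZMod k) : ((z.val : ℕ) : ZMod k) = z := by
  simp [ZMod.natCast_val, ZMod.cast_id]

private lemma zsub_cast {k : ℕ} (c : ℕ) (hc : c ≤ k) :
    ((k - c : ℕ) : ZMod k) = - (c : ZMod k) := by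
  rw [Nat.cast_sub hc, ZMod.natCast_self, zero_sub]

private lemma zneg_val {k : ℕ} [NeZero k] {z : ZMod k} (hz : z ≠ 0) :
    (-z).val = k - z.val := by
  rw [ZMod.neg_val, if_neg hz]

private lemma euniq {V : Type*} {k : ℕ} (σ : ZMod k ≃ V) (p q : V) {x y z w : ZMod k}
    (h1 : s(σ x, σ y) = s(p, q)) (h2 : s(σ z, σ w) = s(p, q)) :
    (x = z ∧ y = w) ∨ (x = w ∧ y = z) := by
  have h := h1.trans h2.symm
  rw [Sym2.eq_iff] at h
  simpa only [EmbeddingLike.apply_eq_iff_eq] using h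

private lemma shift_ne {k : ℕ} (x : ZMod k) {c1 c2 : ℕ} (l1 : c1 < k) (l2 : c2 < k)
    (hc : c1 ≠ c2) : x + (c1 : ZMod k) ≠ x + (c2 : ZMod k) :=
  fun h => hc ((zcast_inj l1 l2).mp (add_left_cancel h))

private lemma lsq {V : Type*} {k : ℕ} (hk : 5 ≤ k) (H : SimpleGraph V) (p q : V) (S : Set V)
    (σ : ZMod k ≃ V)
    (hσ : ∀ i : ZMod k, H.Adj (σ i) (σ (i + 1)) ∧ H.Adj (σ i) (σ (i + 2))) :
    ∀ (n : ℕ) (a : ZMod k), (∀ m : ℕ, m ≤ n + 2 → σ (a + (m : ℕ)) ∉ S) →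
      ∀ m : ℕ, m ≤ n + 2 → Rch (H.deleteEdges {s(p, q)}) S (σ a) (σ (a + (m : ℕ))) := by
  intro n
  induction n with
  | zero =>
    intro a hS m hm
    have d01 : a ≠ a + 1 := by
      have := shift_ne a (c1 := 0) (c2 := 1) (by omega) (by omega) (by omega); simpa using this
    have d02 : a ≠ a + 2 := by
      have := shift_ne a (c1 := 0) (c2 := 2) (by omega) (by omega) (by omega); simpa using this
    have d12 : a + 1 ≠ a + 2 := by
      have := shift_ne a (c1 := 1) (c2 := 2) (by omega) (by omega) (by omega); simpa using this
    have hS1 : σ (a + 1) ∉ S := by have := hS 1 (by omega); simpa using this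
    have hS2 : σ (a + 2) ∉ S := by have := hS 2 (by omega); simpa using this
    have hadj12 : H.Adj (σ (a + 1)) (σ (a + 2)) := by
      have h := (hσ (a + 1)).1; rwa [show a + 1 + 1 = a + 2 by ring] at h
    interval_cases m
    · simpa using rch_refl _ S (σ a)
    · rw [show ((1 : ℕ) : ZMod k) = 1 from Nat.cast_one]
      by_cases h01 : s(σ a, σ (a + 1)) = s(p, q)
      · have h02 : s(σ a, σ (a + 2)) ≠ s(p, q) := by
          intro h
          rcases euniq σ p q h h01 with ⟨-, h2⟩ | ⟨h1, -⟩
          · exact d12 h2.symm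
          · exact d01 h1
        have h12 : s(σ (a + 1), σ (a + 2)) ≠ s(p, q) := by
          intro h
          rcases euniq σ p q h h01 with ⟨h1, -⟩ | ⟨-, h2⟩
          · exact d01 h1.symm
          · exact d02 h2.symm
        exact rch_trans hS2 (rch_step (hσ a).2 h02) (rch_symm (rch_step hadj12 h12))
      · exact rch_step (hσ a).1 h01
    · rw [show ((2 : ℕ) : ZMod k) = 2 from Nat.cast_two]
      by_cases h02 : s(σ a, σ (a + 2)) = s(p, q)
      · have h01 : s(σ a, σ (a + 1)) ≠ s(p, q) := by
          intro h
          rcases euniq σ p q h h02 with ⟨-, h2⟩ | ⟨h1, -⟩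
          · exact d12 h2
          · exact d02 h1
        have h12 : s(σ (a + 1), σ (a + 2)) ≠ s(p, q) := by
          intro h
          rcases euniq σ p q h h02 with ⟨h1, -⟩ | ⟨-, h2⟩
          · exact d01 h1.symm
          · exact d02 h2.symm
        exact rch_trans hS1 (rch_step (hσ a).1 h01) (rch_step hadj12 h12)
      · exact rch_step (hσ a).2 h02
  | succ n ih =>
    intro a hS m hm
    by_cases hm' : m ≤ n + 2
    · exact ih a (fun m' hm'' => hS m' (by omega)) m hm'
    have hm3 : m = n + 3 := by omega
    subst hm3
    set b := a + ((n : ℕ) : ZMod k) with hb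
    have e1 : a + ((n + 1 : ℕ) : ZMod k) = b + 1 := by rw [hb]; push_cast; ring
    have e2 : a + ((n + 2 : ℕ) : ZMod k) = b + 2 := by rw [hb]; push_cast; ring
    have e3 : a + ((n + 3 : ℕ) : ZMod k) = b + 3 := by rw [hb]; push_cast; ring
    have d12 : b + 1 ≠ b + 2 := by
      have := shift_ne b (c1 := 1) (c2 := 2) (by omega) (by omega) (by omega); simpa using this
    have d13 : b + 1 ≠ b + 3 := by
      have := shift_ne b (c1 := 1) (c2 := 3) (by omega) (by omega) (by omega); simpa using this
    have d23 : b + 2 ≠ b + 3 := by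
      have := shift_ne b (c1 := 2) (c2 := 3) (by omega) (by omega) (by omega); simpa using this
    rw [e3]
    by_cases hE : s(σ (b + 2), σ (b + 3)) = s(p, q)
    · have hne : s(σ (b + 1), σ (b + 3)) ≠ s(p, q) := by
        intro h
        rcases euniq σ p q h hE with ⟨h1, -⟩ | ⟨h1, -⟩
        · exact d12 h1
        · exact d13 h1
      have hmid : σ (b + 1) ∉ S := by have := hS (n + 1) (by omega); rwa [e1] at this
      have hprev : Rch (H.deleteEdges {s(p, q)}) S (σ a) (σ (b + 1)) := by
        have h := ih a (fun m' hm'' => hS m' (by omega)) (n + 1) (by omega)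
        rwa [e1] at h
      have hadj : H.Adj (σ (b + 1)) (σ (b + 3)) := by
        have h := (hσ (b + 1)).2; rwa [show b + 1 + 2 = b + 3 by ring] at h
      exact rch_trans hmid hprev (rch_step hadj hne)
    · have hmid : σ (b + 2) ∉ S := by have := hS (n + 2) (by omega); rwa [e2] at this
      have hprev : Rch (H.deleteEdges {s(p, q)}) S (σ a) (σ (b + 2)) := by
        have h := ih a (fun m' hm'' => hS m' (by omega)) (n + 2) (by omega)
        rwa [e2] at h
      have hadj : H.Adj (σ (b + 2)) (σ (b + 3)) := by
        have h := (hσ (b + 2)).1; rwa [show b + 2 + 1 = b + 3 by ring] at h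
      exact rch_trans hmid hprev (rch_step hadj hE)


section
variable {V : Type*} {k : ℕ}

private lemma caseII [Fintype V] (hk : 5 ≤ k) (H : SimpleGraph V) (p q : V)
    (S : Set V) (hS : S.ncard < 3) (σ : ZMod k ≃ V)
    (hσ : ∀ i : ZMod k, H.Adj (σ i) (σ (i + 1)) ∧ H.Adj (σ i) (σ (i + 2))) :
    ∀ i j : ZMod k, σ i ∉ S → σ j ∉ S → Rch (H.deleteEdges {s(p, q)}) S (σ i) (σ j) := by
  haveI : NeZero k := ⟨by omega⟩
  have decomp : ∀ t i : ZMod k, i = t + (((i - t).val : ℕ) : ZMod k) := by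
    intro t i; rw [zcast_val]; ring
  have hS012 : S.ncard = 0 ∨ S.ncard = 1 ∨ S.ncard = 2 := by omega
  rcases hS012 with h0 | h1 | h2
  · -- no deleted vertices
    have hS0 : S = ∅ := (Set.ncard_eq_zero (Set.toFinite S)).mp h0
    intro i j _ _
    have hm : (j - i).val ≤ (k - 3) + 2 := by
      have := ZMod.val_lt (j - i); omega
    rw [decomp i j]
    exact lsq hk H p q S σ hσ (k - 3) i (fun m' _ => by simp [hS0]) _ hm
  · -- one deleted vertex
    obtain ⟨x, hx⟩ := Set.ncard_eq_one.mp h1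
    set t := σ.symm x with ht
    have hmem : ∀ z : ZMod k, σ z ∈ S ↔ z = t := by
      intro z
      rw [hx, Set.mem_singleton_iff, ht]
      constructor
      · intro h; exact σ.injective (by rwa [Equiv.apply_symm_apply])
      · rintro rfl; rw [Equiv.apply_symm_apply]
    have memb : ∀ m' : ℕ, m' ≤ k - 2 → σ (t + 1 + (m' : ℕ)) ∉ S := by
      intro m' hm' hz
      rw [hmem] at hz
      exact shift_ne t (c1 := 1 + m') (c2 := 0) (by omega) (by omega) (by omega)
        (by push_cast; linear_combination hz)
    have col : ∀ m : ℕ, m ≤ k - 2 → Rch (H.deleteEdges {s(p, q)}) S (σ (t + 1)) (σ (t + 1 + (m : ℕ))) := by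
      intro m hm
      exact lsq hk H p q S σ hσ (k - 4) (t + 1) (fun m' hm' => memb m' (by omega)) m (by omega)
    have reach : ∀ i : ZMod k, σ i ∉ S → Rch (H.deleteEdges {s(p, q)}) S (σ (t + 1)) (σ i) := by
      intro i hi
      have hit : i ≠ t := fun h => hi ((hmem i).mpr h)
      have hmlt : (i - (t + 1)).val < k := ZMod.val_lt _
      have hne : (i - (t + 1)).val ≠ k - 1 := by
        intro h
        apply hit
        rw [decomp (t + 1) i, h, zsub_cast 1 (by omega)]
        push_cast; ring
      rw [decomp (t + 1) i]
      exact col _ (by omega)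
    intro i j hi hj
    have hmid : σ (t + 1) ∉ S := by
      rw [hmem]
      have := shift_ne t (c1 := 1) (c2 := 0) (by omega) (by omega) (by omega)
      simpa using this
    exact rch_trans hmid (rch_symm (reach i hi)) (reach j hj)
  · -- two deleted vertices
    obtain ⟨x, y, hxy, hxyS⟩ := Set.ncard_eq_two.mp h2
    set t := σ.symm x with ht
    set s0 := σ.symm y with hs0'
    have hts : t ≠ s0 := fun h => hxy (by rw [ht, hs0'] at h; exact σ.symm.injective h ▸ rfl)
    have hmem : ∀ z : ZMod k, σ z ∈ S ↔ (z = t ∨ z = s0) := by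
      intro z
      rw [hxyS, Set.mem_insert_iff, Set.mem_singleton_iff, ht, hs0']
      constructor
      · rintro (h | h)
        · exact Or.inl (σ.injective (by rwa [Equiv.apply_symm_apply]))
        · exact Or.inr (σ.injective (by rwa [Equiv.apply_symm_apply]))
      · rintro (rfl | rfl)
        · rw [Equiv.apply_symm_apply]; exact Or.inl rfl
        · rw [Equiv.apply_symm_apply]; exact Or.inr rfl
    -- adjacent-pair helper
    have adjC : ∀ t' : ZMod k, (∀ z : ZMod k, σ z ∈ S ↔ (z = t' ∨ z = t' + 1)) →
        ∀ i j : ZMod k, σ i ∉ S → σ j ∉ S → Rch (H.deleteEdges {s(p, q)}) S (σ i) (σ j) := by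
      intro t' hmm
      have memb : ∀ m' : ℕ, m' ≤ k - 3 → σ (t' + 2 + (m' : ℕ)) ∉ S := by
        intro m' hm' hz
        rw [hmm] at hz
        rcases hz with hz | hz
        · exact shift_ne t' (c1 := 2 + m') (c2 := 0) (by omega) (by omega) (by omega)
            (by push_cast; linear_combination hz)
        · exact shift_ne t' (c1 := 2 + m') (c2 := 1) (by omega) (by omega) (by omega)
            (by push_cast; linear_combination hz)
      have col : ∀ m : ℕ, m ≤ k - 3 →
          Rch (H.deleteEdges {s(p, q)}) S (σ (t' + 2)) (σ (t' + 2 + (m : ℕ))) := by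
        intro m hm
        exact lsq hk H p q S σ hσ (k - 5) (t' + 2) (fun m' hm' => memb m' (by omega)) m (by omega)
      have reach : ∀ i : ZMod k, σ i ∉ S →
          Rch (H.deleteEdges {s(p, q)}) S (σ (t' + 2)) (σ i) := by
        intro i hi
        rw [hmm] at hi
        push_neg at hi
        have hmlt : (i - (t' + 2)).val < k := ZMod.val_lt _
        have hne1 : (i - (t' + 2)).val ≠ k - 1 := by
          intro h
          apply hi.2
          rw [decomp (t' + 2) i, h, zsub_cast 1 (by omega)]
          push_cast; ring
        have hne2 : (i - (t' + 2)).val ≠ k - 2 := by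
          intro h
          apply hi.1
          rw [decomp (t' + 2) i, h, zsub_cast 2 (by omega)]
          push_cast; ring
        rw [decomp (t' + 2) i]
        exact col _ (by omega)
      intro i j hi hj
      have hmid : σ (t' + 2) ∉ S := by
        rw [hmm]
        push_neg
        constructor
        · have := shift_ne t' (c1 := 2) (c2 := 0) (by omega) (by omega) (by omega)
          simpa using this
        · have := shift_ne t' (c1 := 2) (c2 := 1) (by omega) (by omega) (by omega)
          simpa using this
      exact rch_trans hmid (rch_symm (reach i hi)) (reach j hj)
    -- two-arc helper
    have twoA : ∀ (t' s' : ZMod k) (d' : ℕ), (∀ z : ZMod k, σ z ∈ S ↔ (z = t' ∨ z = s')) →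
        (s' - t').val = d' → 2 ≤ d' → 2 * d' ≤ k →
        ∀ i : ZMod k, σ i ∉ S → Rch (H.deleteEdges {s(p, q)}) S (σ i) (σ (s' + 1)) := by
      intro t' s' d' hmm hdval hd2 hdk
      have hs' : s' = t' + ((d' : ℕ) : ZMod k) := by rw [← hdval, zcast_val]; ring
      have hdk3 : d' ≤ k - 3 := by omega
      have memT : ∀ m : ℕ, 0 < m → m < k → m ≠ d' → σ (t' + (m : ℕ)) ∉ S := by
        intro m h1 h2 h3 hz
        rw [hmm] at hz
        rcases hz with hz | hz
        · exact shift_ne t' (c1 := m) (c2 := 0) h2 (by omega) (by omega)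
            (by push_cast; linear_combination hz)
        · rw [hs'] at hz
          exact shift_ne t' (c1 := m) (c2 := d') h2 (by omega) h3 hz
      have hb1adj : H.Adj (σ (t' - 1)) (σ (t' + 1)) := by
        have h := (hσ (t' - 1)).2; rwa [show t' - 1 + 2 = t' + 1 by ring] at h
      have hb2adj : H.Adj (σ (s' - 1)) (σ (s' + 1)) := by
        have h := (hσ (s' - 1)).2; rwa [show s' - 1 + 2 = s' + 1 by ring] at h
      have hdlt' : d' < k := by omega
      have et1 : t' - 1 = t' + ((k - 1 : ℕ) : ZMod k) := by
        rw [zsub_cast 1 (by omega)]; push_cast; ring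
      have es1 : s' - 1 = t' + ((d' - 1 : ℕ) : ZMod k) := by
        rw [hs', Nat.cast_sub (by omega : 1 ≤ d')]; push_cast; ring
      have es2 : s' + 1 = t' + ((d' + 1 : ℕ) : ZMod k) := by rw [hs']; push_cast; ring
      have excl : ∀ {x1 y1 x2 y2 : ZMod k}, s(σ x1, σ y1) = s(p, q) →
          ¬(x2 = x1 ∧ y2 = y1) → ¬(x2 = y1 ∧ y2 = x1) → s(σ x2, σ y2) ≠ s(p, q) := by
        intro x1 y1 x2 y2 h1 hA hB h2
        rcases euniq σ p q h2 h1 with h | h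
        exacts [hA h, hB h]
      have hbne : s(σ (t' - 1), σ (t' + 1)) = s(p, q) →
          s(σ (s' - 1), σ (s' + 1)) ≠ s(p, q) := by
        intro h1
        refine excl h1 ?_ ?_
        · rintro ⟨ha, -⟩
          rw [es1, et1] at ha
          have := (zcast_inj (by omega) (by omega)).mp (add_left_cancel ha)
          omega
        · rintro ⟨ha, hb⟩
          have ha' : t' + ((d' - 1 : ℕ) : ZMod k) = t' + ((1 : ℕ) : ZMod k) := by
            rw [← es1]; simpa using ha
          have hb' : t' + ((d' + 1 : ℕ) : ZMod k) = t' + ((k - 1 : ℕ) : ZMod k) := by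
            rw [← es2, ← et1]; exact hb
          have h1' := (zcast_inj (by omega) (by omega)).mp (add_left_cancel ha')
          have h2' := (zcast_inj (by omega) (by omega)).mp (add_left_cancel hb')
          omega
      have hmp1 : σ (t' + 1) ∉ S := by
        have := memT 1 (by omega) (by omega) (by omega); simpa using this
      have hms1 : σ (s' - 1) ∉ S := by
        rw [es1]; exact memT (d' - 1) (by omega) (by omega) (by omega)
      have hms2 : σ (s' + 1) ∉ S := by
        rw [es2]; exact memT (d' + 1) (by omega) (by omega) (by omega)
      have hmt1 : σ (t' - 1) ∉ S := by
        rw [et1]; exact memT (k - 1) (by omega) (by omega) (by omega)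
      by_cases hbig : d' ≤ k - 4
      · -- generic: far arc has ≥ 3 vertices
        have colA2 : ∀ m : ℕ, m ≤ k - d' - 2 →
            Rch (H.deleteEdges {s(p, q)}) S (σ (s' + 1)) (σ (s' + 1 + (m : ℕ))) := by
          intro m hm
          refine lsq hk H p q S σ hσ (k - d' - 4) (s' + 1) ?_ m (by omega)
          intro m' hm'
          have e : s' + 1 + ((m' : ℕ) : ZMod k) = t' + ((d' + 1 + m' : ℕ) : ZMod k) := by
            rw [hs']; push_cast; ring
          rw [e]; exact memT (d' + 1 + m') (by omega) (by omega) (by omega)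
        have reachA2 : ∀ m : ℕ, d' + 1 ≤ m → m ≤ k - 1 →
            Rch (H.deleteEdges {s(p, q)}) S (σ (s' + 1)) (σ (t' + (m : ℕ))) := by
          intro m h1 h2
          have e : t' + ((m : ℕ) : ZMod k) = s' + 1 + ((m - (d' + 1) : ℕ) : ZMod k) := by
            rw [hs', Nat.cast_sub (by omega)]; push_cast; ring
          rw [e]; exact colA2 (m - (d' + 1)) (by omega)
        have hA2last : Rch (H.deleteEdges {s(p, q)}) S (σ (s' + 1)) (σ (t' - 1)) := by
          rw [et1]; exact reachA2 (k - 1) (by omega) (by omega)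
        have reachAll : ∀ m : ℕ, 1 ≤ m → m ≤ d' - 1 →
            Rch (H.deleteEdges {s(p, q)}) S (σ (t' + (m : ℕ))) (σ (s' + 1)) := by
          rcases (show d' = 2 ∨ d' = 3 ∨ 4 ≤ d' by omega) with hd' | hd' | hd'
          · -- d' = 2 : A1 is a single vertex t'+1
            subst hd'
            intro m h1 h2
            have hm1 : m = 1 := by omega
            subst hm1
            have es1' : s' - 1 = t' + 1 := by rw [hs']; push_cast; ring
            rw [show t' + ((1 : ℕ) : ZMod k) = t' + 1 by norm_num]
            by_cases hb1 : s(σ (t' - 1), σ (t' + 1)) = s(p, q)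
            · have hb2 := hbne hb1
              have h : Rch (H.deleteEdges {s(p, q)}) S (σ (s' - 1)) (σ (s' + 1)) :=
                rch_step hb2adj hb2
              rwa [es1'] at h
            · exact rch_trans hmt1 (rch_symm (rch_step hb1adj hb1)) (rch_symm hA2last)
          · -- d' = 3 : A1 = {t'+1, t'+2}
            subst hd'
            have es1' : s' - 1 = t' + 2 := by rw [hs']; push_cast; ring
            have hαadj : H.Adj (σ (t' + 1)) (σ (t' + 2)) := by
              have h := (hσ (t' + 1)).1; rwa [show t' + 1 + 1 = t' + 2 by ring] at h
            have hmp2 : σ (t' + 2) ∉ S := by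
              have := memT 2 (by omega) (by omega) (by omega); simpa using this
            have ne11 : t' - 1 ≠ t' + 1 := by
              rw [et1]
              have := shift_ne t' (c1 := k - 1) (c2 := 1) (by omega) (by omega) (by omega)
              simpa using this
            have ne12 : t' - 1 ≠ t' + 2 := by
              rw [et1]
              have := shift_ne t' (c1 := k - 1) (c2 := 2) (by omega) (by omega) (by omega)
              simpa using this
            have ne_s1 : s' - 1 ≠ t' + 1 := by
              rw [es1']
              have := shift_ne t' (c1 := 2) (c2 := 1) (by omega) (by omega) (by omega)
              simpa using this
            have ne_s2 : s' + 1 ≠ t' + 2 := by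
              rw [es2]
              have := shift_ne t' (c1 := 3 + 1) (c2 := 2) (by omega) (by omega) (by omega)
              simpa using this
            have ne_s2' : s' + 1 ≠ t' + 1 := by
              rw [es2]
              have := shift_ne t' (c1 := 3 + 1) (c2 := 1) (by omega) (by omega) (by omega)
              simpa using this
            have main12 : Rch (H.deleteEdges {s(p, q)}) S (σ (t' + 1)) (σ (s' + 1)) ∧
                Rch (H.deleteEdges {s(p, q)}) S (σ (t' + 2)) (σ (s' + 1)) := by
              by_cases hα : s(σ (t' + 1), σ (t' + 2)) = s(p, q)
              · have hb1 : s(σ (t' - 1), σ (t' + 1)) ≠ s(p, q) :=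
                  excl hα (fun h => ne11 h.1) (fun h => ne12 h.1)
                have hb2 : s(σ (s' - 1), σ (s' + 1)) ≠ s(p, q) :=
                  excl hα (fun h => ne_s1 h.1) (fun h => ne_s2' h.2)
                constructor
                · exact rch_trans hmt1 (rch_symm (rch_step hb1adj hb1)) (rch_symm hA2last)
                · have h : Rch (H.deleteEdges {s(p, q)}) S (σ (s' - 1)) (σ (s' + 1)) :=
                    rch_step hb2adj hb2
                  rwa [es1'] at h
              · have r12 : Rch (H.deleteEdges {s(p, q)}) S (σ (t' + 1)) (σ (t' + 2)) :=
                  rch_step hαadj hα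
                by_cases hb1 : s(σ (t' - 1), σ (t' + 1)) = s(p, q)
                · have hb2 := hbne hb1
                  have r2 : Rch (H.deleteEdges {s(p, q)}) S (σ (t' + 2)) (σ (s' + 1)) := by
                    have h : Rch (H.deleteEdges {s(p, q)}) S (σ (s' - 1)) (σ (s' + 1)) :=
                      rch_step hb2adj hb2
                    rwa [es1'] at h
                  exact ⟨rch_trans hmp2 r12 r2, r2⟩
                · have r1 : Rch (H.deleteEdges {s(p, q)}) S (σ (t' + 1)) (σ (s' + 1)) :=
                    rch_trans hmt1 (rch_symm (rch_step hb1adj hb1)) (rch_symm hA2last)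
                  exact ⟨r1, rch_trans hmp1 (rch_symm r12) r1⟩
            intro m h1 h2
            rcases (show m = 1 ∨ m = 2 by omega) with rfl | rfl
            · rw [show t' + ((1 : ℕ) : ZMod k) = t' + 1 by norm_num]
              exact main12.1
            · rw [show t' + ((2 : ℕ) : ZMod k) = t' + 2 by norm_num]
              exact main12.2
          · -- d' ≥ 4 : A1 has ≥ 3 vertices
            have colA1 : ∀ m : ℕ, m ≤ d' - 2 →
                Rch (H.deleteEdges {s(p, q)}) S (σ (t' + 1)) (σ (t' + 1 + (m : ℕ))) := by
              intro m hm
              refine lsq hk H p q S σ hσ (d' - 4) (t' + 1) ?_ m (by omega)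
              intro m' hm'
              have e : t' + 1 + ((m' : ℕ) : ZMod k) = t' + ((1 + m' : ℕ) : ZMod k) := by
                push_cast; ring
              rw [e]; exact memT (1 + m') (by omega) (by omega) (by omega)
            have reachA1 : ∀ m : ℕ, 1 ≤ m → m ≤ d' - 1 →
                Rch (H.deleteEdges {s(p, q)}) S (σ (t' + 1)) (σ (t' + (m : ℕ))) := by
              intro m h1 h2
              have e : t' + ((m : ℕ) : ZMod k) = t' + 1 + ((m - 1 : ℕ) : ZMod k) := by
                rw [Nat.cast_sub (by omega)]; push_cast; ring
              rw [e]; exact colA1 (m - 1) (by omega)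
            have head : Rch (H.deleteEdges {s(p, q)}) S (σ (t' + 1)) (σ (s' + 1)) := by
              by_cases hb1 : s(σ (t' - 1), σ (t' + 1)) = s(p, q)
              · have hb2 := hbne hb1
                have hr : Rch (H.deleteEdges {s(p, q)}) S (σ (t' + 1)) (σ (s' - 1)) := by
                  rw [es1]; exact reachA1 (d' - 1) (by omega) (by omega)
                exact rch_trans hms1 hr (rch_step hb2adj hb2)
              · exact rch_trans hmt1 (rch_symm (rch_step hb1adj hb1)) (rch_symm hA2last)
            intro m h1 h2
            exact rch_trans hmp1 (rch_symm (reachA1 m h1 h2)) head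
        intro i hi
        have hne0 : (i - t').val ≠ 0 := by
          intro h
          apply hi
          rw [hmm]
          left
          rw [decomp t' i, h]; simp
        have hned : (i - t').val ≠ d' := by
          intro h
          apply hi
          rw [hmm]
          right
          rw [decomp t' i, h, ← hs']
        have hnek : (i - t').val < k := ZMod.val_lt _
        rw [decomp t' i]
        by_cases hcmp : (i - t').val < d'
        · exact reachAll _ (by omega) (by omega)
        · exact rch_symm (reachA2 _ (by omega) (by omega))
      · -- small cases: k = 5, d' = 2  or  k = 6, d' = 3
        rcases (show (k = 5 ∧ d' = 2) ∨ (k = 6 ∧ d' = 3) by omega) with ⟨hk5, hd5⟩ | ⟨hk6, hd6⟩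
        · subst hk5; subst hd5
          have dne : ∀ {c1 c2 : ZMod 5}, c1 ≠ c2 → t' + c1 ≠ t' + c2 :=
            fun h hh => h (add_left_cancel hh)
          have hs'' : s' = t' + 2 := by rw [hs']; push_cast; ring
          have hgoal : s' + 1 = t' + 3 := by rw [hs'']; ring
          have h1S : σ (t' + 1) ∉ S := by
            have := memT 1 (by omega) (by omega) (by omega); simpa using this
          have h3S : σ (t' + 3) ∉ S := by
            have := memT 3 (by omega) (by omega) (by omega); simpa using this
          have h4S : σ (t' + 4) ∉ S := by
            have := memT 4 (by omega) (by omega) (by omega); simpa using this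
          have E2adj : H.Adj (σ (t' + 1)) (σ (t' + 3)) := by
            have h := (hσ (t' + 1)).2; rwa [show t' + 1 + 2 = t' + 3 by ring] at h
          have E3adj : H.Adj (σ (t' + 3)) (σ (t' + 4)) := by
            have h := (hσ (t' + 3)).1; rwa [show t' + 3 + 1 = t' + 4 by ring] at h
          have E1adj : H.Adj (σ (t' + 4)) (σ (t' + 1)) := by
            have h := (hσ (t' + 4)).2
            rwa [show t' + 4 + 2 = t' + 1 by rw [add_assoc, show (4 + 2 : ZMod 5) = 1 from by decide]] at h
          intro i hi
          have hne0 : (i - t').val ≠ 0 := by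
            intro h; apply hi; rw [hmm]; left; rw [decomp t' i, h]; simp
          have hned : (i - t').val ≠ 2 := by
            intro h; apply hi; rw [hmm]; right
            rw [decomp t' i, h, hs'']; push_cast; ring
          have hnek : (i - t').val < 5 := ZMod.val_lt _
          rw [decomp t' i, hgoal]
          rcases (show (i - t').val = 1 ∨ (i - t').val = 3 ∨ (i - t').val = 4 by omega)
            with h | h | h <;> rw [h]
          · rw [show ((1 : ℕ) : ZMod 5) = 1 by norm_num]
            by_cases hE2 : s(σ (t' + 1), σ (t' + 3)) = s(p, q)
            · have hE1 : s(σ (t' + 4), σ (t' + 1)) ≠ s(p, q) :=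
                excl hE2 (fun h => (dne (by decide) h.1)) (fun h => (dne (by decide) h.1))
              have hE3 : s(σ (t' + 3), σ (t' + 4)) ≠ s(p, q) :=
                excl hE2 (fun h => (dne (by decide) h.1)) (fun h => (dne (by decide) h.2))
              exact rch_trans h4S (rch_symm (rch_step E1adj hE1))
                (rch_symm (rch_step E3adj hE3))
            · exact rch_step E2adj hE2
          · rw [show ((3 : ℕ) : ZMod 5) = 3 by norm_num]
            exact rch_refl _ _ _
          · rw [show ((4 : ℕ) : ZMod 5) = 4 by norm_num]
            by_cases hE3 : s(σ (t' + 3), σ (t' + 4)) = s(p, q)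
            · have hE1 : s(σ (t' + 4), σ (t' + 1)) ≠ s(p, q) :=
                excl hE3 (fun h => (dne (by decide) h.1)) (fun h => (dne (by decide) h.2))
              have hE2 : s(σ (t' + 1), σ (t' + 3)) ≠ s(p, q) :=
                excl hE3 (fun h => (dne (by decide) h.1)) (fun h => (dne (by decide) h.1))
              exact rch_trans h1S (rch_step E1adj hE1) (rch_step E2adj hE2)
            · exact rch_symm (rch_step E3adj hE3)
        · subst hk6; subst hd6
          have dne : ∀ {c1 c2 : ZMod 6}, c1 ≠ c2 → t' + c1 ≠ t' + c2 :=
            fun h hh => h (add_left_cancel hh)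
          have hs'' : s' = t' + 3 := by rw [hs']; push_cast; ring
          have hgoal : s' + 1 = t' + 4 := by rw [hs'']; ring
          have h1S : σ (t' + 1) ∉ S := by
            have := memT 1 (by omega) (by omega) (by omega); simpa using this
          have h2S : σ (t' + 2) ∉ S := by
            have := memT 2 (by omega) (by omega) (by omega); simpa using this
          have h4S : σ (t' + 4) ∉ S := by
            have := memT 4 (by omega) (by omega) (by omega); simpa using this
          have h5S : σ (t' + 5) ∉ S := by
            have := memT 5 (by omega) (by omega) (by omega); simpa using this
          have Aadj : H.Adj (σ (t' + 1)) (σ (t' + 2)) := by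
            have h := (hσ (t' + 1)).1; rwa [show t' + 1 + 1 = t' + 2 by ring] at h
          have B2adj : H.Adj (σ (t' + 2)) (σ (t' + 4)) := by
            have h := (hσ (t' + 2)).2; rwa [show t' + 2 + 2 = t' + 4 by ring] at h
          have Cadj : H.Adj (σ (t' + 4)) (σ (t' + 5)) := by
            have h := (hσ (t' + 4)).1; rwa [show t' + 4 + 1 = t' + 5 by ring] at h
          have B1adj : H.Adj (σ (t' + 5)) (σ (t' + 1)) := by
            have h := (hσ (t' + 5)).2
            rwa [show t' + 5 + 2 = t' + 1 by rw [add_assoc, show (5 + 2 : ZMod 6) = 1 from by decide]] at h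
          intro i hi
          have hne0 : (i - t').val ≠ 0 := by
            intro h; apply hi; rw [hmm]; left; rw [decomp t' i, h]; simp
          have hned : (i - t').val ≠ 3 := by
            intro h; apply hi; rw [hmm]; right
            rw [decomp t' i, h, hs'']; push_cast; ring
          have hnek : (i - t').val < 6 := ZMod.val_lt _
          rw [decomp t' i, hgoal]
          rcases (show (i - t').val = 1 ∨ (i - t').val = 2 ∨ (i - t').val = 4 ∨ (i - t').val = 5
            by omega) with h | h | h | h <;> rw [h]
          · rw [show ((1 : ℕ) : ZMod 6) = 1 by norm_num]
            by_cases hor : s(σ (t' + 5), σ (t' + 1)) = s(p, q) ∨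
                s(σ (t' + 4), σ (t' + 5)) = s(p, q)
            · have hA : s(σ (t' + 1), σ (t' + 2)) ≠ s(p, q) := by
                rcases hor with h1 | h1
                · exact excl h1 (fun h => (dne (by decide) h.1)) (fun h => (dne (by decide) h.2))
                · exact excl h1 (fun h => (dne (by decide) h.1)) (fun h => (dne (by decide) h.1))
              have hB2 : s(σ (t' + 2), σ (t' + 4)) ≠ s(p, q) := by
                rcases hor with h1 | h1
                · exact excl h1 (fun h => (dne (by decide) h.1)) (fun h => (dne (by decide) h.1))
                · exact excl h1 (fun h => (dne (by decide) h.1)) (fun h => (dne (by decide) h.1))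
              exact rch_trans h2S (rch_step Aadj hA) (rch_step B2adj hB2)
            · push_neg at hor
              exact rch_trans h5S (rch_symm (rch_step B1adj hor.1))
                (rch_symm (rch_step Cadj hor.2))
          · rw [show ((2 : ℕ) : ZMod 6) = 2 by norm_num]
            by_cases hB2 : s(σ (t' + 2), σ (t' + 4)) = s(p, q)
            · have hA : s(σ (t' + 1), σ (t' + 2)) ≠ s(p, q) :=
                excl hB2 (fun h => (dne (by decide) h.1)) (fun h => (dne (by decide) h.1))
              have hB1 : s(σ (t' + 5), σ (t' + 1)) ≠ s(p, q) :=
                excl hB2 (fun h => (dne (by decide) h.1)) (fun h => (dne (by decide) h.1))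
              have hC : s(σ (t' + 4), σ (t' + 5)) ≠ s(p, q) :=
                excl hB2 (fun h => (dne (by decide) h.1)) (fun h => (dne (by decide) h.2))
              exact rch_trans h1S (rch_symm (rch_step Aadj hA))
                (rch_trans h5S (rch_symm (rch_step B1adj hB1)) (rch_symm (rch_step Cadj hC)))
            · exact rch_step B2adj hB2
          · rw [show ((4 : ℕ) : ZMod 6) = 4 by norm_num]
            exact rch_refl _ _ _
          · rw [show ((5 : ℕ) : ZMod 6) = 5 by norm_num]
            by_cases hC : s(σ (t' + 4), σ (t' + 5)) = s(p, q)
            · have hA : s(σ (t' + 1), σ (t' + 2)) ≠ s(p, q) :=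
                excl hC (fun h => (dne (by decide) h.1)) (fun h => (dne (by decide) h.1))
              have hB1 : s(σ (t' + 5), σ (t' + 1)) ≠ s(p, q) :=
                excl hC (fun h => (dne (by decide) h.1)) (fun h => (dne (by decide) h.2))
              have hB2 : s(σ (t' + 2), σ (t' + 4)) ≠ s(p, q) :=
                excl hC (fun h => (dne (by decide) h.1)) (fun h => (dne (by decide) h.1))
              exact rch_trans h1S (rch_step B1adj hB1)
                (rch_trans h2S (rch_step Aadj hA) (rch_step B2adj hB2))
            · exact rch_symm (rch_step Cadj hC)

    -- assemble
    set d := (s0 - t).val with hd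
    have hd0 : d ≠ 0 := by
      intro h
      apply hts
      have h2 : s0 - t = ((d : ℕ) : ZMod k) := (zcast_val _).symm
      rw [h] at h2
      simp only [Nat.cast_zero] at h2
      exact (sub_eq_zero.mp h2).symm
    have hdlt : d < k := ZMod.val_lt _
    have hdneg : (t - s0).val = k - d := by
      rw [show t - s0 = -(s0 - t) by ring, zneg_val (sub_ne_zero.mpr (Ne.symm hts)), hd]
    have hmem' : ∀ z : ZMod k, σ z ∈ S ↔ (z = s0 ∨ z = t) := by
      intro z; rw [hmem]; tauto
    by_cases hd1 : d = 1
    · -- s0 = t + 1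
      have hs1 : s0 = t + 1 := by
        rw [decomp t s0, ← hd, hd1]; push_cast; ring
      exact adjC t (fun z => by rw [hmem, hs1])
    by_cases hdk1 : d = k - 1
    · -- t = s0 + 1
      have hs1 : t = s0 + 1 := by
        rw [decomp s0 t, hdneg, hdk1, show k - (k-1) = 1 by omega]; push_cast; ring
      exact adjC s0 (fun z => by rw [hmem', hs1])
    -- 2 ≤ d ≤ k-2
    have hd2 : 2 ≤ d := by omega
    have hdk2 : d ≤ k - 2 := by omega
    by_cases hhalf : 2 * d ≤ k
    · have tw := twoA t s0 d hmem hd.symm hd2 hhalf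
      intro i j hi hj
      have hmid : σ (s0 + 1) ∉ S := by
        rw [hmem]
        push_neg
        constructor
        · intro h
          have hval1 : (t - s0).val = 1 := by
            rw [← h, show s0 + 1 - s0 = 1 by ring, ZMod.val_one_eq_one_mod]
            exact Nat.mod_eq_of_lt (by omega)
          omega
        · have := shift_ne s0 (c1 := 1) (c2 := 0) (by omega) (by omega) (by omega)
          simpa using this
      exact rch_trans hmid (tw i hi) (rch_symm (tw j hj))
    · have tw := twoA s0 t (k - d) hmem' hdneg (by omega) (by omega)
      intro i j hi hj
      have hmid : σ (t + 1) ∉ S := by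
        rw [hmem']
        push_neg
        constructor
        · intro h
          have hval1 : (s0 - t).val = 1 := by
            rw [← h, show t + 1 - t = 1 by ring, ZMod.val_one_eq_one_mod]
            exact Nat.mod_eq_of_lt (by omega)
          omega
        · have := shift_ne t (c1 := 1) (c2 := 0) (by omega) (by omega) (by omega)
          simpa using this
      exact rch_trans hmid (tw i hi) (rch_symm (tw j hj))

end

/-- A k-vertex graph (k ≥ 5) with δ(H) ≥ k/2 + 1, or containing the square of a
Hamilton cycle, is (2,1)-inseparable. -/
theorem stmt_5 {V : Type*} [Fintype V] (H : SimpleGraph V) [DecidableRel H.Adj]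
    (k : ℕ) (hk : 5 ≤ k) (hcard : Fintype.card V = k)
    (hyp : (∀ v : V, (k : ℝ) / 2 + 1 ≤ H.degree v) ∨
      (∃ σ : ZMod k ≃ V, ∀ i : ZMod k, H.Adj (σ i) (σ (i + 1)) ∧ H.Adj (σ i) (σ (i + 2)))) :
    TwoOneInseparable H := by
  classical
  intro e he
  induction e using Sym2.ind with
  | _ p q =>
  have hpq : H.Adj p q := he
  refine ⟨by rw [hcard]; omega, ?_⟩
  intro S hS
  set G := H.deleteEdges {s(p, q)} with hG
  have hGadj : ∀ x y : V, G.Adj x y ↔ H.Adj x y ∧ s(x, y) ≠ s(p, q) := by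
    intro x y; rw [hG, deleteEdges_adj]; simp
  have hex : ∃ v : V, v ∉ S := by
    by_contra hc
    push_neg at hc
    have hu : S = Set.univ := Set.eq_univ_of_forall hc
    rw [hu, Set.ncard_univ, Nat.card_eq_fintype_card, hcard] at hS
    omega
  rw [connected_iff]
  refine ⟨?_, by obtain ⟨v, hv⟩ := hex; exact ⟨⟨v, hv⟩⟩⟩
  have step : ∀ {x y : V} (hx : x ∈ Sᶜ) (hy : y ∈ Sᶜ), G.Adj x y →
      (G.induce Sᶜ).Reachable ⟨x, hx⟩ ⟨y, hy⟩ := by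
    intro x y hx hy h
    exact SimpleGraph.Adj.reachable (by exact h)
  rintro ⟨a, ha⟩ ⟨b, hb⟩
  rcases hyp with hyp | hyp
  · -- case (i): minimum degree
    have hm : ∀ v : V, (k + 1) / 2 + 1 ≤ H.degree v := by
      intro v
      have h1 := hyp v
      have h2 : (k : ℝ) + 2 ≤ 2 * H.degree v := by linarith
      have h3 : (k + 2 : ℕ) ≤ 2 * H.degree v := by exact_mod_cast h2
      omega
    set m := (k + 1) / 2 with hmdef
    have hm2 : k ≤ 2 * m := by omega
    by_cases hab : a = b
    · subst hab; exact Reachable.refl _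
    by_cases hadj : G.Adj a b
    · exact step ha hb hadj
    have ha' : a ∉ S := ha
    have hb' : b ∉ S := hb
    set S' := S.toFinset with hS'def
    have hS'card : S'.card ≤ 2 := by
      rw [hS'def, ← Set.ncard_eq_toFinset_card']; omega
    have hmemS' : ∀ w : V, w ∈ S' ↔ w ∈ S := by
      intro w; rw [hS'def, Set.mem_toFinset]
    -- lower bounds
    have lower : ∀ c d : V, ¬ G.Adj c d →
        H.degree c ≤ (Finset.univ.filter (fun w => G.Adj c w ∧ w ∉ S ∧ w ≠ d)).card
          + S'.card + 1 := by
      intro c d hcd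
      set ec := if c = p then q else if c = q then p else c with hec
      have hsub : H.neighborFinset c \ (S' ∪ {ec}) ⊆
          Finset.univ.filter (fun w => G.Adj c w ∧ w ∉ S ∧ w ≠ d) := by
        intro w hw
        rw [Finset.mem_sdiff, mem_neighborFinset] at hw
        obtain ⟨hwn, hw2⟩ := hw
        rw [Finset.mem_union, Finset.mem_singleton] at hw2
        push_neg at hw2
        obtain ⟨hwS', hwec⟩ := hw2
        have hkey : s(c, w) ≠ s(p, q) := by
          intro hEq
          rw [Sym2.eq_iff] at hEq
          rcases hEq with ⟨h1, h2⟩ | ⟨h1, h2⟩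
          · exact hwec (by rw [hec, if_pos h1, h2])
          · apply hwec
            rw [hec]
            by_cases hcp : c = p
            · rw [if_pos hcp, h2, ← hcp, h1]
            · rw [if_neg hcp, if_pos h1, h2]
        have hwd : w ≠ d := by
          intro hwd
          subst hwd
          exact hcd ((hGadj c w).mpr ⟨hwn, hkey⟩)
        rw [Finset.mem_filter]
        exact ⟨Finset.mem_univ _, (hGadj c w).mpr ⟨hwn, hkey⟩,
          fun h => hwS' ((hmemS' w).mpr h), hwd⟩
      have h1 := Finset.card_le_card hsub
      have h2 := Finset.le_card_sdiff (S' ∪ {ec}) (H.neighborFinset c)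
      have h3 : (S' ∪ {ec}).card ≤ S'.card + 1 := by
        calc (S' ∪ {ec}).card ≤ S'.card + ({ec} : Finset V).card := Finset.card_union_le _ _
        _ = S'.card + 1 := by rw [Finset.card_singleton]
      have h4 : (H.neighborFinset c).card = H.degree c := H.card_neighborFinset_eq_degree c
      omega
    have lower' : ∀ c d : V, ¬ G.Adj c d → c ≠ p → c ≠ q →
        H.degree c ≤ (Finset.univ.filter (fun w => G.Adj c w ∧ w ∉ S ∧ w ≠ d)).card
          + S'.card := by
      intro c d hcd hcp hcq
      have hce : ∀ w, s(c, w) ≠ s(p, q) := by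
        intro w hEq
        rw [Sym2.eq_iff] at hEq
        rcases hEq with ⟨h1, _⟩ | ⟨h1, _⟩
        exacts [hcp h1, hcq h1]
      have hsub : H.neighborFinset c \ S' ⊆
          Finset.univ.filter (fun w => G.Adj c w ∧ w ∉ S ∧ w ≠ d) := by
        intro w hw
        rw [Finset.mem_sdiff, mem_neighborFinset] at hw
        obtain ⟨hwn, hwS'⟩ := hw
        have hwd : w ≠ d := by
          intro hwd
          subst hwd
          exact hcd ((hGadj c w).mpr ⟨hwn, hce w⟩)
        rw [Finset.mem_filter]
        exact ⟨Finset.mem_univ _, (hGadj c w).mpr ⟨hwn, hce w⟩,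
          fun h => hwS' ((hmemS' w).mpr h), hwd⟩
      have h1 := Finset.card_le_card hsub
      have h2 := Finset.le_card_sdiff S' (H.neighborFinset c)
      have h4 : (H.neighborFinset c).card = H.degree c := H.card_neighborFinset_eq_degree c
      omega
    have hnadj' : ¬ G.Adj b a := fun h => hadj h.symm
    have hAl := lower a b hadj
    have hBl := lower b a hnadj'
    set A := Finset.univ.filter (fun w => G.Adj a w ∧ w ∉ S ∧ w ≠ b) with hAdef
    set B := Finset.univ.filter (fun w => G.Adj b w ∧ w ∉ S ∧ w ≠ a) with hBdef
    by_cases hcom : ∃ w, w ∈ A ∧ w ∈ B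
    · obtain ⟨w, hwA, hwB⟩ := hcom
      rw [hAdef, Finset.mem_filter] at hwA
      rw [hBdef, Finset.mem_filter] at hwB
      obtain ⟨-, hwa, hwS, -⟩ := hwA
      obtain ⟨-, hwb, -, -⟩ := hwB
      exact (step ha hwS hwa).trans (step hwS hb hwb.symm)
    push_neg at hcom
    have hdisj : Disjoint A B := Finset.disjoint_left.mpr fun {w} h => hcom w h
    have hsubR : A ∪ B ⊆ Finset.univ \ (S' ∪ {a, b}) := by
      intro w hw
      rw [Finset.mem_union] at hw
      rw [Finset.mem_sdiff, Finset.mem_union, Finset.mem_insert, Finset.mem_singleton]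
      refine ⟨Finset.mem_univ _, ?_⟩
      push_neg
      rcases hw with hw | hw
      · rw [hAdef, Finset.mem_filter] at hw
        exact ⟨fun h => hw.2.2.1 ((hmemS' w).mp h), hw.2.1.ne', hw.2.2.2⟩
      · rw [hBdef, Finset.mem_filter] at hw
        exact ⟨fun h => hw.2.2.1 ((hmemS' w).mp h), hw.2.2.2, hw.2.1.ne'⟩
    have habS' : Disjoint S' ({a, b} : Finset V) := by
      rw [Finset.disjoint_right]
      intro w hw
      rw [Finset.mem_insert, Finset.mem_singleton] at hw
      rcases hw with rfl | rfl
      · exact fun h => ha' ((hmemS' w).mp h)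
      · exact fun h => hb' ((hmemS' w).mp h)
    have hRcard : (Finset.univ \ (S' ∪ {a, b})).card = k - (S'.card + 2) := by
      rw [Finset.card_sdiff_of_subset (Finset.subset_univ _), Finset.card_univ, hcard,
        Finset.card_union_of_disjoint habS', Finset.card_pair hab]
    have hcount : A.card + B.card ≤ k - (S'.card + 2) := by
      calc A.card + B.card = (A ∪ B).card := (Finset.card_union_of_disjoint hdisj).symm
        _ ≤ (Finset.univ \ (S' ∪ {a, b})).card := Finset.card_le_card hsubR
        _ = k - (S'.card + 2) := hRcard
    have hdega := hm a
    have hdegb := hm b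
    have hap : a = p ∨ a = q := by
      by_contra hc
      push_neg at hc
      have h1 := lower' a b hadj hc.1 hc.2
      rw [← hAdef] at h1
      omega
    have hbp : b = p ∨ b = q := by
      by_contra hc
      push_neg at hc
      have h1 := lower' b a hnadj' hc.1 hc.2
      rw [← hBdef] at h1
      omega
    have heab : s(a, b) = s(p, q) := by
      rw [Sym2.eq_iff]
      rcases hap with rfl | rfl <;> rcases hbp with hb1 | hb1
      · exact absurd (hb1 ▸ rfl) hab
      · exact Or.inl ⟨rfl, hb1⟩
      · exact Or.inr ⟨rfl, hb1⟩
      · exact absurd (hb1 ▸ rfl) hab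
    have hAne : A.Nonempty := Finset.card_pos.mp (by omega)
    obtain ⟨w, hwA⟩ := hAne
    have hwB : w ∉ B := hcom w hwA
    rw [hAdef, Finset.mem_filter] at hwA
    obtain ⟨-, hwa, hwS, hwb⟩ := hwA
    have hwna : w ≠ a := hwa.ne'
    have hkey : ∃ x, G.Adj w x ∧ (x = b ∨ x ∈ B) := by
      by_contra hc
      push_neg at hc
      have hGw : ∀ x, G.Adj w x ↔ H.Adj w x := by
        intro x
        rw [hGadj]
        refine ⟨fun h => h.1, fun h => ⟨h, ?_⟩⟩
        intro hEq
        rw [← heab, Sym2.eq_iff] at hEq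
        rcases hEq with ⟨h1, _⟩ | ⟨h1, _⟩
        exacts [hwna h1, hwb h1]
      have hbB : b ∉ B := by
        rw [hBdef, Finset.mem_filter]
        rintro ⟨-, h, -⟩
        exact h.ne rfl
      have hsubW : H.neighborFinset w ⊆ Finset.univ \ (B ∪ {w, b}) := by
        intro x hx
        rw [mem_neighborFinset] at hx
        have hGwx : G.Adj w x := (hGw x).mpr hx
        have h1 := hc x hGwx
        rw [Finset.mem_sdiff, Finset.mem_union, Finset.mem_insert, Finset.mem_singleton]
        refine ⟨Finset.mem_univ _, ?_⟩
        push_neg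
        exact ⟨h1.2, hGwx.ne', h1.1⟩
      have hwbB : Disjoint B ({w, b} : Finset V) := by
        rw [Finset.disjoint_right]
        intro x hx
        rw [Finset.mem_insert, Finset.mem_singleton] at hx
        rcases hx with rfl | rfl
        exacts [hwB, hbB]
      have hBw2 : (B ∪ {w, b}).card = B.card + 2 := by
        rw [Finset.card_union_of_disjoint hwbB, Finset.card_pair hwb]
      have h1 := Finset.card_le_card hsubW
      rw [Finset.card_sdiff_of_subset (Finset.subset_univ _), Finset.card_univ, hcard, hBw2] at h1
      have h4 : (H.neighborFinset w).card = H.degree w := H.card_neighborFinset_eq_degree w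
      have hdegw := hm w
      omega
    obtain ⟨x, hwx, hxc⟩ := hkey
    rcases hxc with rfl | hxB
    · exact (step ha hwS hwa).trans (step hwS hb hwx)
    · rw [hBdef, Finset.mem_filter] at hxB
      obtain ⟨-, hbx, hxS, -⟩ := hxB
      exact ((step ha hwS hwa).trans (step hwS hxS hwx)).trans (step hxS hb hbx.symm)
  · -- case (ii): square of Hamilton cycle
    obtain ⟨σ, hσ⟩ := hyp
    have key := caseII hk H p q S hS σ hσ
    have hi : σ (σ.symm a) ∉ S := by rw [Equiv.apply_symm_apply]; exact ha
    have hj : σ (σ.symm b) ∉ S := by rw [Equiv.apply_symm_apply]; exact hb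
    have h := key (σ.symm a) (σ.symm b) hi hj hi hj
    have e1 : (⟨σ (σ.symm a), hi⟩ : ↥Sᶜ) = ⟨a, ha⟩ := Subtype.ext (σ.apply_symm_apply a)
    have e2 : (⟨σ (σ.symm b), hj⟩ : ↥Sᶜ) = ⟨b, hb⟩ := Subtype.ext (σ.apply_symm_apply b)
    rw [hG]
    rw [e1, e2] at h
    exact h
end

section
/- Let 3 ≤ r ≤ s and let H be a bipartite graph with parts X, Y of sizes |X| = r, |Y| = s such that every x ∈ X has degree at least s/2 + 1 and every y ∈ Y has degree at least r/2 + 1. Then H is (1,1,1)-inseparable: it cannot be disconnected by removing one edge together with at most one vertex from each partite set. -/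
open SimpleGraph

/-- A bipartite graph `H` with bipartition `(X, Xᶜ)` is `(1,1,1)`-inseparable: it
cannot be disconnected by removing one edge together with at most one vertex from
each partite set. -/
def InsepBip {V : Type*} (H : SimpleGraph V) (X : Set V) : Prop :=
  ∀ e ∈ H.edgeSet, ∀ X' ⊆ X, ∀ Y' ⊆ Xᶜ, X'.ncard ≤ 1 → Y'.ncard ≤ 1 →
    ((H.deleteEdges {e}).induce (X' ∪ Y')ᶜ).Connected

private lemma ncard_nbrSet {V : Type*} [Fintype V] (H : SimpleGraph V) [DecidableRel H.Adj]
    (u : V) : (H.neighborSet u).ncard = H.degree u := by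
  rw [Set.ncard_eq_toFinset_card']
  rfl

private lemma exists_mem_not_mem {V : Type*} [Fintype V] {A B : Set V}
    (h : B.ncard < A.ncard) : ∃ x ∈ A, x ∉ B := by
  by_contra hc
  push_neg at hc
  exact absurd (Set.ncard_le_ncard hc (Set.toFinite B)) (not_le.mpr h)

private lemma insep_aux {V : Type*} [Fintype V] (H : SimpleGraph V) [DecidableRel H.Adj]
    (X : Set V) (r s : ℕ) (h3r : 3 ≤ r) (h3s : 3 ≤ s)
    (hX : X.ncard = r) (hY : Xᶜ.ncard = s)
    (hbip : ∀ a b, H.Adj a b → (a ∈ X ↔ b ∉ X))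
    (hdX : ∀ x ∈ X, (s : ℝ) / 2 + 1 ≤ H.degree x)
    (hdY : ∀ y ∈ Xᶜ, (r : ℝ) / 2 + 1 ≤ H.degree y)
    (a b : V) (hab : H.Adj a b) (haX : a ∈ X) (hbX : b ∉ X)
    (X' Y' : Set V) (hX'sub : X' ⊆ X) (hY'sub : Y' ⊆ Xᶜ)
    (hX'1 : X'.ncard ≤ 1) (hY'1 : Y'.ncard ≤ 1) :
    ((H.deleteEdges {s(a, b)}).induce (X' ∪ Y')ᶜ).Connected := by
  classical
  set S : Set V := (X' ∪ Y')ᶜ with hS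
  have hmem : ∀ v, v ∉ X' → v ∉ Y' → v ∈ S := by
    intro v h1 h2
    simp [hS, h1, h2]
  -- every vertex has degree at least 3
  have hdeg3 : ∀ v, 3 ≤ H.degree v := by
    intro v
    by_cases hv : v ∈ X
    · have h1 := hdX v hv
      have h2 : (3 : ℝ) ≤ s := by exact_mod_cast h3s
      have : (2 : ℕ) < H.degree v := by
        have : (2 : ℝ) < H.degree v := by linarith
        exact_mod_cast this
      omega
    · have h1 := hdY v hv
      have h2 : (3 : ℝ) ≤ r := by exact_mod_cast h3r
      have : (2 : ℕ) < H.degree v := by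
        have : (2 : ℝ) < H.degree v := by linarith
        exact_mod_cast this
      omega
  -- any two vertices of X have at least two common neighbors
  have hcommon : ∀ u v, u ∈ X → v ∈ X →
      2 ≤ ((H.neighborSet u) ∩ (H.neighborSet v)).ncard := by
    intro u v hu hv
    have hsubu : H.neighborSet u ⊆ Xᶜ := fun y hy =>
      (hbip u y ((H.mem_neighborSet u y).mp hy)).mp hu
    have hsubv : H.neighborSet v ⊆ Xᶜ := fun y hy =>
      (hbip v y ((H.mem_neighborSet v y).mp hy)).mp hv
    have hunion : ((H.neighborSet u) ∪ (H.neighborSet v)).ncard ≤ s := by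
      rw [← hY]
      exact Set.ncard_le_ncard (Set.union_subset hsubu hsubv) (Set.toFinite _)
    have heq := Set.ncard_inter_add_ncard_union (H.neighborSet u) (H.neighborSet v)
      (Set.toFinite _) (Set.toFinite _)
    rw [ncard_nbrSet, ncard_nbrSet] at heq
    have hu' := hdX u hu
    have hv' := hdX v hv
    have hcast : (((H.neighborSet u) ∩ (H.neighborSet v)).ncard : ℝ)
        + (((H.neighborSet u) ∪ (H.neighborSet v)).ncard : ℝ)
        = (H.degree u : ℝ) + (H.degree v : ℝ) := by exact_mod_cast heq
    have hun : ((((H.neighborSet u) ∪ (H.neighborSet v)).ncard : ℝ)) ≤ s := by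
      exact_mod_cast hunion
    have h2 : (2 : ℝ) ≤ (((H.neighborSet u) ∩ (H.neighborSet v)).ncard : ℝ) := by
      linarith
    exact_mod_cast h2
  -- adjacency in the induced graph
  have hadj : ∀ (u v : V) (hu : u ∈ S) (hv : v ∈ S), H.Adj u v → s(u, v) ≠ s(a, b) →
      ((H.deleteEdges {s(a, b)}).induce S).Adj ⟨u, hu⟩ ⟨v, hv⟩ := by
    intro u v hu hv h hne
    show (H.deleteEdges {s(a, b)}).Adj u v
    rw [SimpleGraph.deleteEdges_adj]
    exact ⟨h, by simpa using hne⟩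
  -- small sets bound
  have hXa : (X' ∪ {a}).ncard ≤ 2 := by
    have := Set.ncard_union_le X' ({a} : Set V)
    rw [Set.ncard_singleton] at this
    omega
  have hYb : (Y' ∪ {b}).ncard ≤ 2 := by
    have := Set.ncard_union_le Y' ({b} : Set V)
    rw [Set.ncard_singleton] at this
    omega
  -- choose a hub x0 ∈ X, x0 ∉ X', x0 ≠ a
  obtain ⟨x0, hx0X, hx0n⟩ := exists_mem_not_mem (A := X) (B := X' ∪ {a})
    (by rw [hX]; omega)
  have hx0X' : x0 ∉ X' := fun h => hx0n (Or.inl h)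
  have hx0a : x0 ≠ a := fun h => hx0n (Or.inr h)
  have hx0Y' : x0 ∉ Y' := fun h => (hY'sub h) hx0X
  have hx0S : x0 ∈ S := hmem x0 hx0X' hx0Y'
  -- Step X : every surviving vertex of X other than a reaches the hub
  have StepX : ∀ (u : V), u ∈ X → u ≠ a → ∀ (huS : u ∈ S),
      ((H.deleteEdges {s(a, b)}).induce S).Reachable ⟨u, huS⟩ ⟨x0, hx0S⟩ := by
    intro u hu hua huS
    have h2 := hcommon u x0 hu hx0X
    obtain ⟨y, hy, hyY'⟩ := exists_mem_not_mem
      (A := (H.neighborSet u) ∩ (H.neighborSet x0)) (B := Y') (by omega)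
    have hyu : H.Adj u y := (H.mem_neighborSet u y).mp hy.1
    have hyx0 : H.Adj x0 y := (H.mem_neighborSet x0 y).mp hy.2
    have hyX : y ∉ X := (hbip u y hyu).mp hu
    have hyX' : y ∉ X' := fun h => hyX (hX'sub h)
    have hyS : y ∈ S := hmem y hyX' hyY'
    have e1 : s(u, y) ≠ s(a, b) := by
      intro h
      rcases Sym2.eq_iff.mp h with ⟨h1, h2⟩ | ⟨h1, h2⟩
      · exact hua h1
      · exact hbX (h1 ▸ hu)
    have e2 : s(x0, y) ≠ s(a, b) := by
      intro h
      rcases Sym2.eq_iff.mp h with ⟨h1, h2⟩ | ⟨h1, h2⟩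
      · exact hx0a h1
      · exact hbX (h1 ▸ hx0X)
    exact ((hadj u y huS hyS hyu e1).reachable).trans
      ((hadj x0 y hx0S hyS hyx0 e2).reachable).symm
  -- Step Y : every surviving vertex of Xᶜ other than b reaches the hub
  have StepY : ∀ (y : V), y ∉ X → y ≠ b → ∀ (hyS : y ∈ S),
      ((H.deleteEdges {s(a, b)}).induce S).Reachable ⟨y, hyS⟩ ⟨x0, hx0S⟩ := by
    intro y hy hyb hyS
    obtain ⟨x, hx, hxn⟩ := exists_mem_not_mem (A := H.neighborSet y) (B := X' ∪ {a})
      (by rw [ncard_nbrSet]; have := hdeg3 y; omega)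
    have hyx : H.Adj y x := (H.mem_neighborSet y x).mp hx
    have hxX : x ∈ X := (hbip x y hyx.symm).mpr hy
    have hxX' : x ∉ X' := fun h => hxn (Or.inl h)
    have hxa : x ≠ a := fun h => hxn (Or.inr h)
    have hxY' : x ∉ Y' := fun h => (hY'sub h) hxX
    have hxS : x ∈ S := hmem x hxX' hxY'
    have e1 : s(y, x) ≠ s(a, b) := by
      intro h
      rcases Sym2.eq_iff.mp h with ⟨h1, h2⟩ | ⟨h1, h2⟩
      · exact (h1 ▸ hy) haX
      · exact hyb h1
    exact ((hadj y x hyS hxS hyx e1).reachable).trans (StepX x hxX hxa hxS)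
  -- conclude
  rw [SimpleGraph.connected_iff_exists_forall_reachable]
  refine ⟨⟨x0, hx0S⟩, ?_⟩
  rintro ⟨w, hwS⟩
  have hwX'Y' : w ∉ X' ∧ w ∉ Y' := by
    have := hwS
    simp only [hS, Set.mem_compl_iff, Set.mem_union] at this
    tauto
  by_cases hw : w ∈ X
  · by_cases hwa : w = a
    · subst hwa
      -- w = a : find a neighbor y ∉ Y' ∪ {b}
      obtain ⟨y, hy, hyn⟩ := exists_mem_not_mem (A := H.neighborSet w) (B := Y' ∪ {b})
        (by rw [ncard_nbrSet]; have := hdeg3 w; omega)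
      have hay : H.Adj w y := (H.mem_neighborSet w y).mp hy
      have hyY' : y ∉ Y' := fun h => hyn (Or.inl h)
      have hyb : y ≠ b := fun h => hyn (Or.inr h)
      have hyX : y ∉ X := (hbip w y hay).mp hw
      have hyX' : y ∉ X' := fun h => hyX (hX'sub h)
      have hyS : y ∈ S := hmem y hyX' hyY'
      have e1 : s(w, y) ≠ s(w, b) := by
        intro h
        rcases Sym2.eq_iff.mp h with ⟨h1, h2⟩ | ⟨h1, h2⟩
        · exact hyb h2
        · exact hab.ne h1
      exact (((hadj w y hwS hyS hay e1).reachable).trans (StepY y hyX hyb hyS)).symm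
    · exact (StepX w hw hwa hwS).symm
  · by_cases hwb : w = b
    · subst hwb
      -- w = b : find a neighbor x ∉ X' ∪ {a}
      obtain ⟨x, hx, hxn⟩ := exists_mem_not_mem (A := H.neighborSet w) (B := X' ∪ {a})
        (by rw [ncard_nbrSet]; have := hdeg3 w; omega)
      have hbx : H.Adj w x := (H.mem_neighborSet w x).mp hx
      have hxX : x ∈ X := (hbip x w hbx.symm).mpr hw
      have hxX' : x ∉ X' := fun h => hxn (Or.inl h)
      have hxa : x ≠ a := fun h => hxn (Or.inr h)
      have hxY' : x ∉ Y' := fun h => (hY'sub h) hxX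
      have hxS : x ∈ S := hmem x hxX' hxY'
      have e1 : s(w, x) ≠ s(a, w) := by
        intro h
        rcases Sym2.eq_iff.mp h with ⟨h1, h2⟩ | ⟨h1, h2⟩
        · exact hab.ne h1.symm
        · exact hxa h2
      exact (((hadj w x hwS hxS hbx e1).reachable).trans (StepX x hxX hxa hxS)).symm
    · exact (StepY w hw hwb hwS).symm

/-- A bipartite graph with parts of sizes 3 ≤ r ≤ s in which every vertex of the
r-side has degree ≥ s/2 + 1 and every vertex of the s-side has degree ≥ r/2 + 1
is (1,1,1)-inseparable. -/
theorem stmt_6 {V : Type*} [Fintype V] (H : SimpleGraph V) [DecidableRel H.Adj]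
    (X : Set V) (r s : ℕ) (h3r : 3 ≤ r) (hrs : r ≤ s)
    (hX : X.ncard = r) (hY : Xᶜ.ncard = s)
    (hbip : ∀ a b, H.Adj a b → (a ∈ X ↔ b ∉ X))
    (hdX : ∀ x ∈ X, (s : ℝ) / 2 + 1 ≤ H.degree x)
    (hdY : ∀ y ∈ Xᶜ, (r : ℝ) / 2 + 1 ≤ H.degree y) :
    InsepBip H X := by
  classical
  have h3s : 3 ≤ s := le_trans h3r hrs
  intro e he X' hX'sub Y' hY'sub hX'1 hY'1
  revert he
  induction e using Sym2.ind with
  | _ a b =>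
    intro he
    have hab : H.Adj a b := H.mem_edgeSet.mp he
    by_cases haX : a ∈ X
    · have hbX : b ∉ X := (hbip a b hab).mp haX
      exact insep_aux H X r s h3r h3s hX hY hbip hdX hdY a b hab haX hbX
        X' Y' hX'sub hY'sub hX'1 hY'1
    · have hbX : b ∈ X := by
        by_contra hbX
        exact haX ((hbip a b hab).mpr hbX)
      have hY2 : (Xᶜ)ᶜ.ncard = r := by rw [compl_compl]; exact hX
      have hbip' : ∀ u v, H.Adj u v → (u ∈ Xᶜ ↔ v ∉ Xᶜ) := by
        intro u v huv
        have := hbip u v huv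
        simp only [Set.mem_compl_iff]
        tauto
      have hdY' : ∀ y ∈ (Xᶜ)ᶜ, (s : ℝ) / 2 + 1 ≤ H.degree y := by
        rw [compl_compl]; exact hdX
      have haC : a ∈ Xᶜ := haX
      have hbC : b ∉ Xᶜ := fun h => h hbX
      have hX'sub' : X' ⊆ (Xᶜ)ᶜ := by rw [compl_compl]; exact hX'sub
      have key := insep_aux H Xᶜ s r h3s h3r hY hY2 hbip' hdY hdY' a b hab haC hbC
        Y' X' hY'sub hX'sub' hY'1 hX'1
      rwa [Set.union_comm Y' X'] at key
end

section
/- Suppose H is a Behrendian graph. If H' is obtained from H by either (i) adding a new edge between two vertices of V(H), or (ii) adding a new vertex together with edges to at least two vertices of V(H), then H' is also Behrendian. -/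
open SimpleGraph

/-- A list of edges is monochromatic under the colouring `χ`. -/
def MonoList {V : Type*} (χ : Sym2 V → ℕ) (l : List (Sym2 V)) : Prop :=
  ∀ e ∈ l, ∀ f ∈ l, χ e = χ f

/-- A connected graph `H` is Behrendian if every non-monochromatic edge-colouring of
`H` yields a non-monochromatic cycle in `H` that is the union of at most three
monochromatic paths. -/
def Behrendian {V : Type*} (H : SimpleGraph V) : Prop :=
  H.Connected ∧ ∀ χ : Sym2 V → ℕ,
    (∃ e ∈ H.edgeSet, ∃ f ∈ H.edgeSet, χ e ≠ χ f) →
    ∃ (u v w : V) (p : H.Walk u v) (q : H.Walk v w) (r : H.Walk w u),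
      p.IsPath ∧ q.IsPath ∧ r.IsPath ∧
      MonoList χ p.edges ∧ MonoList χ q.edges ∧ MonoList χ r.edges ∧
      (p.append (q.append r)).IsCycle ∧ ¬ MonoList χ (p.append (q.append r)).edges

/-- The graph obtained from `H` by adding a new vertex (`none`) joined to the
vertices of `S`. -/
def addVertex {V : Type*} (H : SimpleGraph V) (S : Set V) : SimpleGraph (Option V) where
  Adj u v := (∃ a b, u = some a ∧ v = some b ∧ H.Adj a b) ∨
    (u = none ∧ ∃ b ∈ S, v = some b) ∨ (v = none ∧ ∃ a ∈ S, u = some a)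
  symm := by
    refine ⟨?_⟩
    rintro u v (⟨a, b, ha, hb, hab⟩ | ⟨hu, b, hb, hvb⟩ | ⟨hv, a, ha, hua⟩)
    · exact Or.inl ⟨b, a, hb, ha, hab.symm⟩
    · exact Or.inr (Or.inr ⟨hu, b, hb, hvb⟩)
    · exact Or.inr (Or.inl ⟨hv, a, ha, hua⟩)
  loopless := by
    refine ⟨?_⟩
    rintro u (⟨a, b, ha, hb, hab⟩ | ⟨hu, b, hb, hvb⟩ | ⟨hv, a, ha, hua⟩)
    · exact H.irrefl (by rw [ha] at hb; injection hb with h; rw [h] at hab; exact hab)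
    · rw [hu] at hvb; exact absurd hvb (by simp)
    · rw [hv] at hua; exact absurd hua (by simp)

section Aux

variable {V W : Type*}

lemma monoList_singleton' (χ : Sym2 V → ℕ) (e : Sym2 V) : MonoList χ [e] := by
  intro a ha b hb
  simp only [List.mem_singleton] at ha hb
  rw [ha, hb]

lemma monoList_map (f : V → W) (χ : Sym2 W → ℕ) (l : List (Sym2 V))
    (h : MonoList (fun e => χ (Sym2.map f e)) l) : MonoList χ (l.map (Sym2.map f)) := by
  intro e he g hg
  simp only [List.mem_map] at he hg
  obtain ⟨e0, he0, rfl⟩ := he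
  obtain ⟨g0, hg0, rfl⟩ := hg
  exact h e0 he0 g0 hg0

lemma monoList_map_rev (f : V → W) (χ : Sym2 W → ℕ) (l : List (Sym2 V))
    (h : MonoList χ (l.map (Sym2.map f))) : MonoList (fun e => χ (Sym2.map f e)) l := by
  intro e he g hg
  exact h _ (List.mem_map_of_mem he) _ (List.mem_map_of_mem hg)

/-- Transferring a suitable cycle along an injective graph homomorphism. -/
lemma transfer {H : SimpleGraph V} {H' : SimpleGraph W} (f : H →g H')
    (hf : Function.Injective f) (χ : Sym2 W → ℕ)
    (h : ∃ (u v w : V) (p : H.Walk u v) (q : H.Walk v w) (r : H.Walk w u),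
      p.IsPath ∧ q.IsPath ∧ r.IsPath ∧
      MonoList (fun e => χ (Sym2.map f e)) p.edges ∧
      MonoList (fun e => χ (Sym2.map f e)) q.edges ∧
      MonoList (fun e => χ (Sym2.map f e)) r.edges ∧
      (p.append (q.append r)).IsCycle ∧
      ¬ MonoList (fun e => χ (Sym2.map f e)) (p.append (q.append r)).edges) :
    ∃ (u v w : W) (p : H'.Walk u v) (q : H'.Walk v w) (r : H'.Walk w u),
      p.IsPath ∧ q.IsPath ∧ r.IsPath ∧
      MonoList χ p.edges ∧ MonoList χ q.edges ∧ MonoList χ r.edges ∧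
      (p.append (q.append r)).IsCycle ∧ ¬ MonoList χ (p.append (q.append r)).edges := by
  obtain ⟨u, v, w, p, q, r, hp, hq, hr, mp, mq, mr, hc, hnm⟩ := h
  refine ⟨f u, f v, f w, p.map f, q.map f, r.map f,
    p.map_isPath_of_injective hf hp, q.map_isPath_of_injective hf hq,
    r.map_isPath_of_injective hf hr, ?_, ?_, ?_, ?_, ?_⟩
  · rw [Walk.edges_map]; exact monoList_map _ _ _ mp
  · rw [Walk.edges_map]; exact monoList_map _ _ _ mq
  · rw [Walk.edges_map]; exact monoList_map _ _ _ mr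
  · rw [← Walk.map_append, ← Walk.map_append]
    exact ((p.append (q.append r)).map_isCycle_iff_of_injective hf).2 hc
  · rw [← Walk.map_append, ← Walk.map_append, Walk.edges_map]
    intro hM
    exact hnm (monoList_map_rev _ _ _ hM)

end Aux

section PartOne

/-- Adding an edge between two existing vertices preserves being Behrendian. -/
theorem behrendian_addEdge {V : Type*} (H : SimpleGraph V) (hH : Behrendian H) :
    (∀ u v : V, u ≠ v → Behrendian (H ⊔ SimpleGraph.fromEdgeSet {s(u, v)})) := by
  classical
  intro u v huv
  set H' := H ⊔ SimpleGraph.fromEdgeSet {s(u, v)} with hH'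
  refine ⟨hH.1.mono le_sup_left, ?_⟩
  intro χ hne
  have hfle : ⇑(Hom.ofLE (le_sup_left : H ≤ H')) = id := rfl
  by_cases hmono : ∃ e ∈ H.edgeSet, ∃ f ∈ H.edgeSet, χ e ≠ χ f
  · have hχ : (fun e => χ (Sym2.map (Hom.ofLE (le_sup_left : H ≤ H')) e)) = χ := by
      funext e
      rw [hfle, Sym2.map_id, id_eq]
    refine transfer (Hom.ofLE le_sup_left) (fun a b h => by
      simpa [hfle] using h) χ ?_
    rw [hχ]
    exact hH.2 χ hmono
  · push_neg at hmono
    have hedge : ∀ e ∈ H'.edgeSet, e ∈ H.edgeSet ∨ e = s(u, v) := by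
      intro e he
      rw [hH', edgeSet_sup] at he
      rcases he with he | he
      · exact Or.inl he
      · rw [edgeSet_fromEdgeSet] at he
        exact Or.inr he.1
    by_cases hin : s(u, v) ∈ H.edgeSet
    · exfalso
      obtain ⟨e, he, f, hf, hef⟩ := hne
      rcases hedge e he with he' | rfl <;> rcases hedge f hf with hf' | rfl
      · exact hef (hmono e he' f hf')
      · exact hef (hmono e he' _ hin)
      · exact hef (hmono _ hin f hf')
      · exact hef rfl
    · have hdiff : ∃ g ∈ H.edgeSet, χ s(u, v) ≠ χ g := by
        obtain ⟨e, he, f, hf, hef⟩ := hne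
        rcases hedge e he with he' | rfl <;> rcases hedge f hf with hf' | rfl
        · exact absurd (hmono e he' f hf') hef
        · exact ⟨e, he', fun h => hef h.symm⟩
        · exact ⟨f, hf', hef⟩
        · exact absurd rfl hef
      obtain ⟨g, hg, hgne⟩ := hdiff
      obtain ⟨w0⟩ := hH.1.preconnected v u
      set q0 : H.Walk v u := w0.toPath.1 with hq0def
      have hq0 : q0.IsPath := w0.toPath.2
      set q : H'.Walk v u := q0.mapLe le_sup_left with hqdef
      have hqe : q.edges = q0.edges := by
        rw [hqdef, Walk.mapLe, Walk.edges_map, hfle, Sym2.map_id, List.map_id]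
      have hq : q.IsPath := hq0.mapLe _
      have hq0sub : ∀ e ∈ q0.edges, e ∈ H.edgeSet := fun e he => q0.edges_subset_edgeSet he
      have hadj : H'.Adj u v := by
        rw [hH', sup_adj, fromEdgeSet_adj]
        exact Or.inr ⟨rfl, huv⟩
      have hnotmem : s(u, v) ∉ q.edges := by
        rw [hqe]
        intro hmem
        exact hin (hq0sub _ hmem)
      have hq0ne : q0.edges ≠ [] := by
        intro h
        have : q0.length = 0 := by rw [← Walk.length_edges, h]; rfl
        exact huv (Walk.nil_iff_length_eq.2 this).eq.symm
      set e1 := q0.edges.head hq0ne with he1def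
      have he1mem : e1 ∈ q0.edges := List.head_mem hq0ne
      have he1H : e1 ∈ H.edgeSet := hq0sub _ he1mem
      refine ⟨u, v, u, Walk.cons hadj Walk.nil, q, Walk.nil, ?_, hq, Walk.IsPath.nil,
        ?_, ?_, ?_, ?_, ?_⟩
      · rw [Walk.cons_isPath_iff]
        exact ⟨Walk.IsPath.nil, by simp [hadj.ne]⟩
      · simpa using monoList_singleton' χ s(u, v)
      · rw [hqe]
        intro e he f hf
        exact hmono e (hq0sub e he) f (hq0sub f hf)
      · intro e he f hf
        simp at he
      · show (Walk.cons hadj (q.append Walk.nil)).IsCycle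
        rw [Walk.append_nil, Walk.cons_isCycle_iff]
        exact ⟨hq, hnotmem⟩
      · intro hM
        have hce : ((Walk.cons hadj Walk.nil).append (q.append Walk.nil)).edges
            = s(u, v) :: q.edges := by
          simp [Walk.edges_append]
        rw [hce] at hM
        have h1 : χ s(u, v) = χ e1 := hM _ (List.mem_cons_self) _
          (List.mem_cons_of_mem _ (hqe ▸ he1mem))
        exact hgne (h1.trans (hmono e1 he1H g hg))

end PartOne

section PartTwo

variable {V : Type*} {H : SimpleGraph V} {S : Set V}

/-- The embedding of `H` into `addVertex H S`. -/
def homSome (H : SimpleGraph V) (S : Set V) : H →g addVertex H S where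
  toFun := some
  map_rel' := fun h => Or.inl ⟨_, _, rfl, rfl, h⟩

lemma homSome_coe : ⇑(homSome H S) = some := rfl

lemma homSome_inj : Function.Injective (homSome H S) := by
  intro a b h
  exact Option.some_injective V h

lemma addVertex_adj_none {a : V} (ha : a ∈ S) : (addVertex H S).Adj none (some a) :=
  Or.inr (Or.inl ⟨rfl, a, ha, rfl⟩)

lemma addVertex_adj_none' {a : V} (ha : a ∈ S) : (addVertex H S).Adj (some a) none :=
  Or.inr (Or.inr ⟨rfl, a, ha, rfl⟩)

lemma addVertex_connected (hH : H.Connected) (hS : S.Nonempty) :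
    (addVertex H S).Connected := by
  obtain ⟨a, ha⟩ := hS
  have key : ∀ x : Option V, (addVertex H S).Reachable x (some a) := by
    intro x
    cases x with
    | none => exact (addVertex_adj_none ha).reachable
    | some u =>
      obtain ⟨w⟩ := hH.preconnected u a
      exact ⟨w.map (homSome H S)⟩
  rw [connected_iff]
  exact ⟨fun x y => (key x).trans (key y).symm, ⟨none⟩⟩

lemma addVertex_edge_cases {g : Sym2 (Option V)} (hg : g ∈ (addVertex H S).edgeSet) :
    (∃ e₀ ∈ H.edgeSet, g = Sym2.map some e₀) ∨ (∃ a ∈ S, g = s(none, some a)) := by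
  induction g using Sym2.ind with
  | _ x y =>
    rw [mem_edgeSet] at hg
    rcases hg with ⟨a, b, hx, hy, hab⟩ | ⟨hx, b, hb, hy⟩ | ⟨hy, a, ha, hx⟩
    · subst hx; subst hy
      exact Or.inl ⟨s(a, b), hab, rfl⟩
    · subst hx; subst hy
      exact Or.inr ⟨b, hb, rfl⟩
    · subst hy; subst hx
      exact Or.inr ⟨a, ha, Sym2.eq_swap⟩

lemma none_not_mem_map {g : Sym2 V} {x : Option V} : s(none, x) ≠ Sym2.map some g := by
  induction g using Sym2.ind with
  | _ c d =>
    rw [Sym2.map_pair_eq]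
    intro h
    rw [Sym2.eq_iff] at h
    rcases h with ⟨h, -⟩ | ⟨h, -⟩ <;> exact absurd h (by simp)

/-- The common cycle construction through the new vertex. -/
lemma build (hH : H.Connected) (χ : Sym2 (Option V) → ℕ)
    {a b : V} (ha : a ∈ S) (hb : b ∈ S) (hab : a ≠ b)
    (hold : ∀ e₀ ∈ H.edgeSet, ∀ f₀ ∈ H.edgeSet,
      χ (Sym2.map some e₀) = χ (Sym2.map some f₀))
    (hdis : χ s(none, some a) ≠ χ s(none, some b) ∨
      ∀ e₀ ∈ H.edgeSet, χ s(none, some a) ≠ χ (Sym2.map some e₀)) :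
    ∃ (u v w : Option V) (p : (addVertex H S).Walk u v) (q : (addVertex H S).Walk v w)
      (r : (addVertex H S).Walk w u),
      p.IsPath ∧ q.IsPath ∧ r.IsPath ∧
      MonoList χ p.edges ∧ MonoList χ q.edges ∧ MonoList χ r.edges ∧
      (p.append (q.append r)).IsCycle ∧ ¬ MonoList χ (p.append (q.append r)).edges := by
  classical
  obtain ⟨w0⟩ := hH.preconnected a b
  set q0 : H.Walk a b := w0.toPath.1 with hq0def
  have hq0 : q0.IsPath := w0.toPath.2
  set q : (addVertex H S).Walk (some a) (some b) := q0.map (homSome H S) with hqdef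
  have hq : q.IsPath := q0.map_isPath_of_injective homSome_inj hq0
  have hqe : q.edges = q0.edges.map (Sym2.map some) := by
    exact Walk.edges_map (homSome H S) q0
  have hqsub : ∀ e ∈ q.edges, ∃ e₀ ∈ H.edgeSet, e = Sym2.map some e₀ := by
    intro e he
    rw [hqe, List.mem_map] at he
    obtain ⟨e₀, he₀, rfl⟩ := he
    exact ⟨e₀, q0.edges_subset_edgeSet he₀, rfl⟩
  have h1 : (addVertex H S).Adj none (some a) := addVertex_adj_none ha
  have h2 : (addVertex H S).Adj (some b) none := addVertex_adj_none' hb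
  set p : (addVertex H S).Walk none (some a) := Walk.cons h1 Walk.nil with hpdef
  set r : (addVertex H S).Walk (some b) none := Walk.cons h2 Walk.nil with hrdef
  have hnonesupp : none ∉ q.support := by
    have hs : q.support = q0.support.map some := Walk.support_map (homSome H S) q0
    rw [hs]
    intro h
    obtain ⟨x, -, hx⟩ := List.mem_map.1 h
    exact absurd hx (by simp)
  have hqr : (q.append r).IsPath := by
    rw [hrdef, ← Walk.concat_eq_append, ← Walk.isPath_reverse_iff, Walk.reverse_concat,
      Walk.cons_isPath_iff]
    refine ⟨hq.reverse, ?_⟩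
    rw [Walk.support_reverse]
    intro h
    exact hnonesupp (List.mem_reverse.1 h)
  have hqre : (q.append r).edges = q.edges ++ [s(some b, none)] := by
    rw [Walk.edges_append, hrdef]
    rfl
  have hnotmem : s(none, some a) ∉ (q.append r).edges := by
    rw [hqre]
    intro h
    rcases List.mem_append.1 h with h | h
    · obtain ⟨e₀, -, he₀⟩ := hqsub _ h
      exact none_not_mem_map he₀
    · rw [List.mem_singleton, Sym2.eq_iff] at h
      rcases h with ⟨h, -⟩ | ⟨-, h⟩
      · exact absurd h (by simp)
      · exact hab (Option.some_injective V h)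
  have hq0ne : q0.edges ≠ [] := by
    intro h
    have : q0.length = 0 := by rw [← Walk.length_edges, h]; rfl
    exact hab (Walk.nil_iff_length_eq.2 this).eq
  set e1 := q0.edges.head hq0ne with he1def
  have he1mem : e1 ∈ q0.edges := List.head_mem hq0ne
  have he1H : e1 ∈ H.edgeSet := q0.edges_subset_edgeSet he1mem
  have hcycedges : (p.append (q.append r)).edges
      = s(none, some a) :: (q.edges ++ [s(some b, none)]) := by
    rw [Walk.edges_append, hpdef, hqre]
    rfl
  refine ⟨none, some a, some b, p, q, r, ?_, hq, ?_, ?_, ?_, ?_, ?_, ?_⟩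
  · rw [hpdef, Walk.cons_isPath_iff]
    exact ⟨Walk.IsPath.nil, by simp⟩
  · rw [hrdef, Walk.cons_isPath_iff]
    exact ⟨Walk.IsPath.nil, by simp⟩
  · rw [hpdef]
    simpa using monoList_singleton' χ s(none, some a)
  · intro e he f hf
    obtain ⟨e₀, he₀, rfl⟩ := hqsub _ he
    obtain ⟨f₀, hf₀, rfl⟩ := hqsub _ hf
    exact hold e₀ he₀ f₀ hf₀
  · rw [hrdef]
    simpa using monoList_singleton' χ s(some b, none)
  · show (Walk.cons h1 (Walk.nil.append (q.append r))).IsCycle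
    rw [Walk.nil_append, Walk.cons_isCycle_iff]
    exact ⟨hqr, hnotmem⟩
  · intro hM
    rw [hcycedges] at hM
    have hamem : s(none, some a) ∈ s(none, some a) :: (q.edges ++ [s(some b, none)]) :=
      List.mem_cons_self
    rcases hdis with hdis | hdis
    · have hbmem : s(some b, none) ∈ s(none, some a) :: (q.edges ++ [s(some b, none)]) :=
        List.mem_cons_of_mem _ (List.mem_append.2 (Or.inr (List.mem_singleton_self _)))
      have h3 : s(some b, none) = s(none, some b) := Sym2.eq_swap
      have := hM _ hamem _ hbmem
      rw [h3] at this
      exact hdis this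
    · have he1mem' : Sym2.map some e1 ∈ s(none, some a) :: (q.edges ++ [s(some b, none)]) := by
        refine List.mem_cons_of_mem _ (List.mem_append.2 (Or.inl ?_))
        rw [hqe]
        exact List.mem_map_of_mem he1mem
      exact hdis e1 he1H (hM _ hamem _ he1mem')

/-- Adding a new vertex with at least two neighbours preserves being Behrendian. -/
theorem behrendian_addVertex (hB : Behrendian H) (hS : 2 ≤ S.ncard) :
    Behrendian (addVertex H S) := by
  have hS1 : 1 < S.ncard := by omega
  obtain ⟨a, ha⟩ := Set.nonempty_of_ncard_ne_zero (s := S) (by omega)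
  refine ⟨addVertex_connected hB.1 ⟨a, ha⟩, ?_⟩
  intro χ hne
  by_cases hcase1 : ∃ e₀ ∈ H.edgeSet, ∃ f₀ ∈ H.edgeSet,
      χ (Sym2.map some e₀) ≠ χ (Sym2.map some f₀)
  · exact transfer (homSome H S) homSome_inj χ
      (hB.2 (fun e => χ (Sym2.map some e)) hcase1)
  · push_neg at hcase1
    by_cases hcase2 : ∃ a' ∈ S, ∃ b' ∈ S, a' ≠ b' ∧ χ s(none, some a') ≠ χ s(none, some b')
    · obtain ⟨a', ha', b', hb', hab', hne'⟩ := hcase2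
      exact build hB.1 χ ha' hb' hab' hcase1 (Or.inl hne')
    · push_neg at hcase2
      obtain ⟨e, he, f, hf, hef⟩ := hne
      rcases addVertex_edge_cases he with ⟨e₀, he₀, rfl⟩ | ⟨a0, ha0, rfl⟩ <;>
        rcases addVertex_edge_cases hf with ⟨f₀, hf₀, rfl⟩ | ⟨b0, hb0, rfl⟩
      · exact absurd (hcase1 e₀ he₀ f₀ hf₀) hef
      · obtain ⟨c, hc, hcb⟩ := Set.exists_ne_of_one_lt_ncard hS1 b0
        refine build hB.1 χ hb0 hc (fun h => hcb h.symm) hcase1 (Or.inr ?_)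
        intro g hg
        rw [hcase1 g hg e₀ he₀]
        exact fun h => hef h.symm
      · obtain ⟨c, hc, hcb⟩ := Set.exists_ne_of_one_lt_ncard hS1 a0
        refine build hB.1 χ ha0 hc (fun h => hcb h.symm) hcase1 (Or.inr ?_)
        intro g hg
        rw [hcase1 g hg f₀ hf₀]
        exact hef
      · by_cases h : a0 = b0
        · subst h; exact absurd rfl hef
        · exact absurd (hcase2 a0 ha0 b0 hb0 h) hef

end PartTwo

/-- Adding an edge between existing vertices, or a new vertex with at least two
neighbours, preserves being Behrendian. -/
theorem stmt_13 {V : Type*} (H : SimpleGraph V) (hH : Behrendian H) :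
    (∀ u v : V, u ≠ v → Behrendian (H ⊔ SimpleGraph.fromEdgeSet {s(u, v)})) ∧
    (∀ S : Set V, 2 ≤ S.ncard → Behrendian (addVertex H S)) := by
  exact ⟨behrendian_addEdge H hH, fun S hS => behrendian_addVertex hH hS⟩
end

section
/- Let 3 ≤ r ≤ s and let H be a bipartite graph with parts X, Y, |X| = r, |Y| = s, such that d(x) ≥ s/2 + 1 for all x ∈ X and d(y) ≥ r/2 + 1 for all y ∈ Y. Then for every edge e ∈ E(H), the graph H − e is Sidonian: every non-monochromatic edge-colouring of H − e contains a non-monochromatic copy of C_4. -/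
open SimpleGraph

/-- A bipartite graph `F` is Sidonian if every edge-colouring of `F` using at least
two colours admits a 4-cycle whose edges are not all the same colour. -/
def Sidonian {V : Type*} (F : SimpleGraph V) : Prop :=
  ∀ χ : Sym2 V → ℕ, (∃ e ∈ F.edgeSet, ∃ f ∈ F.edgeSet, χ e ≠ χ f) →
    ∃ a b c d : V, F.Adj a b ∧ F.Adj b c ∧ F.Adj c d ∧ F.Adj d a ∧
      a ≠ c ∧ b ≠ d ∧
      ¬ (χ s(a, b) = χ s(b, c) ∧ χ s(b, c) = χ s(c, d) ∧ χ s(c, d) = χ s(d, a))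

theorem aux_sidonian {V : Type*} [Fintype V] (H : SimpleGraph V) [DecidableRel H.Adj]
    (X : Set V) (r s : ℕ) (h3r : 3 ≤ r) (h3s : 3 ≤ s)
    (hX : X.ncard = r) (hY : Xᶜ.ncard = s)
    (hbip : ∀ a b, H.Adj a b → (a ∈ X ↔ b ∉ X))
    (hdX : ∀ x ∈ X, (s : ℝ) / 2 + 1 ≤ H.degree x)
    (hdY : ∀ y ∈ Xᶜ, (r : ℝ) / 2 + 1 ≤ H.degree y)
    (x₀ y₀ : V) (hx₀ : x₀ ∈ X) (hadj : H.Adj x₀ y₀) :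
    Sidonian (H.deleteEdges {s(x₀, y₀)}) := by
  classical
  set G := H.deleteEdges {s(x₀, y₀)} with hGdef
  intro χ he
  obtain ⟨e₁, he₁, e₂, he₂, hnecol⟩ := he
  by_contra hno
  push_neg at hno
  have hmono : ∀ a b c d : V, G.Adj a b → G.Adj b c → G.Adj c d → G.Adj d a →
      a ≠ c → b ≠ d →
      χ s(a, b) = χ s(b, c) ∧ χ s(b, c) = χ s(c, d) ∧ χ s(c, d) = χ s(d, a) :=
    hno
  -- basic bipartite facts
  have hXY : ∀ a b, H.Adj a b → a ∈ X → b ∉ X := fun a b h ha => (hbip a b h).1 ha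
  have hYX : ∀ a b, H.Adj a b → a ∉ X → b ∈ X := by
    intro a b h ha
    by_contra hb
    exact ha ((hbip a b h).2 hb)
  have hy₀X : y₀ ∉ X := hXY x₀ y₀ hadj hx₀
  have hswap : ∀ u v : V, χ s(u, v) = χ s(v, u) := fun u v => by rw [Sym2.eq_swap]
  -- every vertex has degree ≥ 3
  have hd3 : ∀ v : V, 3 ≤ H.degree v := by
    intro v
    by_cases hv : v ∈ X
    · have h1 := hdX v hv
      have h2 : (3 : ℝ) ≤ (s : ℝ) := by exact_mod_cast h3s
      have : (2 : ℝ) < (H.degree v : ℝ) := by linarith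
      exact_mod_cast this
    · have h1 := hdY v hv
      have h2 : (3 : ℝ) ≤ (r : ℝ) := by exact_mod_cast h3r
      have : (2 : ℝ) < (H.degree v : ℝ) := by linarith
      exact_mod_cast this
  -- side cardinalities as Finsets
  have hXcard : X.toFinset.card = r := by rw [← Set.ncard_eq_toFinset_card']; exact hX
  have hYcard : Xᶜ.toFinset.card = s := by rw [← Set.ncard_eq_toFinset_card']; exact hY
  -- codegree lemma, Y side: two vertices of Y have a common neighbour avoiding any w
  have cnY : ∀ y, y ∉ X → ∀ y', y' ∉ X → y ≠ y' → ∀ w : V,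
      ∃ x, H.Adj y x ∧ H.Adj y' x ∧ x ≠ w := by
    intro y hy y' hy' hne w
    have hsub : H.neighborFinset y ∪ H.neighborFinset y' ⊆ X.toFinset := by
      intro a ha
      rcases Finset.mem_union.mp ha with h | h
      · exact Set.mem_toFinset.mpr (hYX y a ((mem_neighborFinset H y a).mp h) hy)
      · exact Set.mem_toFinset.mpr (hYX y' a ((mem_neighborFinset H y' a).mp h) hy')
    have hu : (H.neighborFinset y ∪ H.neighborFinset y').card ≤ r := by
      calc (H.neighborFinset y ∪ H.neighborFinset y').card ≤ X.toFinset.card :=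
            Finset.card_le_card hsub
        _ = r := hXcard
    have hsum : r + 2 ≤ H.degree y + H.degree y' := by
      have h1 := hdY y hy
      have h2 := hdY y' hy'
      have : (r : ℝ) + 2 ≤ (H.degree y : ℝ) + (H.degree y' : ℝ) := by linarith
      exact_mod_cast this
    have hiu := Finset.card_inter_add_card_union (H.neighborFinset y) (H.neighborFinset y')
    have hdy : (H.neighborFinset y).card = H.degree y := H.card_neighborFinset_eq_degree y
    have hdy' : (H.neighborFinset y').card = H.degree y' := H.card_neighborFinset_eq_degree y'
    have hi : 1 < (H.neighborFinset y ∩ H.neighborFinset y').card := by omega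
    obtain ⟨x, hx, hxw⟩ := Finset.exists_mem_ne hi w
    rcases Finset.mem_inter.mp hx with ⟨h1, h2⟩
    exact ⟨x, (mem_neighborFinset H y x).mp h1, (mem_neighborFinset H y' x).mp h2, hxw⟩
  -- codegree lemma, X side
  have cnX : ∀ x, x ∈ X → ∀ x', x' ∈ X → x ≠ x' → ∀ w : V,
      ∃ y, H.Adj x y ∧ H.Adj x' y ∧ y ≠ w := by
    intro x hx x' hx' hne w
    have hsub : H.neighborFinset x ∪ H.neighborFinset x' ⊆ Xᶜ.toFinset := by
      intro a ha
      rcases Finset.mem_union.mp ha with h | h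
      · exact Set.mem_toFinset.mpr (hXY x a ((mem_neighborFinset H x a).mp h) hx)
      · exact Set.mem_toFinset.mpr (hXY x' a ((mem_neighborFinset H x' a).mp h) hx')
    have hu : (H.neighborFinset x ∪ H.neighborFinset x').card ≤ s := by
      calc (H.neighborFinset x ∪ H.neighborFinset x').card ≤ Xᶜ.toFinset.card :=
            Finset.card_le_card hsub
        _ = s := hYcard
    have hsum : s + 2 ≤ H.degree x + H.degree x' := by
      have h1 := hdX x hx
      have h2 := hdX x' hx'
      have : (s : ℝ) + 2 ≤ (H.degree x : ℝ) + (H.degree x' : ℝ) := by linarith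
      exact_mod_cast this
    have hiu := Finset.card_inter_add_card_union (H.neighborFinset x) (H.neighborFinset x')
    have hdy : (H.neighborFinset x).card = H.degree x := H.card_neighborFinset_eq_degree x
    have hdy' : (H.neighborFinset x').card = H.degree x' := H.card_neighborFinset_eq_degree x'
    have hi : 1 < (H.neighborFinset x ∩ H.neighborFinset x').card := by omega
    obtain ⟨y, hy, hyw⟩ := Finset.exists_mem_ne hi w
    rcases Finset.mem_inter.mp hy with ⟨h1, h2⟩
    exact ⟨y, (mem_neighborFinset H x y).mp h1, (mem_neighborFinset H x' y).mp h2, hyw⟩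
  -- two neighbours avoiding any w
  have tn : ∀ v w : V, ∃ a b, H.Adj v a ∧ H.Adj v b ∧ a ≠ b ∧ a ≠ w ∧ b ≠ w := by
    intro v w
    have h3 := hd3 v
    have hdv : (H.neighborFinset v).card = H.degree v := H.card_neighborFinset_eq_degree v
    have herase := Finset.pred_card_le_card_erase (s := H.neighborFinset v) (a := w)
    have h1 : 1 < ((H.neighborFinset v).erase w).card := by omega
    obtain ⟨a, ha, b, hb, hab⟩ := Finset.one_lt_card.mp h1
    rcases Finset.mem_erase.mp ha with ⟨haw, ha'⟩
    rcases Finset.mem_erase.mp hb with ⟨hbw, hb'⟩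
    exact ⟨a, b, (mem_neighborFinset H v a).mp ha', (mem_neighborFinset H v b).mp hb', hab,
      haw, hbw⟩
  -- adjacency in G
  have hGy : ∀ u v, H.Adj u v → u ≠ y₀ → v ≠ y₀ → G.Adj u v := by
    intro u v h hu hv
    rw [hGdef, deleteEdges_adj]
    refine ⟨h, ?_⟩
    simp only [Set.mem_singleton_iff, Sym2.eq_iff]
    rintro (⟨rfl, rfl⟩ | ⟨rfl, rfl⟩)
    · exact hv rfl
    · exact hu rfl
  have hGx : ∀ u v, H.Adj u v → u ≠ x₀ → v ≠ x₀ → G.Adj u v := by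
    intro u v h hu hv
    rw [hGdef, deleteEdges_adj]
    refine ⟨h, ?_⟩
    simp only [Set.mem_singleton_iff, Sym2.eq_iff]
    rintro (⟨rfl, rfl⟩ | ⟨rfl, rfl⟩)
    · exact hu rfl
    · exact hv rfl
  have hGH : ∀ u v, G.Adj u v → H.Adj u v := by
    intro u v h
    rw [hGdef, deleteEdges_adj] at h
    exact h.1
  have hGne : ¬ G.Adj x₀ y₀ := by
    rw [hGdef, deleteEdges_adj]
    rintro ⟨-, h⟩
    exact h rfl
  -- X-vertices are not y₀, Y-vertices are not x₀
  have hnXy₀ : ∀ z, z ∈ X → z ≠ y₀ := fun z hz h => hy₀X (h ▸ hz)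
  have hnYx₀ : ∀ z, z ∉ X → z ≠ x₀ := fun z hz h => hz (h ▸ hx₀)
  -- Claim 1: two edges at a common X-vertex avoiding y₀ get the same colour
  have c1 : ∀ x, x ∈ X → ∀ y y', H.Adj x y → H.Adj x y' → y ≠ y₀ → y' ≠ y₀ →
      χ s(x, y) = χ s(x, y') := by
    intro x hx y y' hxy hxy' hy hy'
    rcases eq_or_ne y y' with rfl | hne
    · rfl
    · have hyX : y ∉ X := hXY x y hxy hx
      have hy'X : y' ∉ X := hXY x y' hxy' hx
      obtain ⟨x', h1, h2, hx'x⟩ := cnY y hyX y' hy'X hne x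
      have hx'X : x' ∈ X := hYX y x' h1 hyX
      have g1 : G.Adj x y := hGy x y hxy (hnXy₀ x hx) hy
      have g2 : G.Adj y x' := hGy y x' h1 hy (hnXy₀ x' hx'X)
      have g3 : G.Adj x' y' := hGy x' y' h2.symm (hnXy₀ x' hx'X) hy'
      have g4 : G.Adj y' x := hGy y' x hxy'.symm hy' (hnXy₀ x hx)
      obtain ⟨e1, e2, e3⟩ := hmono x y x' y' g1 g2 g3 g4 (Ne.symm hx'x) hne
      calc χ s(x, y) = χ s(y', x) := by rw [e1, e2, e3]
        _ = χ s(x, y') := hswap y' x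
  -- Claim 1': two edges at a common Y-vertex avoiding x₀ get the same colour
  have c1' : ∀ y, y ∉ X → ∀ x x', H.Adj y x → H.Adj y x' → x ≠ x₀ → x' ≠ x₀ →
      χ s(y, x) = χ s(y, x') := by
    intro y hy x x' hyx hyx' hx hx'
    rcases eq_or_ne x x' with rfl | hne
    · rfl
    · have hxX : x ∈ X := hYX y x hyx hy
      have hx'X : x' ∈ X := hYX y x' hyx' hy
      obtain ⟨y', h1, h2, hy'y⟩ := cnX x hxX x' hx'X hne y
      have hy'X : y' ∉ X := hXY x y' h1 hxX
      have g1 : G.Adj y x := hGx y x hyx (hnYx₀ y hy) hx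
      have g2 : G.Adj x y' := hGx x y' h1 hx (hnYx₀ y' hy'X)
      have g3 : G.Adj y' x' := hGx y' x' h2.symm (hnYx₀ y' hy'X) hx'
      have g4 : G.Adj x' y := hGx x' y hyx'.symm hx' (hnYx₀ y hy)
      obtain ⟨e1, e2, e3⟩ := hmono y x y' x' g1 g2 g3 g4 (Ne.symm hy'y) hne
      calc χ s(y, x) = χ s(x', y) := by rw [e1, e2, e3]
        _ = χ s(y, x') := hswap x' y
  -- key: any two edges avoiding x₀ and y₀ get the same colour
  have keyX : ∀ x x' y y', x ∈ X → x' ∈ X → x ≠ x₀ → x' ≠ x₀ →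
      H.Adj x y → H.Adj x' y' → y ≠ y₀ → y' ≠ y₀ → χ s(x, y) = χ s(x', y') := by
    intro x x' y y' hx hx' hxx₀ hx'x₀ hxy hx'y' hy hy'
    rcases eq_or_ne x x' with rfl | hne
    · exact c1 x hx y y' hxy hx'y' hy hy'
    · obtain ⟨y'', h1, h2, hy''⟩ := cnX x hx x' hx' hne y₀
      have hy''X : y'' ∉ X := hXY x y'' h1 hx
      calc χ s(x, y) = χ s(x, y'') := c1 x hx y y'' hxy h1 hy hy''
        _ = χ s(y'', x) := hswap x y''
        _ = χ s(y'', x') := c1' y'' hy''X x x' h1.symm h2.symm hxx₀ hx'x₀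
        _ = χ s(x', y'') := hswap y'' x'
        _ = χ s(x', y') := c1 x' hx' y'' y' h2 hx'y' hy'' hy'
  -- the reference edge x₁y₁ with x₁ ≠ x₀, y₁ ≠ y₀
  have hx₁ex : ∃ x₁ ∈ X.toFinset, x₁ ≠ x₀ := by
    apply Finset.exists_mem_ne
    rw [hXcard]; omega
  obtain ⟨x₁, hx₁m, hx₁ne⟩ := hx₁ex
  have hx₁X : x₁ ∈ X := Set.mem_toFinset.mp hx₁m
  obtain ⟨y₁, -, hA1, -, -, hy₁ne, -⟩ := tn x₁ y₀
  set C := χ s(x₁, y₁) with hCdef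
  -- every G-edge with X-endpoint x has colour C
  have finalX : ∀ x y, x ∈ X → G.Adj x y → χ s(x, y) = C := by
    intro x y hx hGxy
    have hxy : H.Adj x y := hGH x y hGxy
    rcases eq_or_ne x₀ x with heqx | hxx₀'
    · subst heqx
      have hyy₀ : y ≠ y₀ := by rintro rfl; exact hGne hGxy
      obtain ⟨ya, yb, ha, hb, hab, hay, hby⟩ := tn x₀ y₀
      have hyaX : ya ∉ X := hXY x₀ ya ha hx₀
      have hybX : yb ∉ X := hXY x₀ yb hb hx₀
      obtain ⟨x'', h1, h2, hx''⟩ := cnY ya hyaX yb hybX hab x₀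
      have hx''X : x'' ∈ X := hYX ya x'' h1 hyaX
      have g1 : G.Adj x₀ ya := hGy x₀ ya ha (hnXy₀ x₀ hx₀) hay
      have g2 : G.Adj ya x'' := hGy ya x'' h1 hay (hnXy₀ x'' hx''X)
      have g3 : G.Adj x'' yb := hGy x'' yb h2.symm (hnXy₀ x'' hx''X) hby
      have g4 : G.Adj yb x₀ := hGy yb x₀ hb.symm hby (hnXy₀ x₀ hx₀)
      obtain ⟨e1, -, -⟩ := hmono x₀ ya x'' yb g1 g2 g3 g4 (Ne.symm hx'') hab
      calc χ s(x₀, y) = χ s(x₀, ya) := c1 x₀ hx₀ y ya hxy ha hyy₀ hay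
        _ = χ s(ya, x'') := e1
        _ = χ s(x'', ya) := hswap ya x''
        _ = C := keyX x'' x₁ ya y₁ hx''X hx₁X hx'' hx₁ne h1.symm hA1 hay hy₁ne
    · have hxx₀ : x ≠ x₀ := Ne.symm hxx₀'
      rcases eq_or_ne y₀ y with heqy | hyy₀'
      · subst heqy
        obtain ⟨xa, xb, ha, hb, hab, hax, hbx⟩ := tn y₀ x₀
        have hxaX : xa ∈ X := hYX y₀ xa ha hy₀X
        have hxbX : xb ∈ X := hYX y₀ xb hb hy₀X
        obtain ⟨y'', h1, h2, hy''⟩ := cnX xa hxaX xb hxbX hab y₀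
        have hy''X : y'' ∉ X := hXY xa y'' h1 hxaX
        have g1 : G.Adj y₀ xa := hGx y₀ xa ha (hnYx₀ y₀ hy₀X) hax
        have g2 : G.Adj xa y'' := hGx xa y'' h1 hax (hnYx₀ y'' hy''X)
        have g3 : G.Adj y'' xb := hGx y'' xb h2.symm (hnYx₀ y'' hy''X) hbx
        have g4 : G.Adj xb y₀ := hGx xb y₀ hb.symm hbx (hnYx₀ y₀ hy₀X)
        obtain ⟨e1, -, -⟩ := hmono y₀ xa y'' xb g1 g2 g3 g4 (Ne.symm hy'') hab
        calc χ s(x, y₀) = χ s(y₀, x) := hswap x y₀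
          _ = χ s(y₀, xa) := c1' y₀ hy₀X x xa hxy.symm ha hxx₀ hax
          _ = χ s(xa, y'') := e1
          _ = C := keyX xa x₁ y'' y₁ hxaX hx₁X hax hx₁ne h1 hA1 hy'' hy₁ne
      · have hyy₀ : y ≠ y₀ := Ne.symm hyy₀'
        exact keyX x x₁ y y₁ hx hx₁X hxx₀ hx₁ne hxy hA1 hyy₀ hy₁ne
  have final : ∀ u v, G.Adj u v → χ s(u, v) = C := by
    intro u v h
    by_cases hu : u ∈ X
    · exact finalX u v hu h
    · have hv : v ∈ X := hYX u v (hGH u v h) hu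
      rw [hswap]
      exact finalX v u hv h.symm
  -- contradiction
  apply hnecol
  induction e₁ using Sym2.ind with
  | _ u₁ v₁ =>
  induction e₂ using Sym2.ind with
  | _ u₂ v₂ =>
  rw [mem_edgeSet] at he₁ he₂
  rw [final u₁ v₁ he₁, final u₂ v₂ he₂]

/-- For a bipartite graph with parts of sizes 3 ≤ r ≤ s with all degrees on the
r-side at least s/2+1 and all degrees on the s-side at least r/2+1, the graph
H − e is Sidonian for every edge e. -/
theorem stmt_14 {V : Type*} [Fintype V] (H : SimpleGraph V) [DecidableRel H.Adj]
    (X : Set V) (r s : ℕ) (h3r : 3 ≤ r) (hrs : r ≤ s)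
    (hX : X.ncard = r) (hY : Xᶜ.ncard = s)
    (hbip : ∀ a b, H.Adj a b → (a ∈ X ↔ b ∉ X))
    (hdX : ∀ x ∈ X, (s : ℝ) / 2 + 1 ≤ H.degree x)
    (hdY : ∀ y ∈ Xᶜ, (r : ℝ) / 2 + 1 ≤ H.degree y) :
    ∀ e ∈ H.edgeSet, Sidonian (H.deleteEdges {e}) := by
  have h3s : 3 ≤ s := le_trans h3r hrs
  intro e he
  induction e using Sym2.ind with
  | _ a b =>
  rw [mem_edgeSet] at he
  by_cases ha : a ∈ X
  · exact aux_sidonian H X r s h3r h3s hX hY hbip hdX hdY a b ha he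
  · have hb : b ∈ X := by
      by_contra hb
      exact ha ((hbip a b he).2 hb)
    have hbip' : ∀ u v, H.Adj u v → (u ∈ Xᶜ ↔ v ∉ Xᶜ) := by
      intro u v h
      have := hbip u v h
      simp only [Set.mem_compl_iff, not_not]
      tauto
    have hX' : Xᶜᶜ.ncard = r := by rw [compl_compl]; exact hX
    have hdY' : ∀ y ∈ Xᶜᶜ, (s : ℝ) / 2 + 1 ≤ H.degree y := by
      intro y hy
      rw [compl_compl] at hy
      exact hdX y hy
    exact aux_sidonian H Xᶜ s r h3s h3r hY hX' hbip' hdY hdY' a b ha he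
end

section
/- For any k, h ∈ ℕ and sufficiently large prime p, there exists a subset B ⊆ ℤ_p of size at least p/(8k²h²) with no nontrivial solutions modulo p to any equation Σ_{i=1}^h α_i x_i = 0 with all |α_i| ≤ k and Σ_{i=1}^h α_i ≠ 0. -/
/-- A solution `x` of the equation `∑ i, α i • x i = 0` is trivial if the index set
partitions into blocks on each of which the coefficients sum to `0` and `x` is
constant. -/
def IsTrivialSol {h : ℕ} {G : Type*} [AddCommGroup G] (α : Fin h → ℤ) (x : Fin h → G) : Prop :=
  ∃ c : Fin h → Fin h, (∀ i j, c i = c j → x i = x j) ∧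
    ∀ k : Fin h, ∑ i ∈ Finset.univ.filter (fun i => c i = k), α i = 0

/-- `A` has no nontrivial solutions to any of the equations (coefficient vectors)
in the collection `E`. -/
def SolutionFree {h : ℕ} {G : Type*} [AddCommGroup G] (E : Set (Fin h → ℤ))
    (A : Set G) : Prop :=
  ∀ α ∈ E, ∀ x : Fin h → G, (∀ i, x i ∈ A) → (∑ i, α i • x i) = 0 → IsTrivialSol α x

/-- For k, h ≥ 1 and all sufficiently large primes p there is a subset of ℤ_p of
size at least p/(8k²h²) with no nontrivial solutions to any equation with
coefficients bounded by k that do not sum to zero. -/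
theorem stmt_16 (k h : ℕ) (hk : 0 < k) (hh : 0 < h) :
    ∃ p₀ : ℕ, ∀ p : ℕ, p.Prime → p₀ ≤ p →
      ∃ B : Set (ZMod p),
        (p : ℝ) / (8 * (k : ℝ) ^ 2 * (h : ℝ) ^ 2) ≤ (B.ncard : ℝ) ∧
        SolutionFree {α : Fin h → ℤ | (∀ i, |α i| ≤ (k : ℤ)) ∧ (∑ i, α i) ≠ 0} B := by
  refine ⟨8 * k ^ 2 * h ^ 2, fun p hp hp0 => ?_⟩
  set a := h * k with ha_def
  set m := a + 1 with hm_def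
  set M := (p - 1) / a with hM_def
  set N := M / m with hN_def
  clear_value a m M N
  have hk1 : 1 ≤ a := by rw [ha_def]; exact Nat.one_le_iff_ne_zero.mpr (Nat.mul_ne_zero hh.ne' hk.ne')
  have hm2 : 2 ≤ m := by omega
  have hp1 : 1 ≤ p := hp.one_lt.le
  have hsq : 8 * k ^ 2 * h ^ 2 = 8 * (a * a) := by rw [ha_def]; ring
  have hpbig : 8 * (a * a) ≤ p := by rw [← hsq]; exact hp0
  -- M ≥ m, hence N ≥ 1
  have hMm : m ≤ M := by
    rw [hM_def, Nat.le_div_iff_mul_le (by omega)]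
    have : m * a + 1 ≤ 8 * (a * a) := by rw [hm_def]; nlinarith
    omega
  have hN1 : 1 ≤ N := by rw [hN_def]; exact Nat.one_le_div_iff (by omega) |>.mpr hMm
  -- basic div bounds
  have hMub : a * M ≤ p - 1 := by
    rw [hM_def, mul_comm]; exact Nat.div_mul_le_self _ _
  have hMlb : p ≤ a * (M + 1) := by
    have h1 : p - 1 < a * (M + 1) := by
      rw [hM_def]
      have e1 := Nat.div_add_mod (p - 1) a
      have e2 : (p - 1) % a < a := Nat.mod_lt _ (by omega : 0 < a)
      have e3 : a * ((p - 1) / a + 1) = a * ((p - 1) / a) + a := Nat.mul_succ _ _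
      omega
    have h2 : p - 1 + 1 = p := Nat.succ_pred_eq_of_pos hp.pos
    omega
  have hNub : m * N ≤ M := by rw [hN_def, mul_comm]; exact Nat.div_mul_le_self _ _
  have hNlb : M + 1 ≤ m * (N + 1) := by
    have h1 : M < m * (N + 1) := by
      rw [hN_def]
      have e1 := Nat.div_add_mod M m
      have e2 : M % m < m := Nat.mod_lt _ (by omega)
      have e3 : m * (M / m + 1) = m * (M / m) + m := Nat.mul_succ _ _
      omega
    omega
  -- bound on elements: j < N → 1 + m * j ≤ M - 1 and < p
  have helt : ∀ j < N, 1 + m * j + 1 ≤ M := by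
    intro j hj
    have h1 : m * (j + 1) ≤ m * N := Nat.mul_le_mul_left _ (by omega)
    have h2 : m * (j + 1) = m * j + m := Nat.mul_succ m j
    omega
  have hMp : M < p := by
    have : M ≤ a * M := Nat.le_mul_of_pos_left M (by omega)
    omega
  -- the set
  set f : ℕ → ZMod p := fun j => ((1 + m * j : ℕ) : ZMod p) with hf
  have hinj : Set.InjOn f ↑(Finset.range N) := by
    intro a ha b hb hab
    simp only [Finset.coe_range, Set.mem_Iio] at ha hb
    have ha' : 1 + m * a < p := by have := helt a ha; omega
    have hb' : 1 + m * b < p := by have := helt b hb; omega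
    have := congrArg ZMod.val hab
    rw [hf] at this
    simp only [ZMod.val_natCast_of_lt ha', ZMod.val_natCast_of_lt hb'] at this
    have hma : m * a = m * b := by omega
    exact Nat.eq_of_mul_eq_mul_left (by omega) hma
  refine ⟨↑((Finset.range N).image f), ?_, ?_⟩
  · -- size
    rw [Set.ncard_coe_finset, Finset.card_image_of_injOn hinj, Finset.card_range]
    have hnat : p ≤ 8 * k ^ 2 * h ^ 2 * N := by
      rw [hsq]
      have c1 : p ≤ a * (m * (N + 1)) := le_trans hMlb (Nat.mul_le_mul_left _ hNlb)
      have c2 : m ≤ 2 * a := by omega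
      nlinarith
    rw [div_le_iff₀ (by positivity)]
    calc (p : ℝ) ≤ (8 * k ^ 2 * h ^ 2 * N : ℕ) := by exact_mod_cast hnat
      _ = N * (8 * (k:ℝ)^2 * (h:ℝ)^2) := by push_cast; ring
  · -- solution free
    rintro α ⟨hαb, hαs⟩ x hx heq
    exfalso
    have hxj : ∀ i, ∃ j, j < N ∧ x i = f j := by
      intro i
      have := hx i
      simp only [Finset.coe_image, Set.mem_image, Finset.coe_range, Set.mem_Iio] at this
      obtain ⟨j, hj, hje⟩ := this
      exact ⟨j, hj, hje.symm⟩
    choose g hg hge using hxj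
    set S : ℤ := ∑ i, α i * (1 + m * (g i : ℤ)) with hS
    have hcast : ((S : ℤ) : ZMod p) = 0 := by
      rw [hS, ← heq]
      push_cast
      refine Finset.sum_congr rfl fun i _ => ?_
      rw [hge i, hf, zsmul_eq_mul]
      push_cast
      ring
    have hdvd : (p : ℤ) ∣ S := (ZMod.intCast_zmod_eq_zero_iff_dvd S p).mp hcast
    have h4 : 1 ≤ M := by omega
    have habs : |S| < p := by
      have h5 : a * (M - 1) + 1 ≤ p := by
        have : a * (M - 1) ≤ a * M := Nat.mul_le_mul_left _ (by omega)
        omega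
      have hM1 : (1:ℤ) ≤ (M:ℤ) := by exact_mod_cast h4
      have h6 : (0:ℤ) ≤ (k : ℤ) * ((M : ℤ) - 1) :=
        mul_nonneg (by positivity) (by linarith)
      calc |S| ≤ ∑ i, |α i * (1 + m * (g i : ℤ))| := by
            rw [hS]; exact Finset.abs_sum_le_sum_abs _ _
        _ ≤ ∑ _i : Fin h, (k : ℤ) * ((M : ℤ) - 1) := by
            refine Finset.sum_le_sum fun i _ => ?_
            have hpos : (0:ℤ) ≤ 1 + m * (g i : ℤ) := by positivity
            rw [abs_mul, abs_of_nonneg hpos]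
            have h1 : |α i| ≤ (k:ℤ) := hαb i
            have h2 : (1 + m * (g i : ℤ)) ≤ (M : ℤ) - 1 := by
              have := helt (g i) (hg i)
              have : ((1 + m * g i + 1 : ℕ) : ℤ) ≤ (M : ℤ) := by exact_mod_cast this
              push_cast at this
              linarith
            exact mul_le_mul h1 h2 hpos (by positivity)
        _ = (h : ℤ) * ((k:ℤ) * ((M:ℤ) - 1)) := by
            rw [Finset.sum_const, Finset.card_univ, Fintype.card_fin]; push_cast; ring
        _ = (a : ℤ) * ((M:ℤ) - 1) := by
            have h8 : (a : ℤ) = (h:ℤ) * k := by exact_mod_cast ha_def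
            rw [h8]; ring
        _ < p := by
            have h7 : ((a : ℤ) * ((M:ℤ) - 1) + 1 ≤ (p:ℤ)) := by
              have : ((a * (M-1) + 1 : ℕ) : ℤ) ≤ (p : ℤ) := by exact_mod_cast h5
              push_cast [h4] at this
              linarith
            linarith
    have hS0 : S = 0 := Int.eq_zero_of_abs_lt_dvd hdvd habs
    -- S = ∑ α + m * T
    have hsplit : S = (∑ i, α i) + (m : ℤ) * ∑ i, α i * (g i : ℤ) := by
      rw [hS, Finset.mul_sum, ← Finset.sum_add_distrib]
      refine Finset.sum_congr rfl fun i _ => ?_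
      push_cast; ring
    have hsumabs : |∑ i, α i| ≤ (h : ℤ) * k := by
      calc |∑ i, α i| ≤ ∑ i, |α i| := Finset.abs_sum_le_sum_abs _ _
        _ ≤ ∑ i : Fin h, (k:ℤ) := Finset.sum_le_sum fun i _ => hαb i
        _ = (h:ℤ) * k := by rw [Finset.sum_const, Finset.card_univ, Fintype.card_fin]; push_cast; ring
    set T : ℤ := ∑ i, α i * (g i : ℤ)
    have hT : (∑ i, α i) = -(m : ℤ) * T := by
      have := hsplit; rw [hS0] at this; linarith
    rcases eq_or_ne T 0 with h0 | h0
    · exact hαs (by rw [hT, h0, mul_zero])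
    · have h1 : (1 : ℤ) ≤ |T| := Int.one_le_abs h0
      have h2 : |∑ i, α i| = (m : ℤ) * |T| := by
        rw [hT, abs_mul, abs_neg, abs_of_nonneg (by positivity : (0:ℤ) ≤ (m:ℤ))]
      have h3 : (h : ℤ) * k + 1 ≤ (m : ℤ) := by
        have hm' : (m : ℕ) = h * k + 1 := by rw [hm_def, ha_def]
        exact_mod_cast hm'.ge
      have h4 : (m:ℤ) * 1 ≤ (m:ℤ) * |T| := mul_le_mul_of_nonneg_left h1 (by positivity)
      have h5 : (m:ℤ) * |T| ≤ (h:ℤ) * k := h2 ▸ hsumabs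
      exact absurd (le_trans (by linarith) h5) (by linarith)
end

section
/- Let ℓ, h, k ∈ ℕ and let E_1, …, E_ℓ be collections of linear equations in h variables, each with integer coefficients bounded by k in absolute value and with coefficients summing to zero. Suppose p is a sufficiently large prime and that for each i there is δ_i ∈ (0,1) such that ℤ_p contains a subset of size at least δ_i p free of nontrivial solutions to all equations in E_i. Then for any set B ⊆ ℤ_p there is a subset B' ⊆ B with |B'| ≥ (∏_{i=1}^ℓ δ_i)·|B| that has no nontrivial solutions to any equation in E_1 ∪ ⋯ ∪ E_ℓ. -/
lemma solutionFree_mono {h : ℕ} {G : Type*} [AddCommGroup G] {E : Set (Fin h → ℤ)}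
    {A B : Set G} (hBA : B ⊆ A) (hA : SolutionFree E A) : SolutionFree E B :=
  fun α hα x hx => hA α hα x (fun i => hBA (hx i))

lemma solutionFree_translate {h : ℕ} {G : Type*} [AddCommGroup G] {E : Set (Fin h → ℤ)}
    (hE : ∀ α ∈ E, ∑ j, α j = 0) {A : Set G} (hA : SolutionFree E A) (t : G) :
    SolutionFree E {x | x - t ∈ A} := by
  intro α hα x hx hsum
  have hsum' : ∑ i, α i • (x i - t) = 0 := by
    calc ∑ i, α i • (x i - t) = ∑ i, (α i • x i - α i • t) := by simp [smul_sub]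
      _ = (∑ i, α i • x i) - ∑ i, α i • t := by rw [Finset.sum_sub_distrib]
      _ = 0 - (∑ i, α i) • t := by rw [hsum, Finset.sum_smul]
      _ = 0 := by rw [hE α hα, zero_smul, sub_zero]
  obtain ⟨c, hc1, hc2⟩ := hA α hα (fun i => x i - t) hx hsum'
  exact ⟨c, fun i j hij => sub_left_injective (hc1 i j hij), hc2⟩

/-- Random translation lemma: if each collection Eᵢ of zero-sum equations with
bounded coefficients admits a solution-free subset of ℤ_p of density δᵢ, then inside
any B ⊆ ℤ_p there is a subset of relative density ∏ δᵢ free of nontrivial solutions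
to all equations in ⋃ᵢ Eᵢ. -/
theorem stmt_17 (l h k : ℕ) (hl : 0 < l) (hh : 0 < h) (hk : 0 < k)
    (δ : Fin l → ℝ) (hδ : ∀ i, δ i ∈ Set.Ioo (0 : ℝ) 1) :
    ∃ p₀ : ℕ, ∀ p : ℕ, p.Prime → p₀ ≤ p →
      ∀ E : Fin l → Set (Fin h → ℤ),
        (∀ i, ∀ α ∈ E i, (∀ j, |α j| ≤ (k : ℤ)) ∧ (∑ j, α j) = 0) →
        (∀ i, ∃ A : Set (ZMod p), SolutionFree (E i) A ∧ δ i * (p : ℝ) ≤ (A.ncard : ℝ)) →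
        ∀ B : Set (ZMod p), ∃ B' ⊆ B,
          (∏ i, δ i) * (B.ncard : ℝ) ≤ (B'.ncard : ℝ) ∧ SolutionFree (⋃ i, E i) B' := by
  classical
  refine ⟨2, fun p hp hp2 E hE hA B => ?_⟩
  haveI : Fact p.Prime := ⟨hp⟩
  choose A hAfree hAcard using hA
  set Bf : Finset (ZMod p) := B.toFinite.toFinset with hBfdef
  set a : Fin l → Finset (ZMod p) := fun i => (A i).toFinite.toFinset with hadef
  have hacard : ∀ i, (A i).ncard = (a i).card := fun i =>
    Set.ncard_eq_toFinset_card _ _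
  -- key double counting identity
  have key : ∑ t : Fin l → ZMod p, ((Bf.filter (fun b => ∀ i, b - t i ∈ a i)).card : ℕ)
      = Bf.card * ∏ i, (a i).card := by
    have step1 : ∀ t : Fin l → ZMod p,
        ((Bf.filter (fun b => ∀ i, b - t i ∈ a i)).card : ℕ)
        = ∑ b ∈ Bf, if ∀ i, b - t i ∈ a i then 1 else 0 := by
      intro t; rw [Finset.card_filter]
    calc ∑ t : Fin l → ZMod p, ((Bf.filter (fun b => ∀ i, b - t i ∈ a i)).card : ℕ)
        = ∑ t : Fin l → ZMod p, ∑ b ∈ Bf, if ∀ i, b - t i ∈ a i then 1 else 0 := by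
          exact Finset.sum_congr rfl fun t _ => step1 t
      _ = ∑ b ∈ Bf, ∑ t : Fin l → ZMod p, if ∀ i, b - t i ∈ a i then 1 else 0 :=
          Finset.sum_comm
      _ = ∑ b ∈ Bf, ∏ i, (a i).card := by
          refine Finset.sum_congr rfl fun b _ => ?_
          rw [← Finset.card_filter]
          have hset : (Finset.univ.filter (fun t : Fin l → ZMod p => ∀ i, b - t i ∈ a i))
              = Fintype.piFinset (fun i => Finset.univ.filter (fun x : ZMod p => b - x ∈ a i)) := by
            ext t; simp
          rw [hset, Fintype.card_piFinset]
          refine Finset.prod_congr rfl fun i _ => ?_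
          have himg : (Finset.univ.filter (fun x : ZMod p => b - x ∈ a i))
              = (a i).image (fun u => b - u) := by
            ext x
            simp only [Finset.mem_filter, Finset.mem_univ, true_and, Finset.mem_image]
            constructor
            · intro hx; exact ⟨b - x, hx, by ring⟩
            · rintro ⟨u, hu, rfl⟩; simpa using hu
          rw [himg, Finset.card_image_of_injective _ sub_right_injective]
      _ = Bf.card * ∏ i, (a i).card := by rw [Finset.sum_const, smul_eq_mul]
  -- pick a good translate t
  have hpl : (Finset.univ : Finset (Fin l → ZMod p)).card = p ^ l := by
    rw [Finset.card_univ, Fintype.card_fun, ZMod.card, Fintype.card_fin]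
  have hex : ∃ t : Fin l → ZMod p,
      (Bf.card * ∏ i, (a i).card : ℝ) ≤ (p : ℝ) ^ l *
        ((Bf.filter (fun b => ∀ i, b - t i ∈ a i)).card : ℝ) := by
    by_contra hcon
    push_neg at hcon
    have hne : (Finset.univ : Finset (Fin l → ZMod p)).Nonempty := Finset.univ_nonempty
    have hsum : ∑ t : Fin l → ZMod p,
        ((p : ℝ) ^ l * ((Bf.filter (fun b => ∀ i, b - t i ∈ a i)).card : ℝ))
        < ∑ _t : Fin l → ZMod p, (Bf.card * ∏ i, (a i).card : ℝ) :=
      Finset.sum_lt_sum_of_nonempty hne fun t _ => hcon t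
    rw [← Finset.mul_sum, Finset.sum_const, hpl, nsmul_eq_mul] at hsum
    have hkey' : ∑ t : Fin l → ZMod p,
        ((Bf.filter (fun b => ∀ i, b - t i ∈ a i)).card : ℝ)
        = (Bf.card : ℝ) * ∏ i, ((a i).card : ℝ) := by
      rw [← Nat.cast_prod, ← Nat.cast_mul, ← key, Nat.cast_sum]
    rw [hkey'] at hsum
    push_cast at hsum
    linarith
  obtain ⟨t, ht⟩ := hex
  -- define B'
  set Bf' : Finset (ZMod p) := Bf.filter (fun b => ∀ i, b - t i ∈ a i) with hBf'def
  refine ⟨(Bf' : Set (ZMod p)), ?_, ?_, ?_⟩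
  · intro x hx
    have : x ∈ Bf' := hx
    have hxB : x ∈ Bf := Finset.mem_filter.mp this |>.1
    rwa [hBfdef, Set.Finite.mem_toFinset] at hxB
  · -- density bound
    have hppos : (0 : ℝ) < (p : ℝ) ^ l := by
      have : (0 : ℝ) < (p : ℝ) := by exact_mod_cast hp.pos
      positivity
    have hprod : (∏ i, δ i) * (p : ℝ) ^ l ≤ ∏ i, ((a i).card : ℝ) := by
      have : ∏ i, (δ i * (p : ℝ)) ≤ ∏ i, ((a i).card : ℝ) := by
        refine Finset.prod_le_prod (fun i _ => ?_) (fun i _ => ?_)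
        · exact mul_nonneg (hδ i).1.le (by positivity)
        · rw [← hacard i]; exact hAcard i
      calc (∏ i, δ i) * (p : ℝ) ^ l = ∏ i, (δ i * (p : ℝ)) := by
            rw [Finset.prod_mul_distrib, Finset.prod_const, Finset.card_univ,
              Fintype.card_fin]
        _ ≤ _ := this
    have hBcard : (B.ncard : ℝ) = (Bf.card : ℝ) := by
      rw [Set.ncard_eq_toFinset_card _ B.toFinite]
    have hB'card : ((Bf' : Set (ZMod p)).ncard : ℝ) = (Bf'.card : ℝ) := by
      rw [Set.ncard_coe_finset]
    rw [hBcard, hB'card]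
    have hBnn : (0 : ℝ) ≤ (Bf.card : ℝ) := by positivity
    have h1 : (∏ i, δ i) * (Bf.card : ℝ) * (p : ℝ) ^ l
        ≤ (Bf.card : ℝ) * ∏ i, ((a i).card : ℝ) := by
      calc (∏ i, δ i) * (Bf.card : ℝ) * (p : ℝ) ^ l
          = (Bf.card : ℝ) * ((∏ i, δ i) * (p : ℝ) ^ l) := by ring
        _ ≤ (Bf.card : ℝ) * ∏ i, ((a i).card : ℝ) :=
            mul_le_mul_of_nonneg_left hprod hBnn
    have h2 : (Bf.card : ℝ) * ∏ i, ((a i).card : ℝ) ≤ (p : ℝ) ^ l * (Bf'.card : ℝ) := by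
      calc (Bf.card : ℝ) * ∏ i, ((a i).card : ℝ)
          = ((Bf.card * ∏ i, (a i).card : ℕ) : ℝ) := by push_cast; ring
        _ ≤ _ := by
            rw [hBf'def]
            exact_mod_cast ht
    have h3 : (∏ i, δ i) * (Bf.card : ℝ) * (p : ℝ) ^ l ≤ (Bf'.card : ℝ) * (p : ℝ) ^ l := by
      calc (∏ i, δ i) * (Bf.card : ℝ) * (p : ℝ) ^ l ≤ (p : ℝ) ^ l * (Bf'.card : ℝ) :=
            le_trans h1 h2
        _ = (Bf'.card : ℝ) * (p : ℝ) ^ l := by ring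
    exact le_of_mul_le_mul_right h3 hppos
  · -- solution-freeness
    intro α hα x hx hsum
    obtain ⟨s, ⟨i, rfl⟩, hαi⟩ := hα
    have hsub : (Bf' : Set (ZMod p)) ⊆ {y : ZMod p | y - t i ∈ A i} := by
      intro y hy
      have : y ∈ Bf' := hy
      have := (Finset.mem_filter.mp this).2 i
      rwa [hadef, Set.Finite.mem_toFinset] at this
    have hfree := solutionFree_translate (fun β hβ => (hE i β hβ).2) (hAfree i) (t i)
    exact solutionFree_mono hsub hfree α hαi x hx hsum
end

section
/- Let k ≥ 2 and consider the equation x_1 + x_2 + ⋯ + x_k = k·y in k+1 variables. There exists a constant c > 0 such that for all sufficiently large primes p, there is a subset A ⊆ ℤ_p of size at least p^{1 − c/√(log p)} with no nontrivial solutions modulo p to this equation; here a solution is nontrivial unless x_1 = x_2 = ⋯ = x_k = y. -/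
lemma ident (k : ℕ) (a : Fin k → ℤ) :
    ∑ i : Fin k, ∑ j : Fin k, (a i - a j)^2
      = 2*(k:ℤ)*(∑ i, (a i)^2) - 2*(∑ i, a i)^2 := by
  have h1 : (∑ i, a i)^2 = ∑ i : Fin k, ∑ j : Fin k, a i * a j := by
    rw [sq, Finset.sum_mul_sum]
  have h2 : ∀ i : Fin k, ∑ j : Fin k, (a i - a j)^2
      = (k:ℤ) * (a i)^2 - 2 * (a i * ∑ j, a j) + ∑ j, (a j)^2 := by
    intro i
    have : ∀ j : Fin k, (a i - a j)^2 = (a i)^2 - 2*(a i * a j) + (a j)^2 :=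
      fun j => by ring
    rw [Finset.sum_congr rfl (fun j _ => this j), Finset.sum_add_distrib,
      Finset.sum_sub_distrib, ← Finset.mul_sum]
    simp [Finset.sum_const, Finset.card_univ, Finset.mul_sum, mul_comm, mul_left_comm]
  rw [Finset.sum_congr rfl (fun i _ => h2 i), h1]
  rw [Finset.sum_add_distrib, Finset.sum_sub_distrib]
  simp only [Finset.sum_const, Finset.card_univ, Fintype.card_fin, nsmul_eq_mul,
    Finset.mul_sum]
  have h4 : ∑ i : Fin k, 2 * (k:ℤ) * a i ^ 2
      = ∑ i : Fin k, (k:ℤ) * a i ^ 2 + ∑ i : Fin k, (k:ℤ) * a i ^ 2 := by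
    rw [← Finset.sum_add_distrib]; exact Finset.sum_congr rfl fun i _ => by ring
  rw [h4]
  ring

lemma digits_eq (k d q r : ℕ) (hk : 0 < k)
    (x : Fin k → Fin d → Fin q) (y : Fin d → Fin q)
    (hx : ∀ i, ∑ j, ((x i j : ℕ))^2 = r) (hy : ∑ j, ((y j : ℕ))^2 = r)
    (hsum : ∀ j, ∑ i, ((x i j : ℕ)) = k * (y j : ℕ)) :
    ∀ i j, x i j = y j := by
  set s : Fin d → ℤ := fun j => ∑ i : Fin k, ∑ i' : Fin k, ((x i j : ℤ) - (x i' j : ℤ))^2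
    with hs
  have hsval : ∀ j, s j = 2*(k:ℤ)*(∑ i, ((x i j : ℤ))^2) - 2*((k:ℤ)*(y j : ℤ))^2 := by
    intro j
    rw [hs]; dsimp only
    rw [ident k (fun i => (x i j : ℤ))]
    congr 1
    have h5 : (∑ i, ((x i j : ℕ) : ℤ)) = (k:ℤ) * ((y j : ℕ) : ℤ) := by
      exact_mod_cast hsum j
    rw [h5]
  have hsum0 : ∑ j, s j = 0 := by
    have h1 : ∑ j, ∑ i, ((x i j : ℤ))^2 = (k : ℤ) * r := by
      rw [Finset.sum_comm]
      have : ∀ i : Fin k, ∑ j, ((x i j : ℤ))^2 = (r : ℤ) := by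
        intro i
        rw [← hx i]; push_cast; ring
      rw [Finset.sum_congr rfl fun i _ => this i]
      simp [Finset.sum_const, Finset.card_univ, mul_comm]
    have h2 : ∑ j, ((y j : ℤ))^2 = (r : ℤ) := by rw [← hy]; push_cast; ring
    calc ∑ j, s j = 2*(k:ℤ)*(∑ j, ∑ i, ((x i j : ℤ))^2) - 2*(k:ℤ)^2*∑ j, ((y j:ℤ))^2 := by
          rw [Finset.sum_congr rfl fun j _ => hsval j, Finset.sum_sub_distrib,
            ← Finset.mul_sum, ← Finset.mul_sum]
          congr 1
          · rw [Finset.mul_sum, Finset.mul_sum]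
            exact Finset.sum_congr rfl fun j _ => by ring
      _ = 0 := by rw [h1, h2]; ring
  have hnn : ∀ j ∈ Finset.univ, 0 ≤ s j := by
    intro j _
    apply Finset.sum_nonneg; intro i _
    apply Finset.sum_nonneg; intro i' _
    positivity
  have hzero : ∀ j : Fin d, s j = 0 :=
    fun j => (Finset.sum_eq_zero_iff_of_nonneg hnn).1 hsum0 j (Finset.mem_univ j)
  have hxy : ∀ i i' : Fin k, ∀ j, x i j = x i' j := by
    intro i i' j
    have h0 := hzero j
    rw [hs] at h0
    have := (Finset.sum_eq_zero_iff_of_nonneg (fun i _ => Finset.sum_nonneg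
      fun i' _ => by positivity)).1 h0 i (Finset.mem_univ i)
    have := (Finset.sum_eq_zero_iff_of_nonneg (fun i' _ => by positivity)).1 this i'
      (Finset.mem_univ i')
    have h3 : ((x i j : ℤ)) = ((x i' j : ℤ)) := by nlinarith [this]
    have : (x i j : ℕ) = (x i' j : ℕ) := by exact_mod_cast h3
    exact Fin.ext this
  intro i j
  have hall : ∑ i' : Fin k, ((x i' j : ℕ)) = k * (x i j : ℕ) := by
    rw [Finset.sum_congr rfl fun i' _ => congrArg Fin.val (hxy i' i j)]
    simp [Finset.sum_const, Finset.card_univ, mul_comm]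
  have : k * (x i j : ℕ) = k * (y j : ℕ) := by rw [← hall, hsum j]
  exact Fin.ext (Nat.eq_of_mul_eq_mul_left hk this)

lemma exists_good_set (k d q : ℕ) (hk : 0 < k) (hq : 0 < q) :
    ∃ S : Finset ℕ,
      q ^ d / (d*(q-1)^2+1) ≤ S.card ∧
      (∀ n ∈ S, n < (k*q)^d) ∧
      (∀ x : Fin k → ℕ, (∀ i, x i ∈ S) → ∀ y ∈ S, (∑ i, x i) = k * y → ∀ i, x i = y) := by
  classical
  set M := k * q with hM
  have hqM : q ≤ M := Nat.le_mul_of_pos_left q hk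
  have hMpos : 0 < M := Nat.mul_pos hk hq
  set em : (Fin d → Fin q) → (Fin d → Fin M) := fun a j => Fin.castLE hqM (a j) with hem
  set enc : (Fin d → Fin q) → ℕ := fun a => (finFunctionFinEquiv (em a) : ℕ) with henc
  have hem_inj : Function.Injective em := by
    intro a b hab
    funext j
    exact Fin.castLE_injective hqM (congrFun hab j)
  have henc_inj : Function.Injective enc := by
    intro a b hab
    apply hem_inj
    exact finFunctionFinEquiv.injective (Fin.val_injective hab)
  have henc_lt : ∀ a, enc a < M ^ d := fun a => (finFunctionFinEquiv (em a)).isLt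
  have henc_eq : ∀ a, enc a = ∑ j, ((a j : ℕ)) * M ^ (j : ℕ) := by
    intro a
    simp [henc, hem, finFunctionFinEquiv_apply]
  -- pigeonhole
  set D := d*(q-1)^2+1 with hD
  set f : (Fin d → Fin q) → ℕ := fun a => ∑ j, ((a j : ℕ))^2 with hf
  have hmaps : ∀ a ∈ (Finset.univ : Finset (Fin d → Fin q)), f a ∈ Finset.range D := by
    intro a _
    rw [Finset.mem_range, hD]
    have : f a ≤ ∑ _j : Fin d, (q-1)^2 := by
      apply Finset.sum_le_sum
      intro j _
      exact Nat.pow_le_pow_left (Nat.le_sub_one_of_lt (a j).isLt) 2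
    simpa using Nat.lt_succ_of_le (le_trans this (by simp [Finset.sum_const, mul_comm]))
  obtain ⟨r, _, hr⟩ := Finset.exists_le_card_fiber_of_mul_le_card_of_maps_to
    (n := q ^ d / D) hmaps ⟨0, by simp [hD]⟩ (by
      rw [Finset.card_range, Finset.card_univ]
      simp only [Fintype.card_fun, Fintype.card_fin]
      exact Nat.mul_div_le (q ^ d) D)
  refine ⟨(Finset.univ.filter (fun a => f a = r)).image enc, ?_, ?_, ?_⟩
  · rw [Finset.card_image_of_injective _ henc_inj]; exact hr
  · intro n hn
    obtain ⟨a, _, rfl⟩ := Finset.mem_image.1 hn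
    exact henc_lt a
  · intro x hx y hy hxy i
    choose a ha hax using fun i => Finset.mem_image.1 (hx i)
    obtain ⟨b, hb, hby⟩ := Finset.mem_image.1 hy
    have ha' : ∀ i, ∑ j, ((a i j : ℕ))^2 = r := fun i => (Finset.mem_filter.1 (ha i)).2
    have hb' : ∑ j, ((b j : ℕ))^2 = r := (Finset.mem_filter.1 hb).2
    have hq1 : q - 1 < q := Nat.sub_lt hq one_pos
    have hA : ∀ j : Fin d, ∑ i, ((a i j : ℕ)) < M := by
      intro j
      calc ∑ i, ((a i j : ℕ)) ≤ ∑ _i : Fin k, (q-1) :=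
            Finset.sum_le_sum (fun i _ => Nat.le_pred_of_lt (a i j).isLt)
        _ = k * (q-1) := by simp [mul_comm]
        _ < k * q := (Nat.mul_lt_mul_left hk).2 hq1
    have hB : ∀ j : Fin d, k * (b j : ℕ) < M :=
      fun j => lt_of_le_of_lt (Nat.mul_le_mul_left k (Nat.le_pred_of_lt (b j).isLt))
        ((Nat.mul_lt_mul_left hk).2 hq1)
    have hdig : ∀ j, ∑ i, ((a i j : ℕ)) = k * (b j : ℕ) := by
      set A : Fin d → Fin M := fun j => ⟨∑ i, ((a i j : ℕ)), hA j⟩ with hA'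
      set B : Fin d → Fin M := fun j => ⟨k * (b j : ℕ), hB j⟩ with hB'
      have hval : (finFunctionFinEquiv A : ℕ) = (finFunctionFinEquiv B : ℕ) := by
        rw [finFunctionFinEquiv_apply, finFunctionFinEquiv_apply]
        have hL : ∑ j : Fin d, ((A j : ℕ)) * M ^ (j:ℕ) = ∑ i, enc (a i) := by
          have : ∀ j : Fin d, ((A j : ℕ)) * M ^ (j:ℕ) = ∑ i, ((a i j : ℕ)) * M ^ (j:ℕ) := by
            intro j
            rw [hA']
            exact Finset.sum_mul Finset.univ (fun i => ((a i j : ℕ))) (M ^ (j:ℕ))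
          rw [Finset.sum_congr rfl (fun j _ => this j), Finset.sum_comm]
          exact Finset.sum_congr rfl (fun i _ => (henc_eq (a i)).symm)
        have hR : ∑ j : Fin d, ((B j : ℕ)) * M ^ (j:ℕ) = k * enc b := by
          rw [henc_eq, Finset.mul_sum]
          exact Finset.sum_congr rfl (fun j _ => by rw [hB']; ring)
        rw [hL, hR]
        rw [Finset.sum_congr rfl (fun i (_ : i ∈ Finset.univ) => hax i), hxy, ← hby]
      have hAB : A = B := finFunctionFinEquiv.injective (Fin.val_injective hval)
      intro j
      have := congrArg Fin.val (congrFun hAB j)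
      rw [hA', hB'] at this
      exact this
    have hfin : ∀ i j, a i j = b j := digits_eq k d q r hk a b ha' hb' hdig
    rw [← hax i, ← hby]
    exact congrArg enc (funext (hfin i))

lemma d_le_two_pow (d : ℕ) (hd : 4 ≤ d) : d ≤ 2^(d-2) := by
  obtain ⟨e, rfl⟩ : ∃ e, d = e + 4 := ⟨d - 4, by omega⟩
  have h1 : e < 2^e := Nat.lt_two_pow_self (n := e)
  have h2 : 2^(e+4-2) = 4 * 2^e := by
    rw [show e+4-2 = e+2 by omega, pow_add]
    ring
  omega

set_option maxHeartbeats 1000000 in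
/-- Behrend's construction: for each k ≥ 2 there is c > 0 such that for all large
primes p, some A ⊆ ℤ_p of size at least p^{1 − c/√(log p)} has only trivial solutions
(x₁ = ⋯ = x_k = y) to the equation x₁ + ⋯ + x_k = k·y modulo p. -/
theorem stmt_18 (k : ℕ) (hk : 2 ≤ k) :
    ∃ c : ℝ, 0 < c ∧ ∃ p₀ : ℕ, ∀ p : ℕ, p.Prime → p₀ ≤ p →
      ∃ A : Set (ZMod p),
        (p : ℝ) ^ ((1 : ℝ) - c / Real.sqrt (Real.log p)) ≤ (A.ncard : ℝ) ∧
        ∀ x : Fin k → ZMod p, (∀ i, x i ∈ A) → ∀ y ∈ A,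
          (∑ i, x i) = (k : ZMod p) * y → ∀ i, x i = y := by
  classical
  have hk0 : 0 < k := by omega
  have hkR : (2:ℝ) ≤ (k:ℝ) := by exact_mod_cast hk
  set c : ℝ := 4 + 4 * Real.log (8*k) with hc
  have hlog8k : (2:ℝ) ≤ Real.log (8*k) := by
    rw [show (2:ℝ) = Real.log (Real.exp 2) from (Real.log_exp 2).symm]
    apply Real.log_le_log (Real.exp_pos 2)
    have h3 : Real.exp 1 ≤ 3 := le_of_lt (lt_trans Real.exp_one_lt_d9 (by norm_num))
    have h9 : Real.exp 2 ≤ 9 := by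
      calc Real.exp 2 = Real.exp 1 * Real.exp 1 := by rw [← Real.exp_add]; norm_num
        _ ≤ 3 * 3 := by nlinarith [Real.exp_pos 1]
        _ = 9 := by norm_num
    linarith
  have hc0 : 0 < c := by rw [hc]; linarith
  set C₀ : ℝ := 8 * (1 + Real.log (8*k)) with hC₀
  have hC₀8 : (8:ℝ) ≤ C₀ := by rw [hC₀]; linarith
  refine ⟨c, hc0, ⌈Real.exp (C₀^2)⌉₊ + 2, ?_⟩
  intro p hp hpge
  haveI : NeZero p := ⟨by have := hp.two_le; omega⟩
  have hp2 : 2 ≤ p := hp.two_le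
  have hpR1 : (1:ℝ) < (p:ℝ) := by exact_mod_cast hp.one_lt
  have hpR0 : (0:ℝ) < (p:ℝ) := by positivity
  set L : ℝ := Real.sqrt (Real.log p) with hL
  have hlogp0 : 0 < Real.log p := Real.log_pos hpR1
  have hL0 : 0 < L := Real.sqrt_pos.2 hlogp0
  have hLsq : L^2 = Real.log p := Real.sq_sqrt (le_of_lt hlogp0)
  have hLC₀ : C₀ ≤ L := by
    have h1 : Real.exp (C₀^2) ≤ (p:ℝ) := by
      calc Real.exp (C₀^2) ≤ (⌈Real.exp (C₀^2)⌉₊ : ℝ) := Nat.le_ceil _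
        _ ≤ (p:ℝ) := by exact_mod_cast le_trans (by omega) hpge
    have h2 : C₀^2 ≤ Real.log p := by
      rw [← Real.log_exp (C₀^2)]
      exact Real.log_le_log (Real.exp_pos _) h1
    calc C₀ = Real.sqrt (C₀^2) := (Real.sqrt_sq (by positivity)).symm
      _ ≤ L := Real.sqrt_le_sqrt h2
  have hL8 : (8:ℝ) ≤ L := le_trans hC₀8 hLC₀
  have hLlogk : 8 * (1 + Real.log (8*k)) ≤ L := le_trans (le_of_eq hC₀.symm) hLC₀
  set d : ℕ := ⌈L⌉₊ with hd
  have hdL : L ≤ (d:ℝ) := Nat.le_ceil L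
  have hdL1 : (d:ℝ) ≤ L + 1 := le_of_lt (Nat.ceil_lt_add_one (le_of_lt hL0))
  have hd4 : 4 ≤ d := by
    have : (4:ℝ) ≤ (d:ℝ) := by linarith
    exact_mod_cast this
  have hd0 : 0 < d := by omega
  have hdR0 : (0:ℝ) < (d:ℝ) := by positivity
  set X : ℝ := (p:ℝ) ^ ((1:ℝ)/(d:ℝ)) with hX
  have hX0 : 0 < X := Real.rpow_pos_of_pos hpR0 _
  have hXd : X ^ d = (p:ℝ) := by
    rw [hX, ← Real.rpow_natCast ((p:ℝ) ^ ((1:ℝ)/(d:ℝ))) d, ← Real.rpow_mul (le_of_lt hpR0)]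
    rw [one_div_mul_eq_div, div_self (ne_of_gt hdR0), Real.rpow_one]
  have hXexp : X = Real.exp (L^2 / (d:ℝ)) := by
    rw [hX, Real.rpow_def_of_pos hpR0, ← hLsq]
    congr 1
    ring
  have hXlarge : Real.exp (L - 1) ≤ X := by
    rw [hXexp]
    apply Real.exp_le_exp.2
    rw [le_div_iff₀ hdR0]
    have h0 : (0:ℝ) ≤ L - 1 := by linarith
    have h1 : (L-1)*(d:ℝ) ≤ (L-1)*(L+1) := mul_le_mul_of_nonneg_left hdL1 h0
    have h2 : (L-1)*(L+1) = L^2 - 1 := by ring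
    linarith
  have h8k : (8:ℝ) * k ≤ Real.exp (L - 1) := by
    have h1 : Real.log (8*k) + 1 ≤ L := by linarith
    calc (8:ℝ)*k = Real.exp (Real.log (8*k)) := (Real.exp_log (by positivity)).symm
      _ ≤ Real.exp (L-1) := Real.exp_le_exp.2 (by linarith)
  have hX8k : 8 * (k:ℝ) ≤ X := le_trans h8k hXlarge
  set q : ℕ := ⌊X / (2*k)⌋₊ with hq
  have hXk4 : (4:ℝ) ≤ X / (2*k) := by
    rw [le_div_iff₀ (by positivity)]
    linarith
  have hfl : X/(2*k) - 1 < (q:ℝ) := Nat.sub_one_lt_floor (X/(2*k))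
  have hq3 : 3 ≤ q := by
    have h2 : (3:ℝ) ≤ (q:ℝ) := by linarith
    exact_mod_cast h2
  have hq0 : 0 < q := by omega
  have hqR0 : (0:ℝ) < (q:ℝ) := by exact_mod_cast hq0
  have hqup : (q:ℝ) ≤ X/(2*k) := Nat.floor_le (by positivity)
  have hqlow : X/(4*k) ≤ (q:ℝ) := by
    have he : X/(4*k) = (X/(2*k))/2 := by
      rw [div_div]
      ring_nf
    rw [he]
    linarith
  have hqlow0 : (0:ℝ) < X/(4*k) := by positivity
  clear_value c C₀ L d X q
  -- k * (k*q)^d < p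
  have hkq : ((k*q:ℕ):ℝ) ≤ X/2 := by
    push_cast
    calc (k:ℝ) * q ≤ k * (X/(2*k)) := mul_le_mul_of_nonneg_left hqup (by linarith)
      _ = X/2 := by field_simp
  have h2d : (k:ℝ) < 2^d := by
    have hlog2 : (0.6931471803:ℝ) < Real.log 2 := Real.log_two_gt_d9
    have hlogkk : Real.log (k:ℝ) ≤ Real.log (8*k) :=
      Real.log_le_log (by positivity) (by nlinarith)
    have h1 : Real.log (k:ℝ) < (d:ℝ) * Real.log 2 := by
      have hA : L * (0.6931:ℝ) ≤ L * Real.log 2 :=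
        mul_le_mul_of_nonneg_left (by linarith) (by linarith)
      have hB : L * Real.log 2 ≤ (d:ℝ) * Real.log 2 :=
        mul_le_mul_of_nonneg_right hdL (by linarith)
      linarith
    calc (k:ℝ) = Real.exp (Real.log k) := (Real.exp_log (by positivity)).symm
      _ < Real.exp ((d:ℝ) * Real.log 2) := Real.exp_lt_exp.2 h1
      _ = 2^d := by rw [Real.exp_nat_mul, Real.exp_log (by norm_num)]
  have hkqdR : (k:ℝ) * ((k*q:ℕ):ℝ)^d < (p:ℝ) := by
    have h1 : ((k*q:ℕ):ℝ)^d ≤ (X/2)^d := pow_le_pow_left₀ (by positivity) hkq d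
    have h2 : (X/2)^d = (p:ℝ)/2^d := by rw [div_pow, hXd]
    have h3 : (k:ℝ) * ((p:ℝ)/2^d) < p := by
      rw [mul_div_assoc']
      rw [div_lt_iff₀ (by positivity)]
      have := mul_lt_mul_of_pos_right h2d hpR0
      linarith
    calc (k:ℝ) * ((k*q:ℕ):ℝ)^d ≤ k * ((p:ℝ)/2^d) := by
          apply mul_le_mul_of_nonneg_left _ (by positivity)
          rw [← h2]; exact h1
      _ < p := h3
  have hkqdN : k * (k*q)^d < p := by
    have h := hkqdR
    push_cast at h
    exact_mod_cast h
  -- the set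
  obtain ⟨S, hScard, hSlt, hSsol⟩ := exists_good_set k d q hk0 hq0
  have hSp : ∀ n ∈ S, n < p := fun n hn =>
    lt_of_lt_of_le (hSlt n hn) (le_trans (Nat.le_mul_of_pos_left _ hk0) (le_of_lt hkqdN))
  refine ⟨↑(S.image (fun n : ℕ => (n : ZMod p))), ?_, ?_⟩
  · -- size bound
    have hinj : Set.InjOn (fun n : ℕ => (n : ZMod p)) ↑S := by
      intro m hm n hn hmn
      have := congrArg ZMod.val hmn
      rwa [ZMod.val_cast_of_lt (hSp m hm), ZMod.val_cast_of_lt (hSp n hn)] at this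
    rw [Set.ncard_coe_finset, Finset.card_image_of_injOn hinj]
    -- nat division bound
    set D : ℕ := d*(q-1)^2+1 with hD
    clear_value D
    have hD0 : 0 < D := by rw [hD]; positivity
    have hDle : D ≤ d * q^2 := by
      have hq1 : (q-1)^2 + 1 ≤ q^2 := by
        zify [show 1 ≤ q by omega]
        have hq3' : (3:ℤ) ≤ (q:ℤ) := by exact_mod_cast hq3
        have hexp : ((q:ℤ)-1)^2 = (q:ℤ)^2 - 2*q + 1 := by ring
        linarith
      calc D ≤ d*(q-1)^2 + d := by omega
        _ = d * ((q-1)^2+1) := by ring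
        _ ≤ d * q^2 := Nat.mul_le_mul_left d hq1
    have hdq : d * q^2 ≤ q^d := by
      have h1 : d ≤ 2^(d-2) := d_le_two_pow d hd4
      have h2 : 2^(d-2) ≤ q^(d-2) := Nat.pow_le_pow_left (by omega) _
      calc d * q^2 ≤ q^(d-2) * q^2 := Nat.mul_le_mul_right _ (le_trans h1 h2)
        _ = q^d := by rw [← pow_add]; congr 1; omega
    have hDq : D ≤ q^d := le_trans hDle hdq
    have hqd2D : q^d ≤ 2 * D * S.card := by
      have h1 : q^d ≤ D * (q^d / D) + D := by
        have := Nat.div_add_mod (q^d) D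
        have h2 : q^d % D < D := Nat.mod_lt _ hD0
        omega
      have h3 : 1 ≤ q^d / D := (Nat.one_le_div_iff hD0).2 hDq
      have h4 : D * (q^d / D) + D ≤ 2 * (D * (q^d / D)) := by
        have h5 : D ≤ D * (q^d / D) := by
          calc D = D * 1 := (mul_one D).symm
            _ ≤ D * (q^d / D) := Nat.mul_le_mul_left D h3
        omega
      calc q^d ≤ 2 * (D * (q^d / D)) := le_trans h1 h4
        _ ≤ 2 * (D * S.card) := by
            apply Nat.mul_le_mul_left
            exact Nat.mul_le_mul_left D hScard
        _ = 2 * D * S.card := by ring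
    have hcardR : (q:ℝ)^d / (2*(D:ℝ)) ≤ (S.card : ℝ) := by
      rw [div_le_iff₀ (by positivity)]
      have h : ((q:ℝ))^d ≤ 2*(D:ℝ)*(S.card:ℝ) := by exact_mod_cast hqd2D
      linarith
    have hDR : (D:ℝ) ≤ (d:ℝ) * (q:ℝ)^2 := by exact_mod_cast hDle
    have hcard2 : (q:ℝ)^d / (2*(d:ℝ)*(q:ℝ)^2) ≤ (S.card : ℝ) := by
      refine le_trans ?_ hcardR
      apply div_le_div_of_nonneg_left (by positivity) (by positivity)
      linarith
    -- replace q by X bounds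
    have hnum : (X/(4*k))^d ≤ (q:ℝ)^d := pow_le_pow_left₀ (le_of_lt hqlow0) hqlow d
    have hden : (q:ℝ)^2 ≤ X^2 := by
      apply pow_le_pow_left₀ (le_of_lt hqR0)
      calc (q:ℝ) ≤ X/(2*k) := hqup
        _ ≤ X := div_le_self (le_of_lt hX0) (by linarith)
    have hcard3 : (X/(4*k))^d / (2*(d:ℝ)*X^2) ≤ (S.card : ℝ) := by
      refine le_trans ?_ hcard2
      apply div_le_div₀ (by positivity) hnum (by positivity)
      exact mul_le_mul_of_nonneg_left hden (by positivity)
    have hXdsplit : (X/(4*k))^d = (p:ℝ) / (4*k)^d := by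
      rw [div_pow, hXd]
    have hX2 : X^2 = (p:ℝ) ^ ((2:ℝ)/(d:ℝ)) := by
      rw [hX, ← Real.rpow_natCast ((p:ℝ) ^ ((1:ℝ)/(d:ℝ))) 2, ← Real.rpow_mul (le_of_lt hpR0)]
      norm_num
      congr 1
      ring
    -- final exponent computation
    have hkey : 2*(d:ℝ)*(4*(k:ℝ))^d ≤ (p:ℝ) ^ (c/L - 2/(d:ℝ)) := by
      have e1 : (4*(k:ℝ))^d ≤ Real.exp ((L+1) * Real.log (8*k)) := by
        calc (4*(k:ℝ))^d ≤ (8*(k:ℝ))^d := pow_le_pow_left₀ (by positivity) (by linarith) d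
          _ = Real.exp ((d:ℝ) * Real.log (8*k)) := by
              rw [Real.exp_nat_mul, Real.exp_log (by positivity)]
          _ ≤ Real.exp ((L+1) * Real.log (8*k)) := by
              apply Real.exp_le_exp.2
              exact mul_le_mul_of_nonneg_right hdL1 (by linarith)
      have e2 : 2*(d:ℝ) ≤ Real.exp (2*L) := by
        have h1 : (d:ℝ) + 1 ≤ Real.exp (d:ℝ) := Real.add_one_le_exp _
        calc 2*(d:ℝ) ≤ 2*((d:ℝ)+1) := by linarith
          _ ≤ 2 * Real.exp (d:ℝ) := by linarith
          _ ≤ Real.exp 1 * Real.exp (d:ℝ) := by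
              have h2e : (2:ℝ) ≤ Real.exp 1 := by
                have := Real.add_one_le_exp (1:ℝ)
                linarith
              exact mul_le_mul_of_nonneg_right h2e (le_of_lt (Real.exp_pos _))
          _ = Real.exp (1 + d) := by rw [← Real.exp_add]
          _ ≤ Real.exp (2*L) := Real.exp_le_exp.2 (by linarith)
      have e3 : Real.exp (2*L) * Real.exp ((L+1)*Real.log (8*k)) ≤ Real.exp ((c-2)*L) := by
        rw [← Real.exp_add]
        apply Real.exp_le_exp.2
        have h1 : (L+1) * Real.log (8*k) ≤ 4*L*Real.log (8*k) := by
          have hprod : (0:ℝ) ≤ (3*L-1) * Real.log (8*k) :=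
            mul_nonneg (by linarith) (by linarith)
          linarith [hprod]
        have h2 : (c-2)*L = 2*L + 4*Real.log (8*k)*L := by rw [hc]; ring
        linarith [h1, h2]
      have e4 : Real.exp ((c-2)*L) = (p:ℝ) ^ ((c-2)/L) := by
        rw [Real.rpow_def_of_pos hpR0, ← hLsq]
        congr 1
        field_simp
      have e5 : (p:ℝ) ^ ((c-2)/L) ≤ (p:ℝ) ^ (c/L - 2/(d:ℝ)) := by
        apply Real.rpow_le_rpow_of_exponent_le (le_of_lt hpR1)
        have h1 : 2/(d:ℝ) ≤ 2/L := by
          apply div_le_div_of_nonneg_left (by norm_num) hL0 hdL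
        have h2 : (c-2)/L = c/L - 2/L := by ring
        linarith
      calc 2*(d:ℝ)*(4*(k:ℝ))^d ≤ Real.exp (2*L) * Real.exp ((L+1)*Real.log (8*k)) :=
            mul_le_mul e2 e1 (by positivity) (le_of_lt (Real.exp_pos _))
        _ ≤ Real.exp ((c-2)*L) := e3
        _ = (p:ℝ) ^ ((c-2)/L) := e4
        _ ≤ (p:ℝ) ^ (c/L - 2/(d:ℝ)) := e5
    -- put it together
    have hmain : (p:ℝ) ^ ((1:ℝ) - c/L) ≤ (X/(4*k))^d / (2*(d:ℝ)*X^2) := by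
      rw [hXdsplit, hX2]
      rw [div_div]
      rw [le_div_iff₀ (by positivity)]
      have h1 : (p:ℝ) ^ ((1:ℝ) - c/L) * ((4*(k:ℝ))^d * (2*(d:ℝ)*(p:ℝ)^((2:ℝ)/(d:ℝ))))
          = ((p:ℝ) ^ ((1:ℝ) - c/L) * (p:ℝ)^((2:ℝ)/(d:ℝ))) * (2*(d:ℝ)*(4*(k:ℝ))^d) := by
        ring
      rw [h1, ← Real.rpow_add hpR0]
      have h2 : (p:ℝ) ^ ((1:ℝ) - c/L + 2/(d:ℝ)) * (2*(d:ℝ)*(4*(k:ℝ))^d)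
          ≤ (p:ℝ) ^ ((1:ℝ) - c/L + 2/(d:ℝ)) * (p:ℝ) ^ (c/L - 2/(d:ℝ)) := by
        apply mul_le_mul_of_nonneg_left hkey (le_of_lt (Real.rpow_pos_of_pos hpR0 _))
      rw [← Real.rpow_add hpR0] at h2
      calc (p:ℝ) ^ ((1:ℝ) - c/L + 2/(d:ℝ)) * (2*(d:ℝ)*(4*(k:ℝ))^d)
          ≤ (p:ℝ) ^ ((1:ℝ) - c/L + 2/(d:ℝ) + (c/L - 2/(d:ℝ))) := h2
        _ = (p:ℝ) := by rw [show (1:ℝ) - c/L + 2/(d:ℝ) + (c/L - 2/(d:ℝ)) = 1 by ring, Real.rpow_one]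
    exact le_trans hmain hcard3
  · -- solution-freeness
    intro x hx y hy hxy i
    have hx' : ∀ i, ∃ n ∈ S, ((n:ℕ) : ZMod p) = x i := by
      intro i
      have := hx i
      simp only [Finset.coe_image, Set.mem_image, Finset.mem_coe] at this
      obtain ⟨n, hn, hnx⟩ := this
      exact ⟨n, hn, hnx⟩
    choose n hn hnx using hx'
    have hy' : ∃ m ∈ S, ((m:ℕ) : ZMod p) = y := by
      simp only [Finset.coe_image, Set.mem_image, Finset.mem_coe] at hy
      obtain ⟨m, hm, hmy⟩ := hy
      exact ⟨m, hm, hmy⟩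
    obtain ⟨m, hm, hmy⟩ := hy'
    have hsum_lt : ∑ i, n i < p := by
      have h1 : ∑ i, n i < ∑ _i : Fin k, (k*q)^d :=
        Finset.sum_lt_sum_of_nonempty ⟨⟨0, hk0⟩, Finset.mem_univ _⟩
          (fun i _ => hSlt (n i) (hn i))
      have h2 : ∑ _i : Fin k, (k*q)^d = k * (k*q)^d := by
        simp [Finset.sum_const, Finset.card_univ, mul_comm]
      omega
    have hkm_lt : k * m < p := by
      have := hSlt m hm
      have h2 : k * m < k * (k*q)^d := (Nat.mul_lt_mul_left hk0).2 this
      omega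
    have heq : ∑ i, n i = k * m := by
      have h1 : ((∑ i, n i : ℕ) : ZMod p) = ((k * m : ℕ) : ZMod p) := by
        push_cast
        rw [Finset.sum_congr rfl (fun i _ => hnx i), hxy, ← hmy]
      have := congrArg ZMod.val h1
      rwa [ZMod.val_cast_of_lt hsum_lt, ZMod.val_cast_of_lt hkm_lt] at this
    have := hSsol n hn m hm heq i
    rw [← hnx i, ← hmy, this]
end

section
/- Let k ≥ 7 be odd and let H = W_k be the wheel graph with k+1 vertices. Suppose (G_i)_{i≥0} is an H-bootstrap process, Y ⊆ V(G_0) with |Y| ≥ k+1 and G_0[Y] a clique, and F is a copy of H in G_0 with 2 ≤ |V(F) ∩ Y| < k+1. Then there exists a vertex z ∈ V(F) \ Y such that G_1[Y ∪ {z}] is a clique; moreover G_k[Y ∪ V(F)] is a clique. -/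
open SimpleGraph

/-- The wheel graph `W_k`: a cycle on the `k` vertices `some a` (for `a : ZMod k`)
together with the hub `none` adjacent to all cycle vertices. It has `k + 1` vertices. -/
def wheelGraph (k : ℕ) : SimpleGraph (Option (ZMod k)) where
  Adj u v := u ≠ v ∧ (u = none ∨ v = none ∨
    ∃ a b : ZMod k, u = some a ∧ v = some b ∧ (a = b + 1 ∨ b = a + 1))
  symm := by
    constructor
    rintro u v ⟨hne, h⟩
    refine ⟨hne.symm, ?_⟩
    rcases h with h | h | ⟨a, b, ha, hb, hab⟩
    · exact Or.inr (Or.inl h)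
    · exact Or.inl h
    · exact Or.inr (Or.inr ⟨b, a, hb, ha, hab.symm⟩)
  loopless := ⟨fun u h => h.1 rfl⟩

lemma creates {V : Type*} [Fintype V] {k : ℕ} (hk : 7 ≤ k)
    (G : SimpleGraph V) (Y : Set V) (hY : G.IsClique Y) (hcard : k + 1 ≤ Y.ncard)
    {z y y1 y2 : V} (hz : z ∉ Y) (hy : y ∈ Y) (h1 : y1 ∈ Y) (h2 : y2 ∈ Y)
    (h12 : y1 ≠ y2) (hy1 : y ≠ y1) (hy2 : y ≠ y2)
    (ha1 : G.Adj z y1) (ha2 : G.Adj z y2) (hnadj : ¬ G.Adj z y) :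
    CreatesNewCopy (wheelGraph k) G z y := by
  classical
  haveI : NeZero k := ⟨by omega⟩
  have hzy : z ≠ y := fun h => hz (h ▸ hy)
  -- basic ZMod facts
  have hcastne : ∀ n : ℕ, 0 < n → n < k → (n : ZMod k) ≠ 0 := by
    intro n h0 hnk h
    have := (ZMod.natCast_eq_zero_iff n k).mp h
    have := Nat.le_of_dvd h0 this
    omega
  have h10 : (1 : ZMod k) ≠ 0 := by
    have := hcastne 1 (by omega) (by omega); simpa using this
  have h1m1 : (1 : ZMod k) ≠ -1 := by
    intro h
    have h2 : ((2 : ℕ) : ZMod k) = 0 := by push_cast; linear_combination h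
    exact hcastne 2 (by omega) (by omega) h2
  have h0m1 : (0 : ZMod k) ≠ -1 := by
    intro h
    have h2 : ((1 : ℕ) : ZMod k) = 0 := by push_cast; linear_combination h
    exact hcastne 1 (by omega) (by omega) h2
  -- an injection of Option (ZMod k) into Y
  haveI : Fintype ↥Y := Y.toFinite.fintype
  have hcards : Fintype.card (Option (ZMod k)) ≤ Fintype.card ↥Y := by
    rw [Fintype.card_option, ZMod.card]
    rw [← Nat.card_eq_fintype_card, Nat.card_coe_set_eq]
    exact hcard
  obtain ⟨j⟩ := Function.Embedding.nonempty_of_card_le hcards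
  set ι0 : Option (ZMod k) → V := fun x => (j x : V) with hι0
  have hι0inj : Function.Injective ι0 := fun a b h => j.injective (Subtype.ext h)
  have hι0mem : ∀ x, ι0 x ∈ Y := fun x => (j x).2
  -- three swaps
  set ι1 : Option (ZMod k) → V := (Equiv.swap y (ι0 none)) ∘ ι0 with hι1
  have hι1inj : Function.Injective ι1 := (Equiv.injective _).comp hι0inj
  have hι1mem : ∀ x, ι1 x ∈ Y := by
    intro x
    simp only [hι1, Function.comp_apply]
    rcases Equiv.swap_apply_def y (ι0 none) (ι0 x) with _
    by_cases h : ι0 x = y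
    · simp [h, Equiv.swap_apply_left]; exact hι0mem none
    · by_cases h' : ι0 x = ι0 none
      · simp [h', Equiv.swap_apply_right]; exact hy
      · rw [Equiv.swap_apply_of_ne_of_ne h h']; exact hι0mem x
  have hι1none : ι1 none = y := by simp [hι1]
  set ι2 : Option (ZMod k) → V := (Equiv.swap y1 (ι1 (some 1))) ∘ ι1 with hι2
  have hι2inj : Function.Injective ι2 := (Equiv.injective _).comp hι1inj
  have hι2mem : ∀ x, ι2 x ∈ Y := by
    intro x
    simp only [hι2, Function.comp_apply]
    by_cases h : ι1 x = y1
    · simp [h, Equiv.swap_apply_left]; exact hι1mem (some 1)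
    · by_cases h' : ι1 x = ι1 (some 1)
      · simp [h', Equiv.swap_apply_right]; exact h1
      · rw [Equiv.swap_apply_of_ne_of_ne h h']; exact hι1mem x
  have hι2none : ι2 none = y := by
    simp only [hι2, Function.comp_apply, hι1none]
    exact Equiv.swap_apply_of_ne_of_ne hy1
      (fun h => (by simpa using hι1inj (hι1none.trans h) : False))
  have hι2one : ι2 (some 1) = y1 := by simp [hι2]
  set ι3 : Option (ZMod k) → V := (Equiv.swap y2 (ι2 (some (-1)))) ∘ ι2 with hι3
  have hι3inj : Function.Injective ι3 := (Equiv.injective _).comp hι2inj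
  have hι3mem : ∀ x, ι3 x ∈ Y := by
    intro x
    simp only [hι3, Function.comp_apply]
    by_cases h : ι2 x = y2
    · simp [h, Equiv.swap_apply_left]; exact hι2mem (some (-1))
    · by_cases h' : ι2 x = ι2 (some (-1))
      · simp [h', Equiv.swap_apply_right]; exact h2
      · rw [Equiv.swap_apply_of_ne_of_ne h h']; exact hι2mem x
  have hne_m1_none : ι2 (some (-1)) ≠ ι2 none := fun h => by simpa using hι2inj h
  have hne_m1_one : ι2 (some (-1)) ≠ ι2 (some 1) := by
    intro h
    have := hι2inj h
    exact h1m1 (by simpa using this.symm)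
  have hι3none : ι3 none = y := by
    simp only [hι3, Function.comp_apply, hι2none]
    exact Equiv.swap_apply_of_ne_of_ne hy2 (fun h => hne_m1_none (hι2none ▸ h.symm))
  have hι3one : ι3 (some 1) = y1 := by
    simp only [hι3, Function.comp_apply, hι2one]
    exact Equiv.swap_apply_of_ne_of_ne h12 (fun h => hne_m1_one (hι2one ▸ h.symm))
  have hι3m1 : ι3 (some (-1)) = y2 := by
    simp [hι3, Equiv.swap_apply_right]
  -- define the map
  set ψ : Option (ZMod k) → V := fun x => if x = some 0 then z else ι3 x with hψ
  have hψinj : Function.Injective ψ := by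
    intro a b h
    simp only [hψ] at h
    by_cases ha : a = some 0 <;> by_cases hb : b = some 0
    · rw [ha, hb]
    · rw [if_pos ha, if_neg hb] at h; exact absurd (h ▸ hι3mem b) hz
    · rw [if_neg ha, if_pos hb] at h; exact absurd (h ▸ hι3mem a) hz
    · rw [if_neg ha, if_neg hb] at h; exact hι3inj h
  have hψ0 : ψ (some 0) = z := by simp [hψ]
  have hψnone : ψ none = y := by
    simp only [hψ, if_neg (by simp : (none : Option (ZMod k)) ≠ some 0)]; exact hι3none
  have hψone : ψ (some 1) = y1 := by
    rw [hψ]; simp only [if_neg (by simpa using h10 : (some 1 : Option (ZMod k)) ≠ some 0)]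
    exact hι3one
  have hψm1 : ψ (some (-1)) = y2 := by
    rw [hψ]
    simp only [if_neg (by simpa using h0m1.symm : (some (-1) : Option (ZMod k)) ≠ some 0)]
    exact hι3m1
  -- the edge-adjacency in the extended graph
  have key : ∀ a b : Option (ZMod k), (wheelGraph k).Adj a b → a = some 0 →
      (G ⊔ SimpleGraph.fromEdgeSet {s(z, y)}).Adj (ψ a) (ψ b) := by
    rintro a b ⟨hne, hd⟩ rfl
    rcases hd with h | h | ⟨p, q, hp, hq, hpq⟩
    · exact absurd h (by simp)
    · subst h
      rw [hψ0, hψnone]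
      refine (SimpleGraph.sup_adj _ _ _ _).mpr (Or.inr ?_)
      rw [SimpleGraph.fromEdgeSet_adj]
      exact ⟨rfl, hzy⟩
    · have hp0 : p = 0 := by simpa using hp.symm
      subst hp0 hq
      rcases hpq with h | h
      · have : q = -1 := by linear_combination -h
        subst this
        rw [hψ0, hψm1]
        exact (SimpleGraph.sup_adj _ _ _ _).mpr (Or.inl ha2)
      · have : q = 1 := by linear_combination h
        subst this
        rw [hψ0, hψone]
        exact (SimpleGraph.sup_adj _ _ _ _).mpr (Or.inl ha1)
  refine ⟨⟨ψ, ?_⟩, hψinj, some 0, none, ⟨by simp, Or.inr (Or.inl rfl)⟩, ?_⟩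
  · intro a b hab
    by_cases ha : a = some 0
    · exact key a b hab ha
    · by_cases hb : b = some 0
      · exact (key b a hab.symm hb).symm
      · have hma : ψ a = ι3 a := by simp [hψ, ha]
        have hmb : ψ b = ι3 b := by simp [hψ, hb]
        refine (SimpleGraph.sup_adj _ _ _ _).mpr (Or.inl ?_)
        rw [hma, hmb]
        exact hY (hι3mem a) (hι3mem b) (fun h => hab.1 (hι3inj h))
  · show ¬ G.Adj (ψ (some 0)) (ψ none)
    rw [hψ0, hψnone]
    exact hnadj

lemma absorb {V : Type*} [Fintype V] {k : ℕ} (hk : 7 ≤ k)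
    (G : SimpleGraph V) (Y : Set V) (hY : G.IsClique Y) (hcard : k + 1 ≤ Y.ncard)
    {z y1 y2 : V} (hz : z ∉ Y) (h1 : y1 ∈ Y) (h2 : y2 ∈ Y) (h12 : y1 ≠ y2)
    (ha1 : G.Adj z y1) (ha2 : G.Adj z y2) :
    (bootStep (wheelGraph k) G).IsClique (insert z Y) := by
  have key : ∀ w ∈ Y, (bootStep (wheelGraph k) G).Adj z w := by
    intro w hw
    have hzw : z ≠ w := fun h => hz (h ▸ hw)
    by_cases hadj : G.Adj z w
    · exact (SimpleGraph.sup_adj _ _ _ _).mpr (Or.inl hadj)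
    · refine (SimpleGraph.sup_adj _ _ _ _).mpr (Or.inr ?_)
      rw [SimpleGraph.fromEdgeSet_adj]
      refine ⟨⟨z, w, rfl, ?_⟩, hzw⟩
      have hw1 : w ≠ y1 := fun h => hadj (h ▸ ha1)
      have hw2 : w ≠ y2 := fun h => hadj (h ▸ ha2)
      exact creates hk G Y hY hcard hz hw h1 h2 h12 hw1 hw2 ha1 ha2 hadj
  intro u hu v hv huv
  rcases hu with rfl | hu
  · rcases hv with rfl | hv
    · exact absurd rfl huv
    · exact key v hv
  · rcases hv with rfl | hv
    · exact (key u hu).symm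
    · exact (SimpleGraph.sup_adj _ _ _ _).mpr (Or.inl (hY hu hv huv))

lemma boundary {k : ℕ} (hk : 1 ≤ k) (S : Set (ZMod k)) {a b : ZMod k}
    (ha : a ∈ S) (hb : b ∉ S) : ∃ c, c ∉ S ∧ c + 1 ∈ S := by
  classical
  haveI : NeZero k := ⟨by omega⟩
  have hP : ∃ n : ℕ, b + (n : ZMod k) ∈ S :=
    ⟨(a - b).val, by rw [ZMod.natCast_zmod_val]; simpa using ha⟩
  set n := Nat.find hP with hn
  have hspec : b + (n : ZMod k) ∈ S := Nat.find_spec hP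
  have hn0 : n ≠ 0 := by
    intro h
    apply hb
    simpa [h] using hspec
  have hprev : b + ((n - 1 : ℕ) : ZMod k) ∉ S := Nat.find_min hP (by omega)
  refine ⟨b + ((n - 1 : ℕ) : ZMod k), hprev, ?_⟩
  have hcast : ((n - 1 : ℕ) : ZMod k) + 1 = (n : ZMod k) := by
    rw [show ((n - 1 : ℕ) : ZMod k) + 1 = ((n - 1 + 1 : ℕ) : ZMod k) by push_cast; ring,
      show n - 1 + 1 = n by omega]
  rw [add_assoc, hcast]
  exact hspec

lemma wheel_adj_hub {k : ℕ} (c : ZMod k) : (wheelGraph k).Adj (some c) none :=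
  ⟨by simp, Or.inr (Or.inl rfl)⟩

lemma wheel_adj_succ {k : ℕ} (hk : 7 ≤ k) (c : ZMod k) :
    (wheelGraph k).Adj (some c) (some (c + 1)) := by
  haveI : NeZero k := ⟨by omega⟩
  refine ⟨?_, Or.inr (Or.inr ⟨c, c + 1, rfl, rfl, Or.inr rfl⟩)⟩
  simp only [ne_eq, Option.some.injEq]
  intro h
  have h1 : ((1 : ℕ) : ZMod k) = 0 := by push_cast; linear_combination -h
  have := (ZMod.natCast_eq_zero_iff 1 k).mp h1
  have := Nat.le_of_dvd (by omega) this
  omega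

lemma iterate {V : Type*} [Fintype V] {k : ℕ} (hk : 7 ≤ k) (G₀ : SimpleGraph V)
    (Y : Set V) (hYcard : k + 1 ≤ Y.ncard)
    (φ : wheelGraph k →g G₀) (hinj : Function.Injective φ) :
    ∀ (m i : ℕ) (C : Set V), (bootProcess (wheelGraph k) G₀ i).IsClique C →
      Y ⊆ C → φ none ∈ C → (∃ a, φ (some a) ∈ C) →
      (Set.range φ \ C).ncard ≤ m →
      (bootProcess (wheelGraph k) G₀ (i + m)).IsClique (Y ∪ Set.range φ) := by
  intro m
  induction m with
  | zero =>
    intro i C hC hYC hhub _ hmiss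
    have hemp : Set.range φ \ C = ∅ := by
      rw [← Set.ncard_eq_zero (Set.toFinite _)]
      omega
    have hsub : Set.range φ ⊆ C := by
      intro x hx
      by_contra hxc
      exact absurd (hemp ▸ ⟨hx, hxc⟩ : x ∈ (∅ : Set V)) (Set.notMem_empty x)
    exact hC.subset (Set.union_subset hYC hsub)
  | succ m IH =>
    intro i C hC hYC hhub hcyc hmiss
    by_cases hsub : Set.range φ ⊆ C
    · exact (hC.subset (Set.union_subset hYC hsub)).mono
        (bootProcess_mono _ _ (Nat.le_add_right i (m + 1)))
    · rw [Set.not_subset] at hsub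
      obtain ⟨x, hxr, hxC⟩ := hsub
      obtain ⟨o, rfl⟩ := hxr
      obtain ⟨c, rfl⟩ : ∃ c, o = some c := by
        cases o with
        | none => exact absurd hhub hxC
        | some c => exact ⟨c, rfl⟩
      -- boundary vertex
      set S : Set (ZMod k) := {a | φ (some a) ∈ C} with hS
      have hbd : ∃ d, d ∉ S ∧ d + 1 ∈ S := by
        obtain ⟨a, haS⟩ := hcyc
        exact boundary (by omega) S haS hxC
      obtain ⟨d, hdS, hd1S⟩ := hbd
      set z := φ (some d) with hz
      have hzC : z ∉ C := hdS
      have hclique' : (bootProcess (wheelGraph k) G₀ (i + 1)).IsClique (insert z C) := by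
        refine absorb hk _ C hC ?_ hzC hhub hd1S ?_ ?_ ?_
        · exact le_trans hYcard (Set.ncard_le_ncard hYC C.toFinite)
        · exact fun h => (by simpa using hinj h : False)
        · exact (bootProcess_mono (wheelGraph k) G₀ (Nat.zero_le i))
            (φ.map_adj (wheel_adj_hub d))
        · exact (bootProcess_mono (wheelGraph k) G₀ (Nat.zero_le i))
            (φ.map_adj (wheel_adj_succ hk d))
      have hmiss' : (Set.range φ \ insert z C).ncard ≤ m := by
        have hlt : (Set.range φ \ insert z C).ncard < (Set.range φ \ C).ncard := by
          apply Set.ncard_lt_ncard _ (Set.toFinite _)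
          constructor
          · exact Set.diff_subset_diff_right (Set.subset_insert _ _)
          · intro hss
            exact (hss ⟨⟨some d, rfl⟩, hzC⟩).2 (Set.mem_insert _ _)
        omega
      have := IH (i + 1) (insert z C) hclique' (hYC.trans (Set.subset_insert _ _))
        (Set.mem_insert_of_mem _ hhub) ⟨d, Set.mem_insert _ _⟩ hmiss'
      rwa [show i + 1 + m = i + (m + 1) by omega] at this

/-- Clique growth in the W_k-process: if Y is a clique of size ≥ k+1 in G₀ and F is
a copy of W_k meeting Y in at least 2 but fewer than k+1 vertices, then some vertex
z ∈ V(F) \ Y forms a clique with Y at time 1, and Y ∪ V(F) is a clique at time k. -/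
theorem stmt_19 {V : Type*} [Fintype V] (k : ℕ) (hk : 7 ≤ k) (hodd : Odd k)
    (G₀ : SimpleGraph V) (Y : Set V) (hYcard : k + 1 ≤ Y.ncard)
    (hYclique : G₀.IsClique Y)
    (φ : wheelGraph k →g G₀) (hinj : Function.Injective φ)
    (hlow : 2 ≤ (Set.range φ ∩ Y).ncard) (hhigh : (Set.range φ ∩ Y).ncard < k + 1) :
    (∃ z ∈ Set.range φ \ Y, (bootProcess (wheelGraph k) G₀ 1).IsClique (insert z Y)) ∧
      (bootProcess (wheelGraph k) G₀ k).IsClique (Y ∪ Set.range φ) := by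
  haveI : NeZero k := ⟨by omega⟩
  have hrange : (Set.range φ).ncard = k + 1 := by
    rw [← Nat.card_coe_set_eq, Nat.card_congr (Equiv.ofInjective _ hinj).symm,
      Nat.card_eq_fintype_card, Fintype.card_option, ZMod.card]
  obtain ⟨u, v, ⟨⟨ou, rfl⟩, huY⟩, ⟨⟨ov, rfl⟩, hvY⟩, huv⟩ :=
    (Set.one_lt_ncard_iff (Set.toFinite _)).mp (by omega : 1 < (Set.range φ ∩ Y).ncard)
  -- find z with two neighbours in Y, plus invariants
  obtain ⟨z, hzF, hzY, hclique1, hhubmem, hcycmem⟩ :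
      ∃ z, z ∈ Set.range φ ∧ z ∉ Y ∧
        (bootStep (wheelGraph k) G₀).IsClique (insert z Y) ∧
        φ none ∈ insert z Y ∧ ∃ a, φ (some a) ∈ insert z Y := by
    by_cases hhY : φ none ∈ Y
    · -- hub already in Y; take a boundary cycle vertex
      have hcycY : ∃ a, φ (some a) ∈ Y := by
        cases ou with
        | none =>
          cases ov with
          | none => exact absurd rfl huv
          | some cv => exact ⟨cv, hvY⟩
        | some cu => exact ⟨cu, huY⟩
      obtain ⟨a0, ha0⟩ := hcycY
      have hnotall : ¬ ∀ a : ZMod k, φ (some a) ∈ Y := by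
        intro hall
        have hsub : Set.range φ ⊆ Y := by
          rintro x ⟨o, rfl⟩
          cases o with
          | none => exact hhY
          | some a => exact hall a
        have : Set.range φ ∩ Y = Set.range φ := Set.inter_eq_self_of_subset_left hsub
        rw [this, hrange] at hhigh
        omega
      push_neg at hnotall
      obtain ⟨b, hbY⟩ := hnotall
      obtain ⟨c, hcY, hc1Y⟩ :=
        boundary (by omega) {a : ZMod k | φ (some a) ∈ Y} (ha0 : _ ∈ _) hbY
      refine ⟨φ (some c), ⟨some c, rfl⟩, hcY, ?_, Set.mem_insert_of_mem _ hhY,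
        c, Set.mem_insert _ _⟩
      exact absorb hk G₀ Y hYclique hYcard hcY hhY hc1Y
        (fun h => by simpa using hinj h)
        (φ.map_adj (wheel_adj_hub c)) (φ.map_adj (wheel_adj_succ hk c))
    · -- hub not in Y; absorb the hub
      obtain ⟨cu, rfl⟩ : ∃ cu, ou = some cu := by
        cases ou with
        | none => exact absurd huY hhY
        | some cu => exact ⟨cu, rfl⟩
      obtain ⟨cv, rfl⟩ : ∃ cv, ov = some cv := by
        cases ov with
        | none => exact absurd hvY hhY
        | some cv => exact ⟨cv, rfl⟩
      refine ⟨φ none, ⟨none, rfl⟩, hhY, ?_, Set.mem_insert _ _,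
        cu, Set.mem_insert_of_mem _ huY⟩
      exact absorb hk G₀ Y hYclique hYcard hhY huY hvY huv
        ((φ.map_adj (wheel_adj_hub cu)).symm) ((φ.map_adj (wheel_adj_hub cv)).symm)
  have hclique1' : (bootProcess (wheelGraph k) G₀ 1).IsClique (insert z Y) := hclique1
  refine ⟨⟨z, ⟨hzF, hzY⟩, hclique1'⟩, ?_⟩
  -- part 2
  have hmiss : (Set.range φ \ insert z Y).ncard ≤ k - 1 := by
    have hsub1 : Set.range φ \ insert z Y ⊆
        Set.range φ \ insert z (Set.range φ ∩ Y) :=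
      Set.diff_subset_diff_right (Set.insert_subset_insert Set.inter_subset_right)
    have hsub2 : insert z (Set.range φ ∩ Y) ⊆ Set.range φ :=
      Set.insert_subset hzF Set.inter_subset_left
    have h1 : (Set.range φ \ insert z (Set.range φ ∩ Y)).ncard =
        (Set.range φ).ncard - (insert z (Set.range φ ∩ Y)).ncard :=
      Set.ncard_diff hsub2 (Set.toFinite _)
    have h2 : (insert z (Set.range φ ∩ Y)).ncard = (Set.range φ ∩ Y).ncard + 1 :=
      Set.ncard_insert_of_notMem (fun h => hzY h.2) (Set.toFinite _)
    have h3 := Set.ncard_le_ncard hsub1 (Set.toFinite _)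
    omega
  have := iterate hk G₀ Y hYcard φ hinj (k - 1) 1 (insert z Y) hclique1'
    (Set.subset_insert _ _) hhubmem hcycmem hmiss
  rwa [show 1 + (k - 1) = k by omega] at this
end
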